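/- arXiv:1502.03991 — 4 statements merged into one kernel-verified Lean document; each statement's English description precedes it below -/
import Mathlib

section
/- For a permutation w in S_n, the number of crosses in any pipe dream P for w equals l(w) + codim_{PD(w)} F(P), where l(w) is the Coxeter length of w, F(P) is the interior face of the pipe dream complex PD(w) labeled by P, and codim denotes codimension in PD(w). Consequently, setting all x_i = q and all y_j = t in the β-Grothendieck polynomial gives G_w^β(q,t) = (q-t)^{l(w)} · sum_{P ∈ Pipes(w)} [β(q-t)]^{codim_{PD(w)} F(P)}. -/
/-!  Pipe dreams and Grothendieck polynomials.  Permutations of `S_n` are modeled as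
permutations of `ℕ` fixing every `i ≥ n` (acting on `{0,…,n-1}`). -/

attribute [local instance] Classical.propDecidable

/-- Coxeter length = number of inversions on `{0,…,n-1}`. -/
def permLen (n : ℕ) (w : Equiv.Perm ℕ) : ℕ :=
  ((Finset.range n ×ˢ Finset.range n).filter (fun p => p.1 < p.2 ∧ w p.2 < w p.1)).card

/-- Boxes of the staircase shape (0-indexed): `(r,c)` with `r + c ≤ n - 2`. -/
def boxes (n : ℕ) : Finset (ℕ × ℕ) :=
  ((Finset.range n) ×ˢ (Finset.range n)).filter (fun b => b.1 + b.2 + 2 ≤ n)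

/-- The triangular word, as the list of boxes read row by row, each row right to left.
The box `(r,c)` carries the simple reflection `s_{r+c}` (0-indexed). -/
def triWord (n : ℕ) : List (ℕ × ℕ) :=
  (List.range (n - 1)).flatMap (fun r => ((List.range (n - 1 - r)).reverse).map (fun c => (r, c)))

/-- Demazure (0-Hecke) product of the simple reflections sitting in the boxes of `S`,
read along the triangular word. -/
noncomputable def demazure (n : ℕ) (S : Finset (ℕ × ℕ)) : Equiv.Perm ℕ :=
  ((triWord n).filter (fun b => decide (b ∈ S))).foldl
    (fun u b =>
      let v := u * Equiv.swap (b.1 + b.2) (b.1 + b.2 + 1)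
      if permLen n u < permLen n v then v else u) 1

/-- A (possibly nonreduced) pipe dream for `w ∈ S_n`: a set of crosses in the staircase whose
pipes intertwine according to `w` (extra crossings of a pair of pipes being ignored). -/
def IsPipeDream (n : ℕ) (w : Equiv.Perm ℕ) (P : Finset (ℕ × ℕ)) : Prop :=
  P ⊆ boxes n ∧ demazure n P = w

/-- A reduced pipe dream: a pipe dream with exactly `ℓ(w)` crosses. -/
def IsReducedPipeDream (n : ℕ) (w : Equiv.Perm ℕ) (P : Finset (ℕ × ℕ)) : Prop :=
  IsPipeDream n w P ∧ P.card = permLen n w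

/-- All pipe dreams of `w` (reduced and nonreduced), as a finite set. -/
noncomputable def pipeDreams (n : ℕ) (w : Equiv.Perm ℕ) : Finset (Finset (ℕ × ℕ)) :=
  (boxes n).powerset.filter (fun P => demazure n P = w)

/-- The interior face `F(P)` of the pipe dream complex `PD(w)` labeled by the pipe dream `P`
is the complement of the set of crosses; facets of `PD(w)` have `|boxes| - ℓ(w)` vertices, so
the codimension of `F(P)` in `PD(w)` is as follows. -/
def codimF (n : ℕ) (w : Equiv.Perm ℕ) (P : Finset (ℕ × ℕ)) : ℕ :=
  ((boxes n).card - permLen n w) - (boxes n \ P).card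

/-- The double β-Grothendieck polynomial
`𝔊_w^β(x,y) = ∑_{P ∈ Pipes(w)} β^{codim F(P)} ∏_{(i,j) ∈ cross(P)} (x_i - y_j)`. -/
noncomputable def Groth (n : ℕ) (w : Equiv.Perm ℕ) (β : ℝ) (x y : ℕ → ℝ) : ℝ :=
  ∑ P ∈ pipeDreams n w, β ^ codimF n w P * ∏ b ∈ P, (x b.1 - y b.2)

lemma permLen_one (n : ℕ) : permLen n 1 = 0 := by
  rw [permLen, Finset.card_eq_zero, Finset.filter_eq_empty_iff]
  intro p _
  simp only [Equiv.Perm.one_apply]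
  omega

private lemma erase_step (n a : ℕ) (ha : a + 1 < n) (v : Equiv.Perm ℕ) (p : ℕ × ℕ)
    (hp : p ∈ (((Finset.range n ×ˢ Finset.range n).filter
        (fun p => p.1 < p.2 ∧ (v * Equiv.swap a (a + 1)) p.2 < (v * Equiv.swap a (a + 1)) p.1)).erase
        (a, a + 1))) :
    (Equiv.swap a (a + 1) p.1, Equiv.swap a (a + 1) p.2) ∈
      (((Finset.range n ×ˢ Finset.range n).filter
        (fun p => p.1 < p.2 ∧ v p.2 < v p.1)).erase (a, a + 1)) := by
  set s := Equiv.swap a (a + 1) with hs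
  simp only [Finset.mem_erase, Finset.mem_filter, Finset.mem_product, Finset.mem_range] at hp ⊢
  obtain ⟨hne, ⟨⟨h1, h2⟩, h3, h4⟩⟩ := hp
  have hne' : ¬(p.1 = a ∧ p.2 = a + 1) := by
    intro ⟨x, y⟩; exact hne (Prod.ext x y)
  have hdef1 : s p.1 = if p.1 = a then a + 1 else if p.1 = a + 1 then a else p.1 :=
    Equiv.swap_apply_def a (a + 1) p.1
  have hdef2 : s p.2 = if p.2 = a then a + 1 else if p.2 = a + 1 then a else p.2 :=
    Equiv.swap_apply_def a (a + 1) p.2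
  have hlt : s p.1 < s p.2 := by rw [hdef1, hdef2]; split_ifs <;> omega
  have hval : ∀ x, v (s x) = (v * s) x := fun x => rfl
  refine ⟨?_, ⟨?_, ?_⟩, hlt, ?_⟩
  · intro hc
    have e1 : s p.1 = a := congrArg Prod.fst hc
    have e2 : s p.2 = a + 1 := congrArg Prod.snd hc
    rw [hdef1] at e1; rw [hdef2] at e2
    split_ifs at e1 e2 <;> omega
  · rw [hdef1]; split_ifs <;> omega
  · rw [hdef2]; split_ifs <;> omega
  · rw [hval, hval]; exact h4

lemma permLen_mul_swap_le (n a : ℕ) (ha : a + 1 < n) (u : Equiv.Perm ℕ) :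
    permLen n (u * Equiv.swap a (a + 1)) ≤ permLen n u + 1 := by
  set s := Equiv.swap a (a + 1) with hs
  set A := ((Finset.range n ×ˢ Finset.range n).filter
      (fun p => p.1 < p.2 ∧ (u * s) p.2 < (u * s) p.1)) with hA
  set B := ((Finset.range n ×ˢ Finset.range n).filter
      (fun p => p.1 < p.2 ∧ u p.2 < u p.1)) with hB
  have huss : (u * s) * s = u := by
    rw [mul_assoc, hs, Equiv.swap_mul_self, mul_one]
  have keyB : ∀ p : ℕ × ℕ, p ∈ B.erase (a, a + 1) → (s p.1, s p.2) ∈ A.erase (a, a + 1) := by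
    intro p hp
    have := erase_step n a ha (u * s) p (by rwa [huss])
    exact this
  have inv : ∀ p : ℕ × ℕ, (s (s p.1), s (s p.2)) = p := by
    intro p; simp [hs, Equiv.swap_apply_self]
  have hcard : (A.erase (a, a + 1)).card = (B.erase (a, a + 1)).card := by
    apply Finset.card_bij' (fun p _ => (s p.1, s p.2)) (fun p _ => (s p.1, s p.2))
      (fun p hp => erase_step n a ha u p hp) keyB
    · intro p hp; exact inv p
    · intro p hp; exact inv p
  have h1 : A.card ≤ (A.erase (a, a + 1)).card + 1 := by
    by_cases hm : (a, a + 1) ∈ A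
    · rw [Finset.card_erase_of_mem hm]
      have := Finset.card_pos.mpr ⟨_, hm⟩
      omega
    · rw [Finset.erase_eq_of_notMem hm]; omega
  have h2 : (B.erase (a, a + 1)).card ≤ B.card :=
    Finset.card_le_card (Finset.erase_subset _ _)
  show A.card ≤ B.card + 1
  omega

lemma mem_triWord (n : ℕ) (b : ℕ × ℕ) : b ∈ triWord n ↔ b ∈ boxes n := by
  simp only [triWord, boxes, List.mem_flatMap, List.mem_map, List.mem_reverse, List.mem_range,
    Finset.mem_filter, Finset.mem_product, Finset.mem_range]
  constructor
  · rintro ⟨r, hr, c, hc, rfl⟩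
    simp only []
    omega
  · rintro ⟨⟨h1, h2⟩, h3⟩
    exact ⟨b.1, by omega, b.2, by omega, rfl⟩

lemma triWord_nodup (n : ℕ) : (triWord n).Nodup := by
  rw [triWord, List.nodup_flatMap]
  constructor
  · intro r _
    exact List.Nodup.map (fun c c' h => by simpa using h)
      (List.nodup_reverse.mpr List.nodup_range)
  · apply List.pairwise_lt_range.imp
    intro r r' hrr'
    simp only [Function.onFun, List.disjoint_left]
    intro b hb hb'
    simp only [List.mem_map, List.mem_reverse, List.mem_range] at hb hb'
    obtain ⟨c, _, rfl⟩ := hb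
    obtain ⟨c', _, h⟩ := hb'
    injection h with h1 _
    omega

lemma foldl_len (n : ℕ) (L : List (ℕ × ℕ)) (hL : ∀ b ∈ L, b.1 + b.2 + 1 < n) :
    ∀ u : Equiv.Perm ℕ,
      permLen n (L.foldl (fun u b =>
        if permLen n u < permLen n (u * Equiv.swap (b.1 + b.2) (b.1 + b.2 + 1))
        then u * Equiv.swap (b.1 + b.2) (b.1 + b.2 + 1) else u) u) ≤ permLen n u + L.length := by
  induction L with
  | nil => intro u; simp
  | cons b L ih =>
    intro u
    have hb := hL b List.mem_cons_self
    have hL' : ∀ b ∈ L, b.1 + b.2 + 1 < n := fun x hx => hL x (List.mem_cons_of_mem b hx)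
    simp only [List.foldl_cons, List.length_cons]
    have h1 := ih hL' (if permLen n u < permLen n (u * Equiv.swap (b.1 + b.2) (b.1 + b.2 + 1))
        then u * Equiv.swap (b.1 + b.2) (b.1 + b.2 + 1) else u)
    have step : permLen n (if permLen n u < permLen n
          (u * Equiv.swap (b.1 + b.2) (b.1 + b.2 + 1))
        then u * Equiv.swap (b.1 + b.2) (b.1 + b.2 + 1) else u) ≤ permLen n u + 1 := by
      split_ifs with h
      · exact permLen_mul_swap_le n (b.1 + b.2) hb u
      · omega
    omega
lemma filter_length (n : ℕ) (P : Finset (ℕ × ℕ)) (hP : P ⊆ boxes n) :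
    ((triWord n).filter (fun b => decide (b ∈ P))).length = P.card := by
  have hnd : ((triWord n).filter (fun b => decide (b ∈ P))).Nodup :=
    (triWord_nodup n).filter _
  have hset : ((triWord n).filter (fun b => decide (b ∈ P))).toFinset = P := by
    ext b
    simp only [List.mem_toFinset, List.mem_filter, mem_triWord, decide_eq_true_eq]
    exact ⟨fun h => h.2, fun h => ⟨hP h, h⟩⟩
  rw [← List.toFinset_card_of_nodup hnd, hset]

lemma len_le_card (n : ℕ) (w : Equiv.Perm ℕ) (P : Finset (ℕ × ℕ))
    (hP : P ⊆ boxes n) (hd : demazure n P = w) : permLen n w ≤ P.card := by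
  have hcond : ∀ b ∈ (triWord n).filter (fun b => decide (b ∈ P)), b.1 + b.2 + 1 < n := by
    intro b hb
    have hb' : b ∈ boxes n := (mem_triWord n b).1 (List.mem_of_mem_filter hb)
    simp only [boxes, Finset.mem_filter] at hb'
    omega
  have key := foldl_len n ((triWord n).filter (fun b => decide (b ∈ P))) hcond 1
  have hdef : demazure n P = ((triWord n).filter (fun b => decide (b ∈ P))).foldl
      (fun u b =>
        if permLen n u < permLen n (u * Equiv.swap (b.1 + b.2) (b.1 + b.2 + 1))
        then u * Equiv.swap (b.1 + b.2) (b.1 + b.2 + 1) else u) 1 := rfl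
  rw [← hdef, hd, permLen_one, filter_length n P hP] at key
  omega


/-- The number of crosses of any pipe dream `P` for `w ∈ S_n` equals
`ℓ(w) + codim_{PD(w)} F(P)`; consequently, setting all `x_i = q` and all `y_j = t`,
`𝔊_w^β(q,t) = (q-t)^{ℓ(w)} ∑_{P ∈ Pipes(w)} (β(q-t))^{codim F(P)}`. -/
theorem grothendieck_specialization (n : ℕ) (w : Equiv.Perm ℕ)
    (hw : ∀ i, n ≤ i → w i = i) :
    (∀ P : Finset (ℕ × ℕ), IsPipeDream n w P →
      P.card = permLen n w + codimF n w P) ∧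
    (∀ q t β : ℝ,
      Groth n w β (fun _ => q) (fun _ => t) =
        (q - t) ^ permLen n w *
          ∑ P ∈ pipeDreams n w, (β * (q - t)) ^ codimF n w P) := by
  have part1 : ∀ P : Finset (ℕ × ℕ), IsPipeDream n w P →
      P.card = permLen n w + codimF n w P := by
    rintro P ⟨hsub, hd⟩
    have h1 := len_le_card n w P hsub hd
    have h2 : P.card ≤ (boxes n).card := Finset.card_le_card hsub
    have h3 : (boxes n \ P).card = (boxes n).card - P.card := Finset.card_sdiff_of_subset hsub
    unfold codimF
    omega
  refine ⟨part1, fun q t β => ?_⟩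
  rw [Groth, Finset.mul_sum]
  apply Finset.sum_congr rfl
  intro P hP
  rw [pipeDreams, Finset.mem_filter, Finset.mem_powerset] at hP
  have hcard := part1 P ⟨hP.1, hP.2⟩
  rw [Finset.prod_const, hcard, pow_add, mul_pow]
  ring
end

section
/- (Reduction Lemma for Root Polytopes) Let G_0 be an acyclic graph on [n+1] with d edges containing edges (i,j) and (j,k) with i < j < k. Define G_1 = G_0 with (j,k) replaced by (i,k), G_2 = G_0 with (i,j) replaced by (i,k), and G_3 = G_0 with both (i,j),(j,k) removed and (i,k) added. Then P(G_0) = P(G_1) ∪ P(G_2), all three polytopes P(G_0), P(G_1), P(G_2) are d-dimensional, and P(G_3) = P(G_1) ∩ P(G_2) is (d-1)-dimensional. -/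
/-- The simple graph on `ℕ` with the given (increasingly oriented) edge set. -/
def graphOf (E : Finset (ℕ × ℕ)) : SimpleGraph ℕ :=
  SimpleGraph.fromEdgeSet ↑(E.image (fun p => s(p.1, p.2)))

/-- The vector `e_i - e_j ∈ ℝ^ℕ` attached to the oriented edge `(i,j)`. -/
noncomputable def rvec (p : ℕ × ℕ) : ℕ → ℝ :=
  Pi.single p.1 1 - Pi.single p.2 1

/-- The cone `C(G)` spanned with nonnegative coefficients by the vectors `e_i - e_j`,
`(i,j)` an edge of `G`. -/
noncomputable def edgeCone (E : Finset (ℕ × ℕ)) : Set (ℕ → ℝ) :=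
  {x | ∃ c : ℕ × ℕ → ℝ, (∀ p, 0 ≤ c p) ∧ x = ∑ p ∈ E, c p • rvec p}

/-- The root polytope `P(G)` of a graph on the vertex set `{0,…,n}` (type `A_n`):
the convex hull of `0` and all positive roots `e_i - e_j` (`i < j ≤ n`) lying in the
cone `C(G)`. -/
noncomputable def rootPolytope (n : ℕ) (E : Finset (ℕ × ℕ)) : Set (ℕ → ℝ) :=
  convexHull ℝ ({0} ∪ {v | ∃ i j, i < j ∧ j ≤ n ∧ v = rvec (i, j) ∧ v ∈ edgeCone E})

namespace RedLem

lemma rvec_apply (p : ℕ × ℕ) (m : ℕ) :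
    rvec p m = (if p.1 = m then (1:ℝ) else 0) - (if p.2 = m then (1:ℝ) else 0) := by
  simp [rvec, Pi.single_apply, eq_comm]

lemma rvec_trans (a b c : ℕ) : rvec (a, c) = rvec (a, b) + rvec (b, c) := by
  funext m; simp only [rvec, Pi.add_apply, Pi.sub_apply]; ring

lemma rvec_self (a : ℕ) : rvec (a, a) = 0 := by
  funext m; simp [rvec]

lemma rvec_inj {p q : ℕ × ℕ} (hp : p.1 < p.2) (hq : q.1 < q.2) (h : rvec p = rvec q) :
    p = q := by
  have h1 := congrFun h p.1
  have h2 := congrFun h p.2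
  rw [rvec_apply, rvec_apply] at h1 h2
  rw [if_pos rfl, if_neg (by omega : p.2 ≠ p.1)] at h1
  rw [if_neg (by omega : p.1 ≠ p.2), if_pos rfl] at h2
  by_cases e1 : q.1 = p.1
  · by_cases e2 : q.2 = p.2
    · exact Prod.ext e1.symm e2.symm
    · exfalso; rw [if_neg e2] at h2
      by_cases e3 : q.1 = p.2 <;> simp [e3] at h2 <;> norm_num at h2
  · exfalso
    by_cases e3 : q.2 = p.1 <;> simp [e1, e3] at h1 <;> norm_num at h1

/-- partial "positive part" functional -/
noncomputable def T (n : ℕ) (x : ℕ → ℝ) : ℝ := ∑ m ∈ Finset.range (n+1), max (x m) 0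

lemma T_nonneg (n : ℕ) (x : ℕ → ℝ) : 0 ≤ T n x :=
  Finset.sum_nonneg fun m _ => le_max_right _ _

lemma T_zero (n : ℕ) : T n 0 = 0 := by simp [T]

lemma T_coord_le {n : ℕ} (x : ℕ → ℝ) {a : ℕ} (ha : a ≤ n) : x a ≤ T n x := by
  calc x a ≤ max (x a) 0 := le_max_left _ _
    _ ≤ T n x := Finset.single_le_sum (f := fun m => max (x m) 0)
        (fun m _ => le_max_right _ _) (Finset.mem_range.2 (by omega))

lemma T_smul (n : ℕ) {t : ℝ} (ht : 0 ≤ t) (x : ℕ → ℝ) : T n (t • x) = t * T n x := by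
  simp only [T, Finset.mul_sum, Pi.smul_apply, smul_eq_mul]
  refine Finset.sum_congr rfl fun m _ => ?_
  rw [mul_max_of_nonneg _ _ ht, mul_zero]

lemma T_add_le (n : ℕ) (x y : ℕ → ℝ) : T n (x + y) ≤ T n x + T n y := by
  rw [T, T, T, ← Finset.sum_add_distrib]
  refine Finset.sum_le_sum fun m _ => ?_
  simp only [Pi.add_apply]
  rcases le_total (x m + y m) 0 with h | h
  · rw [max_eq_right h]
    exact add_nonneg (le_max_right _ _) (le_max_right _ _)
  · rw [max_eq_left h]
    exact add_le_add (le_max_left _ _) (le_max_left _ _)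

lemma T_rvec {n a b : ℕ} (hab : a < b) (hb : b ≤ n) : T n (rvec (a, b)) = 1 := by
  rw [T, Finset.sum_eq_single a]
  · rw [rvec_apply]
    rw [if_pos rfl, if_neg (by omega : b ≠ a)]
    norm_num
  · intro m _ hm
    rw [rvec_apply, if_neg (by omega : a ≠ m)]
    by_cases hbm : b = m
    · rw [if_pos hbm]; norm_num
    · rw [if_neg hbm]; norm_num
  · intro h; exact absurd (Finset.mem_range.2 (by omega)) h


lemma coord_eq {E : Finset (ℕ × ℕ)} (c : ℕ × ℕ → ℝ) (m : ℕ) :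
    (∑ p ∈ E, c p • rvec p) m
      = ∑ p ∈ E, c p * ((if p.1 = m then (1:ℝ) else 0) - (if p.2 = m then (1:ℝ) else 0)) := by
  rw [Finset.sum_apply]
  exact Finset.sum_congr rfl fun p _ => by rw [Pi.smul_apply, smul_eq_mul, rvec_apply]

lemma extract (n : ℕ) (S : Finset (ℕ × ℕ)) (hS : ∀ p ∈ S, p.1 < p.2 ∧ p.2 ≤ n) :
    ∀ (fuel v : ℕ), n + 1 ≤ v + fuel →
    ∃ (b : ℕ) (P : Finset (ℕ × ℕ)), P ⊆ S ∧ v ≤ b ∧ (∀ p ∈ S, p.1 ≠ b) ∧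
      (∀ p ∈ P, v ≤ p.1) ∧ (∑ p ∈ P, rvec p) = rvec (v, b) ∧
      ((P = ∅ ∧ v = b) ∨ ((∃ p ∈ P, p.1 = v) ∧ (∃ p ∈ P, p.2 = b))) := by
  have base : ∀ v, (∀ p ∈ S, p.1 ≠ v) →
      ∃ (b : ℕ) (P : Finset (ℕ × ℕ)), P ⊆ S ∧ v ≤ b ∧ (∀ p ∈ S, p.1 ≠ b) ∧
      (∀ p ∈ P, v ≤ p.1) ∧ (∑ p ∈ P, rvec p) = rvec (v, b) ∧
      ((P = ∅ ∧ v = b) ∨ ((∃ p ∈ P, p.1 = v) ∧ (∃ p ∈ P, p.2 = b))) := by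
    intro v hnv
    exact ⟨v, ∅, Finset.empty_subset _, le_rfl, hnv, by simp,
      by simp [rvec_self], Or.inl ⟨rfl, rfl⟩⟩
  intro fuel
  induction fuel with
  | zero =>
    intro v hv
    refine base v fun p hp hpv => ?_
    have := hS p hp; omega
  | succ fuel ih =>
    intro v hv
    by_cases h : ∃ p ∈ S, p.1 = v
    · obtain ⟨p, hpS, hpv⟩ := h
      have hp12 := hS p hpS
      obtain ⟨b, P, hPS, hwb, hnb, hmin, hsum, halt⟩ := ih p.2 (by omega)
      have hpP : p ∉ P := fun hmem => by have := hmin p hmem; omega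
      refine ⟨b, insert p P, ?_, by omega, hnb, ?_, ?_, Or.inr ⟨⟨p, Finset.mem_insert_self _ _, hpv⟩, ?_⟩⟩
      · exact Finset.insert_subset hpS hPS
      · intro q hq
        rcases Finset.mem_insert.1 hq with rfl | hq
        · omega
        · have := hmin q hq; omega
      · rw [Finset.sum_insert hpP, hsum, ← hpv, ← Prod.mk.eta (p := p),
          ← rvec_trans]
      · rcases halt with ⟨hP0, rfl⟩ | ⟨_, hb⟩
        · exact ⟨p, Finset.mem_insert_self _ _, rfl⟩
        · obtain ⟨q, hq, hqb⟩ := hb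
          exact ⟨q, Finset.mem_insert_of_mem hq, hqb⟩
    · push_neg at h
      exact base v h


def Vset (n : ℕ) (E : Finset (ℕ × ℕ)) : Set (ℕ → ℝ) :=
  {v | ∃ i j, i < j ∧ j ≤ n ∧ v = rvec (i, j) ∧ v ∈ edgeCone E}

lemma rootPolytope_def (n : ℕ) (E : Finset (ℕ × ℕ)) :
    rootPolytope n E = convexHull ℝ ({0} ∪ Vset n E) := rfl

lemma sum_subset_mem_cone {E P : Finset (ℕ × ℕ)} (hPE : P ⊆ E) :
    (∑ p ∈ P, rvec p) ∈ edgeCone E := by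
  classical
  refine ⟨fun q => if q ∈ P then 1 else 0, fun q => by positivity, ?_⟩
  have h : ∀ q ∈ E, (if q ∈ P then (1:ℝ) else 0) • rvec q = if q ∈ P then rvec q else 0 := by
    intro q _; split <;> simp
  rw [Finset.sum_congr rfl h, Finset.sum_ite_mem, Finset.inter_eq_right.2 hPE]

lemma zero_mem_cone (E : Finset (ℕ × ℕ)) : (0 : ℕ → ℝ) ∈ edgeCone E :=
  ⟨0, fun _ => le_rfl, by simp⟩

lemma coord_zero_of_gt {n : ℕ} {E : Finset (ℕ × ℕ)} (hE' : ∀ p ∈ E, p.1 < p.2 ∧ p.2 ≤ n)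
    (c : ℕ × ℕ → ℝ) {m : ℕ} (hm : n < m) : (∑ p ∈ E, c p • rvec p) m = 0 := by
  rw [coord_eq]
  refine Finset.sum_eq_zero fun p hp => ?_
  have := hE' p hp
  rw [if_neg (by omega), if_neg (by omega)]
  ring

lemma sum_range_coord {n : ℕ} {E : Finset (ℕ × ℕ)} (hE' : ∀ p ∈ E, p.1 < p.2 ∧ p.2 ≤ n)
    (c : ℕ × ℕ → ℝ) : ∑ m ∈ Finset.range (n+1), (∑ p ∈ E, c p • rvec p) m = 0 := by
  rw [Finset.sum_congr rfl fun m _ => coord_eq c m, Finset.sum_comm]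
  refine Finset.sum_eq_zero fun p hp => ?_
  have hpn := hE' p hp
  rw [← Finset.mul_sum, Finset.sum_sub_distrib]
  rw [Finset.sum_ite_eq (Finset.range (n+1)) p.1 (fun _ => (1:ℝ)),
    Finset.sum_ite_eq (Finset.range (n+1)) p.2 (fun _ => (1:ℝ))]
  rw [if_pos (Finset.mem_range.2 (by omega)), if_pos (Finset.mem_range.2 (by omega))]
  ring

lemma eq_zero_of_T_eq_zero {n : ℕ} {E : Finset (ℕ × ℕ)} (hE' : ∀ p ∈ E, p.1 < p.2 ∧ p.2 ≤ n)
    (c : ℕ × ℕ → ℝ) (hT : T n (∑ p ∈ E, c p • rvec p) = 0) :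
    (∑ p ∈ E, c p • rvec p) = 0 := by
  set x := ∑ p ∈ E, c p • rvec p with hx
  have h1 : ∀ m ∈ Finset.range (n+1), max (x m) 0 = 0 :=
    (Finset.sum_eq_zero_iff_of_nonneg (fun m _ => le_max_right _ _)).1 hT
  have h2 : ∀ m ∈ Finset.range (n+1), x m ≤ 0 := fun m hm => by
    have := h1 m hm; by_contra h; push_neg at h
    rw [max_eq_left h.le] at this; exact absurd this (ne_of_gt h)
  have h3 : ∀ m ∈ Finset.range (n+1), x m = 0 :=
    (Finset.sum_eq_zero_iff_of_nonpos h2).1 (sum_range_coord hE' c)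
  funext m
  by_cases hm : m ∈ Finset.range (n+1)
  · exact h3 m hm
  · exact coord_zero_of_gt hE' c (by simpa [Finset.mem_range] using hm)

lemma decomp {n : ℕ} {E : Finset (ℕ × ℕ)} (hE' : ∀ p ∈ E, p.1 < p.2 ∧ p.2 ≤ n) :
    ∀ (N : ℕ) (c : ℕ × ℕ → ℝ), (E.filter fun p => c p ≠ 0).card ≤ N → (∀ p, 0 ≤ c p) →
    T n (∑ p ∈ E, c p • rvec p) ≤ 1 →
    (∑ p ∈ E, c p • rvec p) ∈ convexHull ℝ ({0} ∪ Vset n E) := by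
  intro N
  induction N with
  | zero =>
    intro c hcard _ _
    have hfe : (E.filter fun p => c p ≠ 0) = ∅ := Finset.card_eq_zero.1 (le_antisymm hcard (Nat.zero_le _))
    have : (∑ p ∈ E, c p • rvec p) = 0 := by
      refine Finset.sum_eq_zero fun p hp => ?_
      by_cases h : c p = 0
      · rw [h, zero_smul]
      · exact absurd (Finset.mem_filter.2 ⟨hp, h⟩) (by rw [hfe]; exact Finset.notMem_empty p)
    rw [this]
    exact subset_convexHull ℝ _ (Or.inl rfl)
  | succ N ih =>
    intro c hcard hc hT
    set S := E.filter fun p => c p ≠ 0 with hSdef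
    by_cases hSne : S = ∅
    · -- same as base case
      have : (∑ p ∈ E, c p • rvec p) = 0 := by
        refine Finset.sum_eq_zero fun p hp => ?_
        by_cases h : c p = 0
        · rw [h, zero_smul]
        · exact absurd (Finset.mem_filter.2 ⟨hp, h⟩) (by rw [← hSdef, hSne]; exact Finset.notMem_empty p)
      rw [this]
      exact subset_convexHull ℝ _ (Or.inl rfl)
    have hSne' : S.Nonempty := Finset.nonempty_of_ne_empty hSne
    have hSsub : ∀ p ∈ S, p.1 < p.2 ∧ p.2 ≤ n := fun p hp => hE' p (Finset.mem_filter.1 hp).1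
    have hScz : ∀ p ∈ S, c p ≠ 0 := fun p hp => (Finset.mem_filter.1 hp).2
    have hSE : S ⊆ E := Finset.filter_subset _ _
    set x := ∑ p ∈ E, c p • rvec p with hx
    -- minimal vertex
    have himg : (S.image Prod.fst).Nonempty := hSne'.image _
    set a := (S.image Prod.fst).min' himg with ha
    obtain ⟨pa0, hpa0S, hpa0⟩ := Finset.mem_image.1 ((S.image Prod.fst).min'_mem himg)
    have hnoin : ∀ p ∈ S, p.2 ≠ a := by
      intro p hp hpa
      have h1 : p.1 ∈ S.image Prod.fst := Finset.mem_image_of_mem _ hp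
      have := (S.image Prod.fst).min'_le _ h1
      have := (hSsub p hp).1
      omega
    obtain ⟨b, P, hPS, hab, hnb, hmin, hsum, halt⟩ :=
      extract n S hSsub (n+1) a (by omega)
    have hPE : P ⊆ E := hPS.trans hSE
    rcases halt with ⟨hP0, heq⟩ | ⟨⟨pa, hpaP, hpa1⟩, ⟨pb, hpbP, hpb2⟩⟩
    · exact absurd (hpa0.trans heq) (hnb pa0 hpa0S)
    have haltb : a < b := by
      rcases Nat.lt_or_ge a b with h | h
      · exact h
      · have : a = b := le_antisymm hab h
        exact absurd hpa1 (this ▸ hnb pa (hPS hpaP))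
    have hbn : b ≤ n := by
      have := (hSsub pb (hPS hpbP)).2; omega
    have hPne : P.Nonempty := ⟨pa, hpaP⟩
    -- epsilon
    have himgP : (P.image c).Nonempty := hPne.image _
    set ε := (P.image c).min' himgP with hε
    obtain ⟨p0, hp0P, hp0⟩ := Finset.mem_image.1 ((P.image c).min'_mem himgP)
    have hεle : ∀ p ∈ P, ε ≤ c p := fun p hp => (P.image c).min'_le _ (Finset.mem_image_of_mem _ hp)
    have hεpos : 0 < ε := by
      rw [hε, ← hp0]
      exact lt_of_le_of_ne (hc p0) (Ne.symm (hScz p0 (hPS hp0P)))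
    -- coordinate bounds
    have hxa : ε ≤ x a := by
      have h1 : ∀ p ∈ E, c p * ((if p.1 = a then (1:ℝ) else 0) - (if p.2 = a then 1 else 0))
          = c p * (if p.1 = a then (1:ℝ) else 0) := by
        intro p hp
        by_cases h2 : p.2 = a
        · by_cases hcz : c p = 0
          · rw [hcz]; ring
          · exact absurd h2 (hnoin p (Finset.mem_filter.2 ⟨hp, hcz⟩))
        · rw [if_neg h2, sub_zero]
      rw [hx, coord_eq, Finset.sum_congr rfl h1]
      calc ε ≤ c pa * (if pa.1 = a then (1:ℝ) else 0) := by
            rw [if_pos hpa1, mul_one]; exact hεle pa hpaP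
        _ ≤ ∑ p ∈ E, c p * (if p.1 = a then (1:ℝ) else 0) :=
            Finset.single_le_sum (f := fun p => c p * (if p.1 = a then (1:ℝ) else 0))
              (fun p _ => mul_nonneg (hc p) (by positivity)) (hPE hpaP)
    have hxb : x b ≤ -ε := by
      have h1 : ∀ p ∈ E, c p * ((if p.1 = b then (1:ℝ) else 0) - (if p.2 = b then 1 else 0))
          = -(c p * (if p.2 = b then (1:ℝ) else 0)) := by
        intro p hp
        by_cases h2 : p.1 = b
        · by_cases hcz : c p = 0
          · rw [hcz]; ring
          · exact absurd h2 (hnb p (Finset.mem_filter.2 ⟨hp, hcz⟩))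
        · rw [if_neg h2]; ring
      rw [hx, coord_eq, Finset.sum_congr rfl h1, Finset.sum_neg_distrib, neg_le_neg_iff]
      calc ε ≤ c pb * (if pb.2 = b then (1:ℝ) else 0) := by
            rw [if_pos hpb2, mul_one]; exact hεle pb hpbP
        _ ≤ ∑ p ∈ E, c p * (if p.2 = b then (1:ℝ) else 0) :=
            Finset.single_le_sum (f := fun p => c p * (if p.2 = b then (1:ℝ) else 0))
              (fun p _ => mul_nonneg (hc p) (by positivity)) (hPE hpbP)
    -- the root
    have hrootcone : rvec (a, b) ∈ edgeCone E := by
      rw [← hsum]; exact sum_subset_mem_cone hPE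
    have hrootmem : rvec (a, b) ∈ ({0} ∪ Vset n E : Set (ℕ → ℝ)) :=
      Or.inr ⟨a, b, haltb, hbn, rfl, hrootcone⟩
    -- new coefficients
    set c' : ℕ × ℕ → ℝ := fun p => c p - (if p ∈ P then ε else 0) with hc'def
    have hc' : ∀ p, 0 ≤ c' p := by
      intro p
      simp only [hc'def]
      by_cases hp : p ∈ P
      · simp only [if_pos hp]; have := hεle p hp; linarith
      · simp only [if_neg hp, sub_zero]; exact hc p
    have hx' : ∑ p ∈ E, c' p • rvec p = x - ε • rvec (a, b) := by
      have h1 : ∀ p ∈ E, c' p • rvec p = c p • rvec p - (if p ∈ P then ε • rvec p else 0) := by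
        intro p _
        simp only [hc'def]
        by_cases hp : p ∈ P
        · rw [if_pos hp, if_pos hp, sub_smul]
        · rw [if_neg hp, if_neg hp, sub_zero, sub_zero]
      rw [Finset.sum_congr rfl h1, Finset.sum_sub_distrib, Finset.sum_ite_mem,
        Finset.inter_eq_right.2 hPE, ← Finset.smul_sum, hsum, hx]
    -- support decrease
    have hcard' : (E.filter fun p => c' p ≠ 0).card ≤ N := by
      have hsub : (E.filter fun p => c' p ≠ 0) ⊆ S.erase p0 := by
        intro p hp
        obtain ⟨hpE, hpcz⟩ := Finset.mem_filter.1 hp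
        simp only [hc'def] at hpcz
        by_cases hpP : p ∈ P
        · rw [if_pos hpP] at hpcz
          refine Finset.mem_erase.2 ⟨?_, hPS hpP⟩
          intro h
          rw [h, hp0] at hpcz
          rw [hε] at hpcz
          simp at hpcz
        · rw [if_neg hpP, sub_zero] at hpcz
          refine Finset.mem_erase.2 ⟨?_, Finset.mem_filter.2 ⟨hpE, hpcz⟩⟩
          intro h; rw [h] at hpP; exact hpP hp0P
      have h2 := Finset.card_le_card hsub
      have h3 := Finset.card_erase_of_mem (hPS hp0P)
      have h4 : 1 ≤ S.card := Finset.card_pos.2 hSne'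
      omega
    -- T decrease
    have hεT : ε ≤ T n x := le_trans hxa (T_coord_le x (by omega))
    have hT' : T n (x - ε • rvec (a, b)) = T n x - ε := by
      have h1 : ∀ m ∈ Finset.range (n+1),
          max (x m) 0 - max ((x - ε • rvec (a, b)) m) 0 = if m = a then ε else 0 := by
        intro m hm
        by_cases hma : m = a
        · subst hma
          rw [Pi.sub_apply, Pi.smul_apply, smul_eq_mul, rvec_apply]
          rw [if_pos rfl, if_pos rfl, if_neg (by omega : b ≠ a)]
          rw [max_eq_left (by linarith), max_eq_left (by linarith)]
          ring
        · rw [Pi.sub_apply, Pi.smul_apply, smul_eq_mul, rvec_apply]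
          rw [if_neg hma, if_neg (fun h => hma h.symm)]
          by_cases hmb : m = b
          · subst hmb
            rw [if_pos rfl]
            rw [max_eq_right (by linarith), max_eq_right (by linarith)]
            ring
          · rw [if_neg (fun h => hmb h.symm)]
            simp
      have h2 : T n x - T n (x - ε • rvec (a, b)) = ε := by
        rw [T, T, ← Finset.sum_sub_distrib, Finset.sum_congr rfl h1,
          Finset.sum_ite_eq' (Finset.range (n+1)) a (fun _ => ε),
          if_pos (Finset.mem_range.2 (by omega))]
      linarith
    -- case split
    by_cases hε1 : ε = 1
    · -- x = rvec (a, b)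
      have hTx' : T n (x - ε • rvec (a, b)) = 0 := by
        have h0 := T_nonneg n (x - ε • rvec (a, b))
        rw [hT', hε1] at *
        linarith
      have hz : x - ε • rvec (a, b) = 0 := by
        rw [← hx'] at hTx' ⊢
        exact eq_zero_of_T_eq_zero hE' c' hTx'
      have : x = rvec (a, b) := by
        have := sub_eq_zero.1 hz
        rw [this, hε1, one_smul]
      rw [this]
      exact subset_convexHull ℝ _ hrootmem
    · have hεlt : ε < 1 := lt_of_le_of_ne (le_trans hεT hT) hε1
      have h1ε : (0:ℝ) < 1 - ε := by linarith
      set y := (1 - ε)⁻¹ • (x - ε • rvec (a, b)) with hy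
      have hymem : y ∈ convexHull ℝ ({0} ∪ Vset n E) := by
        have hrep : y = ∑ p ∈ E, ((1 - ε)⁻¹ * c' p) • rvec p := by
          rw [hy, ← hx', Finset.smul_sum]
          exact Finset.sum_congr rfl fun p _ => by rw [smul_smul]
        have hfilt : (E.filter fun p => (1 - ε)⁻¹ * c' p ≠ 0) = E.filter fun p => c' p ≠ 0 := by
          refine Finset.filter_congr fun p _ => ?_
          simp [mul_ne_zero_iff, ne_of_gt (inv_pos.2 h1ε)]
        rw [hrep]
        refine ih _ ?_ (fun p => mul_nonneg (by positivity) (hc' p)) ?_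
        · rw [hfilt]; exact hcard'
        · rw [← hrep, hy, T_smul n (by positivity), hT']
          rw [inv_mul_le_iff₀ h1ε, mul_one]
          linarith
      have hcomb : x = (1 - ε) • y + ε • rvec (a, b) := by
        rw [hy, smul_inv_smul₀ (ne_of_gt h1ε)]
        abel
      rw [hcomb]
      exact (convex_convexHull ℝ _) hymem (subset_convexHull ℝ _ hrootmem)
        (by linarith) (le_of_lt hεpos) (by ring)


lemma edgeCone_add {E : Finset (ℕ × ℕ)} {x y : ℕ → ℝ} (hx : x ∈ edgeCone E)
    (hy : y ∈ edgeCone E) : x + y ∈ edgeCone E := by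
  obtain ⟨cx, hcx, hxe⟩ := hx
  obtain ⟨cy, hcy, hye⟩ := hy
  refine ⟨fun p => cx p + cy p, fun p => add_nonneg (hcx p) (hcy p), ?_⟩
  rw [hxe, hye, ← Finset.sum_add_distrib]
  exact Finset.sum_congr rfl fun p _ => (add_smul _ _ _).symm

lemma edgeCone_smul {E : Finset (ℕ × ℕ)} {t : ℝ} (ht : 0 ≤ t) {x : ℕ → ℝ}
    (hx : x ∈ edgeCone E) : t • x ∈ edgeCone E := by
  obtain ⟨c, hc, hxe⟩ := hx
  refine ⟨fun p => t * c p, fun p => mul_nonneg ht (hc p), ?_⟩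
  rw [hxe, Finset.smul_sum]
  exact Finset.sum_congr rfl fun p _ => (smul_smul _ _ _)

lemma rootPolytope_eq {n : ℕ} {E : Finset (ℕ × ℕ)} (hE' : ∀ p ∈ E, p.1 < p.2 ∧ p.2 ≤ n) :
    rootPolytope n E = {x | x ∈ edgeCone E ∧ T n x ≤ 1} := by
  apply Set.Subset.antisymm
  · rw [rootPolytope_def]
    apply convexHull_min
    · rintro v (rfl | ⟨i, j, hij, hjn, rfl, hcone⟩)
      · exact ⟨zero_mem_cone E, by rw [T_zero]; norm_num⟩
      · exact ⟨hcone, le_of_eq (T_rvec hij hjn)⟩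
    · rintro p ⟨hp, hpT⟩ q ⟨hq, hqT⟩ α β hα hβ hαβ
      refine ⟨edgeCone_add (edgeCone_smul hα hp) (edgeCone_smul hβ hq), ?_⟩
      calc T n (α • p + β • q) ≤ T n (α • p) + T n (β • q) := T_add_le _ _ _
        _ = α * T n p + β * T n q := by rw [T_smul _ hα, T_smul _ hβ]
        _ ≤ α * 1 + β * 1 := by
            exact add_le_add (mul_le_mul_of_nonneg_left hpT hα) (mul_le_mul_of_nonneg_left hqT hβ)
        _ = 1 := by rw [mul_one, mul_one, hαβ]
  · rintro x ⟨⟨c, hc, hx⟩, hT⟩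
    rw [hx]
    rw [hx] at hT
    exact decomp hE' _ c le_rfl hc hT


lemma graphOf_adj {E : Finset (ℕ × ℕ)} {a b : ℕ} (h : (a, b) ∈ E) (hab : a ≠ b) :
    (graphOf E).Adj a b := by
  rw [graphOf, SimpleGraph.fromEdgeSet_adj]
  exact ⟨Finset.mem_coe.2 (Finset.mem_image.2 ⟨(a, b), h, rfl⟩), hab⟩

lemma sym2_ne {a b u v : ℕ} (hab : a < b) (huv : u < v) (h : (a, b) ≠ (u, v)) :
    s(a, b) ≠ s(u, v) := by
  intro hs
  rw [Sym2.eq_iff] at hs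
  rw [Ne, Prod.ext_iff] at h
  rcases hs with ⟨h1, h2⟩ | ⟨h1, h2⟩ <;> omega

lemma psi_rvec {n : ℕ} (f : ℕ → ℝ) {p : ℕ × ℕ} (h1 : p.1 ≤ n) (h2 : p.2 ≤ n) :
    ∑ m ∈ Finset.range (n+1), f m * rvec p m = f p.1 - f p.2 := by
  have : ∀ m ∈ Finset.range (n+1), f m * rvec p m
      = (if p.1 = m then f m else 0) - (if p.2 = m then f m else 0) := by
    intro m _
    rw [rvec_apply, mul_sub, mul_ite, mul_one, mul_zero, mul_ite, mul_one, mul_zero]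
  rw [Finset.sum_congr rfl this, Finset.sum_sub_distrib,
    Finset.sum_ite_eq (Finset.range (n+1)) p.1 f,
    Finset.sum_ite_eq (Finset.range (n+1)) p.2 f,
    if_pos (Finset.mem_range.2 (by omega)), if_pos (Finset.mem_range.2 (by omega))]

open scoped Classical in
lemma dep_zero_of_acyclic {n : ℕ} {E : Finset (ℕ × ℕ)} (hE : ∀ p ∈ E, p.1 < p.2 ∧ p.2 ≤ n)
    (hacyc : (graphOf E).IsAcyclic) (γ : ℕ × ℕ → ℝ)
    (hγ : ∑ p ∈ E, γ p • rvec p = 0) : ∀ p ∈ E, γ p = 0 := by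
  rintro ⟨a, b⟩ he
  have hab := hE _ he
  simp only at hab
  have hadj : (graphOf E).Adj a b := graphOf_adj he (by omega)
  have hbr := (SimpleGraph.isAcyclic_iff_forall_adj_isBridge.1 hacyc) hadj
  rw [SimpleGraph.isBridge_iff] at hbr
  have hnr := hbr
  set G' := graphOf E \ SimpleGraph.fromEdgeSet {s(a, b)} with hG'
  set f : ℕ → ℝ := fun m => if G'.Reachable b m then 1 else 0 with hf
  -- apply the functional ψ(x) = ∑ f m * x m to hγ
  have hψ : ∑ m ∈ Finset.range (n+1), f m * (∑ p ∈ E, γ p • rvec p) m = 0 := by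
    rw [hγ]; simp
  have hswap : ∑ m ∈ Finset.range (n+1), f m * (∑ p ∈ E, γ p • rvec p) m
      = ∑ p ∈ E, γ p * (f p.1 - f p.2) := by
    have h1 : ∀ m ∈ Finset.range (n+1), f m * (∑ p ∈ E, γ p • rvec p) m
        = ∑ p ∈ E, γ p * (f m * rvec p m) := by
      intro m _
      rw [Finset.sum_apply, Finset.mul_sum]
      exact Finset.sum_congr rfl fun p _ => by rw [Pi.smul_apply, smul_eq_mul]; ring
    rw [Finset.sum_congr rfl h1, Finset.sum_comm]
    refine Finset.sum_congr rfl fun p hp => ?_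
    have h := hE p hp
    rw [← Finset.mul_sum, psi_rvec f (by omega) h.2]
  have hval : ∀ p ∈ E, γ p * (f p.1 - f p.2) = if p = (a, b) then -γ p else 0 := by
    rintro ⟨u, v⟩ hp
    have huv := hE _ hp
    simp only at huv
    by_cases hpe : ((u, v) : ℕ × ℕ) = (a, b)
    · rw [if_pos hpe]
      rw [Prod.ext_iff] at hpe
      obtain ⟨rfl, rfl⟩ : u = a ∧ v = b := hpe
      simp only [hf]
      rw [if_pos (SimpleGraph.Reachable.refl _), if_neg (fun h => hnr h.symm)]
      ring
    · rw [if_neg hpe]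
      have hadj' : G'.Adj u v := by
        rw [hG', SimpleGraph.sdiff_adj]
        refine ⟨graphOf_adj hp (by omega), ?_⟩
        rw [SimpleGraph.fromEdgeSet_adj]
        rintro ⟨hmem, -⟩
        exact sym2_ne huv.1 (by omega) hpe (Set.mem_singleton_iff.1 hmem)
      have hiff : G'.Reachable b u ↔ G'.Reachable b v :=
        ⟨fun h => h.trans hadj'.reachable, fun h => h.trans hadj'.symm.reachable⟩
      simp only [hf]
      by_cases hru : G'.Reachable b u
      · rw [if_pos hru, if_pos (hiff.1 hru)]; ring
      · rw [if_neg hru, if_neg (fun h => hru (hiff.2 h))]; ring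
  have := hψ
  rw [hswap, Finset.sum_congr rfl hval, Finset.sum_ite_eq' E ((a, b) : ℕ × ℕ) (fun p => -γ p),
    if_pos he] at this
  linarith [this]


lemma ik_not_mem {E₀ : Finset (ℕ × ℕ)} {i j k : ℕ} (hij : i < j) (hjk : j < k)
    (hacyc : (graphOf E₀).IsAcyclic) (hijE : (i, j) ∈ E₀) (hjkE : (j, k) ∈ E₀) :
    (i, k) ∉ E₀ := by
  intro hikE
  have hadj : (graphOf E₀).Adj i j := graphOf_adj hijE (by omega)
  have hbr := (SimpleGraph.isAcyclic_iff_forall_adj_isBridge.1 hacyc) hadj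
  rw [SimpleGraph.isBridge_iff] at hbr
  have hnr := hbr
  set G' := graphOf E₀ \ SimpleGraph.fromEdgeSet {s(i, j)} with hG'
  have hadj1 : G'.Adj i k := by
    rw [hG', SimpleGraph.sdiff_adj]
    refine ⟨graphOf_adj hikE (by omega), ?_⟩
    rw [SimpleGraph.fromEdgeSet_adj]
    rintro ⟨hmem, -⟩
    exact sym2_ne (by omega) hij (by simp [Prod.ext_iff]; omega) (Set.mem_singleton_iff.1 hmem)
  have hadj2 : G'.Adj j k := by
    rw [hG', SimpleGraph.sdiff_adj]
    refine ⟨graphOf_adj hjkE (by omega), ?_⟩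
    rw [SimpleGraph.fromEdgeSet_adj]
    rintro ⟨hmem, -⟩
    exact sym2_ne (by omega) hij (by simp [Prod.ext_iff]; omega) (Set.mem_singleton_iff.1 hmem)
  exact hnr (hadj1.reachable.trans hadj2.symm.reachable)

section Splits

variable {i j k : ℕ} {E₀ : Finset (ℕ × ℕ)} {M : Type*} [AddCommMonoid M]

lemma jk_mem_erase (hij : i < j) (hjk : j < k) (hjkE : (j, k) ∈ E₀) :
    (j, k) ∈ E₀.erase (i, j) :=
  Finset.mem_erase.2 ⟨by simp [Prod.ext_iff]; omega, hjkE⟩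

lemma ij_mem_erase (hij : i < j) (hjk : j < k) (hijE : (i, j) ∈ E₀) :
    (i, j) ∈ E₀.erase (j, k) :=
  Finset.mem_erase.2 ⟨by simp [Prod.ext_iff]; omega, hijE⟩

lemma sum_split_E0 (hij : i < j) (hjk : j < k) (hijE : (i, j) ∈ E₀) (hjkE : (j, k) ∈ E₀)
    (f : ℕ × ℕ → M) :
    ∑ p ∈ E₀, f p = ∑ p ∈ (E₀.erase (i, j)).erase (j, k), f p + f (j, k) + f (i, j) := by
  rw [Finset.sum_erase_add _ _ (jk_mem_erase hij hjk hjkE), Finset.sum_erase_add _ _ hijE]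

lemma sum_split_E1 (hij : i < j) (hjk : j < k) (hijE : (i, j) ∈ E₀) (hik : (i, k) ∉ E₀)
    (f : ℕ × ℕ → M) :
    ∑ p ∈ insert (i, k) (E₀.erase (j, k)), f p
      = ∑ p ∈ (E₀.erase (i, j)).erase (j, k), f p + f (i, k) + f (i, j) := by
  have h := Finset.sum_erase_add (E₀.erase (j, k)) f (ij_mem_erase hij hjk hijE)
  rw [Finset.sum_insert (fun h => hik (Finset.mem_of_mem_erase h)), Finset.erase_right_comm,
    ← h]
  abel

lemma sum_split_E2 (hij : i < j) (hjk : j < k) (hjkE : (j, k) ∈ E₀) (hik : (i, k) ∉ E₀)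
    (f : ℕ × ℕ → M) :
    ∑ p ∈ insert (i, k) (E₀.erase (i, j)), f p
      = ∑ p ∈ (E₀.erase (i, j)).erase (j, k), f p + f (i, k) + f (j, k) := by
  have h := Finset.sum_erase_add (E₀.erase (i, j)) f (jk_mem_erase hij hjk hjkE)
  rw [Finset.sum_insert (fun h => hik (Finset.mem_of_mem_erase h)), ← h]
  abel

lemma sum_split_E3 (hik : (i, k) ∉ E₀) (f : ℕ × ℕ → M) :
    ∑ p ∈ insert (i, k) ((E₀.erase (i, j)).erase (j, k)), f p
      = ∑ p ∈ (E₀.erase (i, j)).erase (j, k), f p + f (i, k) := by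
  rw [Finset.sum_insert (fun h => hik (Finset.mem_of_mem_erase (Finset.mem_of_mem_erase h)))]
  exact add_comm _ _

end Splits


section Cones

variable {n i j k : ℕ} {E₀ : Finset (ℕ × ℕ)}

/-- coefficient transport `E₁ → E₀` -/
noncomputable def t1 (i j k : ℕ) (γ : ℕ × ℕ → ℝ) : ℕ × ℕ → ℝ := fun p =>
  if p = (i, j) then γ (i, j) + γ (i, k) else if p = (j, k) then γ (i, k) else γ p

noncomputable def t2 (i j k : ℕ) (γ : ℕ × ℕ → ℝ) : ℕ × ℕ → ℝ := fun p =>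
  if p = (j, k) then γ (j, k) + γ (i, k) else if p = (i, j) then γ (i, k) else γ p

noncomputable def t3 (i j k : ℕ) (γ : ℕ × ℕ → ℝ) : ℕ × ℕ → ℝ := fun p =>
  if p = (i, j) then γ (i, k) else if p = (j, k) then γ (i, k) else γ p

lemma mem_D_ne {p : ℕ × ℕ} (hp : p ∈ (E₀.erase (i, j)).erase (j, k)) :
    p ≠ (i, j) ∧ p ≠ (j, k) :=
  ⟨(Finset.mem_erase.1 (Finset.mem_of_mem_erase hp)).1, (Finset.mem_erase.1 hp).1⟩

lemma conv1 (hij : i < j) (hjk : j < k) (hijE : (i, j) ∈ E₀) (hjkE : (j, k) ∈ E₀)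
    (hik : (i, k) ∉ E₀) (γ : ℕ × ℕ → ℝ) :
    ∑ p ∈ insert (i, k) (E₀.erase (j, k)), γ p • rvec p
      = ∑ p ∈ E₀, t1 i j k γ p • rvec p := by
  rw [sum_split_E1 hij hjk hijE hik, sum_split_E0 hij hjk hijE hjkE]
  have hD : ∀ p ∈ (E₀.erase (i, j)).erase (j, k), t1 i j k γ p • rvec p = γ p • rvec p := by
    intro p hp
    obtain ⟨h1, h2⟩ := mem_D_ne hp
    rw [t1, if_neg h1, if_neg h2]
  rw [Finset.sum_congr rfl hD]
  have e1 : t1 i j k γ (j, k) = γ (i, k) := by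
    rw [t1, if_neg (by simp [Prod.ext_iff]; omega), if_pos rfl]
  have e2 : t1 i j k γ (i, j) = γ (i, j) + γ (i, k) := by rw [t1, if_pos rfl]
  rw [e1, e2, rvec_trans i j k]
  module

lemma conv2 (hij : i < j) (hjk : j < k) (hijE : (i, j) ∈ E₀) (hjkE : (j, k) ∈ E₀)
    (hik : (i, k) ∉ E₀) (γ : ℕ × ℕ → ℝ) :
    ∑ p ∈ insert (i, k) (E₀.erase (i, j)), γ p • rvec p
      = ∑ p ∈ E₀, t2 i j k γ p • rvec p := by
  rw [sum_split_E2 hij hjk hjkE hik, sum_split_E0 hij hjk hijE hjkE]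
  have hD : ∀ p ∈ (E₀.erase (i, j)).erase (j, k), t2 i j k γ p • rvec p = γ p • rvec p := by
    intro p hp
    obtain ⟨h1, h2⟩ := mem_D_ne hp
    rw [t2, if_neg h2, if_neg h1]
  rw [Finset.sum_congr rfl hD]
  have e1 : t2 i j k γ (j, k) = γ (j, k) + γ (i, k) := by rw [t2, if_pos rfl]
  have e2 : t2 i j k γ (i, j) = γ (i, k) := by
    rw [t2, if_neg (by simp [Prod.ext_iff]; omega), if_pos rfl]
  rw [e1, e2, rvec_trans i j k]
  module

lemma conv3 (hij : i < j) (hjk : j < k) (hijE : (i, j) ∈ E₀) (hjkE : (j, k) ∈ E₀)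
    (hik : (i, k) ∉ E₀) (γ : ℕ × ℕ → ℝ) :
    ∑ p ∈ insert (i, k) ((E₀.erase (i, j)).erase (j, k)), γ p • rvec p
      = ∑ p ∈ E₀, t3 i j k γ p • rvec p := by
  rw [sum_split_E3 hik, sum_split_E0 hij hjk hijE hjkE]
  have hD : ∀ p ∈ (E₀.erase (i, j)).erase (j, k), t3 i j k γ p • rvec p = γ p • rvec p := by
    intro p hp
    obtain ⟨h1, h2⟩ := mem_D_ne hp
    rw [t3, if_neg h1, if_neg h2]
  rw [Finset.sum_congr rfl hD]
  have e1 : t3 i j k γ (j, k) = γ (i, k) := by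
    rw [t3, if_neg (by simp [Prod.ext_iff]; omega), if_pos rfl]
  have e2 : t3 i j k γ (i, j) = γ (i, k) := by rw [t3, if_pos rfl]
  rw [e1, e2, rvec_trans i j k]
  module

lemma unique_coeff (hE : ∀ p ∈ E₀, p.1 < p.2 ∧ p.2 ≤ n) (hacyc : (graphOf E₀).IsAcyclic)
    {α β : ℕ × ℕ → ℝ} (h : ∑ p ∈ E₀, α p • rvec p = ∑ p ∈ E₀, β p • rvec p) :
    ∀ p ∈ E₀, α p = β p := by
  intro p hp
  have h0 : ∑ p ∈ E₀, (α p - β p) • rvec p = 0 := by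
    rw [Finset.sum_congr rfl (fun p _ => sub_smul (α p) (β p) (rvec p)),
      Finset.sum_sub_distrib, h, sub_self]
  have := dep_zero_of_acyclic hE hacyc _ h0 p hp
  linarith

end Cones


section ConeEq

variable {n i j k : ℕ} {E₀ : Finset (ℕ × ℕ)}

lemma cone_union (hij : i < j) (hjk : j < k) (hijE : (i, j) ∈ E₀) (hjkE : (j, k) ∈ E₀)
    (hik : (i, k) ∉ E₀) :
    edgeCone E₀
      = edgeCone (insert (i, k) (E₀.erase (j, k))) ∪ edgeCone (insert (i, k) (E₀.erase (i, j))) := by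
  have hne1 : ((i, j) : ℕ × ℕ) ≠ (i, k) := by intro h; rw [Prod.mk.injEq] at h; omega
  have hne2 : ((j, k) : ℕ × ℕ) ≠ (i, k) := by intro h; rw [Prod.mk.injEq] at h; omega
  have hne3 : ((j, k) : ℕ × ℕ) ≠ (i, j) := by intro h; rw [Prod.mk.injEq] at h; omega
  apply Set.Subset.antisymm
  · rintro x ⟨c, hc, rfl⟩
    rcases le_total (c (j, k)) (c (i, j)) with hcle | hcle
    · left
      set γ : ℕ × ℕ → ℝ := fun p =>
        if p = (i, k) then c (j, k) else if p = (i, j) then c (i, j) - c (j, k) else c p with hγ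
      have hA : γ (i, j) = c (i, j) - c (j, k) := by simp [hγ, hne1]
      have hB : γ (i, k) = c (j, k) := by simp [hγ]
      refine ⟨γ, ?_, ?_⟩
      · intro p
        simp only [hγ]
        split
        · exact hc _
        · split
          · linarith
          · exact hc _
      · rw [conv1 hij hjk hijE hjkE hik γ]
        refine Finset.sum_congr rfl fun p hp => ?_
        congr 1
        by_cases h1 : p = (i, j)
        · subst h1
          rw [t1, if_pos rfl, hA, hB]; ring
        · by_cases h2 : p = (j, k)
          · subst h2
            rw [t1, if_neg h1, if_pos rfl, hB]
          · have hpik : p ≠ (i, k) := fun (h : p = (i, k)) => hik (h ▸ hp)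
            have hg : γ p = c p := by simp [hγ, hpik, h1]
            rw [t1, if_neg h1, if_neg h2, hg]
    · right
      set γ : ℕ × ℕ → ℝ := fun p =>
        if p = (i, k) then c (i, j) else if p = (j, k) then c (j, k) - c (i, j) else c p with hγ
      have hA : γ (j, k) = c (j, k) - c (i, j) := by simp [hγ, hne2]
      have hB : γ (i, k) = c (i, j) := by simp [hγ]
      refine ⟨γ, ?_, ?_⟩
      · intro p
        simp only [hγ]
        split
        · exact hc _
        · split
          · linarith
          · exact hc _
      · rw [conv2 hij hjk hijE hjkE hik γ]
        refine Finset.sum_congr rfl fun p hp => ?_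
        congr 1
        by_cases h1 : p = (j, k)
        · subst h1
          rw [t2, if_pos rfl, hA, hB]; ring
        · by_cases h2 : p = (i, j)
          · subst h2
            rw [t2, if_neg h1, if_pos rfl, hB]
          · have hpik : p ≠ (i, k) := fun (h : p = (i, k)) => hik (h ▸ hp)
            have hg : γ p = c p := by simp [hγ, hpik, h1]
            rw [t2, if_neg h1, if_neg h2, hg]
  · rintro x (⟨γ, hγ, rfl⟩ | ⟨γ, hγ, rfl⟩)
    · refine ⟨t1 i j k γ, ?_, (conv1 hij hjk hijE hjkE hik γ)⟩
      intro p
      rw [t1]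
      split
      · exact add_nonneg (hγ _) (hγ _)
      · split <;> exact hγ _
    · refine ⟨t2 i j k γ, ?_, (conv2 hij hjk hijE hjkE hik γ)⟩
      intro p
      rw [t2]
      split
      · exact add_nonneg (hγ _) (hγ _)
      · split <;> exact hγ _

lemma cone_inter (hE : ∀ p ∈ E₀, p.1 < p.2 ∧ p.2 ≤ n) (hacyc : (graphOf E₀).IsAcyclic)
    (hij : i < j) (hjk : j < k) (hijE : (i, j) ∈ E₀) (hjkE : (j, k) ∈ E₀)
    (hik : (i, k) ∉ E₀) :
    edgeCone (insert (i, k) ((E₀.erase (i, j)).erase (j, k)))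
      = edgeCone (insert (i, k) (E₀.erase (j, k))) ∩ edgeCone (insert (i, k) (E₀.erase (i, j))) := by
  have hne1 : ((i, k) : ℕ × ℕ) ≠ (i, j) := by intro h; rw [Prod.mk.injEq] at h; omega
  have hne2 : ((i, k) : ℕ × ℕ) ≠ (j, k) := by intro h; rw [Prod.mk.injEq] at h; omega
  have hne3 : ((i, j) : ℕ × ℕ) ≠ (j, k) := by intro h; rw [Prod.mk.injEq] at h; omega
  have hne4 : ((j, k) : ℕ × ℕ) ≠ (i, j) := by intro h; rw [Prod.mk.injEq] at h; omega
  apply Set.Subset.antisymm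
  · rintro x ⟨γ, hγ, rfl⟩
    constructor
    · set γ₁ : ℕ × ℕ → ℝ := fun p => if p = (i, j) then 0 else γ p with hγ₁
      have hA : γ₁ (i, k) = γ (i, k) := by simp [hγ₁, hne1]
      have hB : γ₁ (i, j) = 0 := by simp [hγ₁]
      refine ⟨γ₁, fun p => by simp only [hγ₁]; split; exacts [le_rfl, hγ p], ?_⟩
      rw [sum_split_E3 hik, sum_split_E1 hij hjk hijE hik]
      have hD : ∀ p ∈ (E₀.erase (i, j)).erase (j, k), γ₁ p • rvec p = γ p • rvec p := by
        intro p hp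
        simp only [hγ₁]
        rw [if_neg (mem_D_ne hp).1]
      rw [Finset.sum_congr rfl hD, hA, hB, zero_smul, add_zero]
    · set γ₂ : ℕ × ℕ → ℝ := fun p => if p = (j, k) then 0 else γ p with hγ₂
      have hA : γ₂ (i, k) = γ (i, k) := by simp [hγ₂, hne2]
      have hB : γ₂ (j, k) = 0 := by simp [hγ₂]
      refine ⟨γ₂, fun p => by simp only [hγ₂]; split; exacts [le_rfl, hγ p], ?_⟩
      rw [sum_split_E3 hik, sum_split_E2 hij hjk hjkE hik]
      have hD : ∀ p ∈ (E₀.erase (i, j)).erase (j, k), γ₂ p • rvec p = γ p • rvec p := by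
        intro p hp
        simp only [hγ₂]
        rw [if_neg (mem_D_ne hp).2]
      rw [Finset.sum_congr rfl hD, hA, hB, zero_smul, add_zero]
  · rintro x ⟨⟨γ, hγ, hxγ⟩, ⟨δ, hδ, hxδ⟩⟩
    have h1 : ∑ p ∈ E₀, t1 i j k γ p • rvec p = ∑ p ∈ E₀, t2 i j k δ p • rvec p := by
      rw [← conv1 hij hjk hijE hjkE hik γ, ← conv2 hij hjk hijE hjkE hik δ, ← hxγ, ← hxδ]
    have huniq := unique_coeff hE hacyc h1
    have hu1 := huniq (i, j) hijE
    have hu2 := huniq (j, k) hjkE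
    rw [t1, t2, if_pos rfl, if_neg hne3, if_pos rfl] at hu1
    rw [t1, t2, if_neg hne4, if_pos rfl, if_pos rfl] at hu2
    have hγij : γ (i, j) = 0 := by
      have h3 := hγ (i, j); have h4 := hδ (j, k); linarith
    refine ⟨γ, hγ, ?_⟩
    rw [hxγ, sum_split_E3 hik, sum_split_E1 hij hjk hijE hik, hγij, zero_smul, add_zero]

end ConeEq


lemma rvec_mem_cone {E : Finset (ℕ × ℕ)} {p : ℕ × ℕ} (hp : p ∈ E) : rvec p ∈ edgeCone E := by
  have := sum_subset_mem_cone (Finset.singleton_subset_iff.2 hp)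
  simpa using this

lemma vspan_rootPolytope {n : ℕ} {E : Finset (ℕ × ℕ)} (hE' : ∀ p ∈ E, p.1 < p.2 ∧ p.2 ≤ n) :
    vectorSpan ℝ (rootPolytope n E) = Submodule.span ℝ (rvec '' ↑E) := by
  have h0 : (0 : ℕ → ℝ) ∈ rootPolytope n E := subset_convexHull ℝ _ (Or.inl rfl)
  have hv : ∀ p ∈ E, rvec p ∈ rootPolytope n E := by
    intro p hp
    refine subset_convexHull ℝ _ (Or.inr ⟨p.1, p.2, (hE' p hp).1, (hE' p hp).2, ?_, ?_⟩)
    · rw [Prod.mk.eta]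
    · exact rvec_mem_cone hp
  have hsub : rootPolytope n E ⊆ ↑(Submodule.span ℝ (rvec '' ↑E)) := by
    rw [rootPolytope_def]
    apply convexHull_min
    · rintro v (rfl | ⟨a, b, hab, hbn, hveq, hcone⟩)
      · exact Submodule.zero_mem _
      · obtain ⟨c, hc, hvc⟩ := hcone
        rw [hvc]
        exact Submodule.sum_mem _ fun p hp =>
          Submodule.smul_mem _ _ (Submodule.subset_span ⟨p, Finset.mem_coe.2 hp, rfl⟩)
    · exact (Submodule.span ℝ (rvec '' ↑E)).convex
  apply le_antisymm
  · rw [vectorSpan_def]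
    apply Submodule.span_le.2
    rintro v ⟨x, hx, y, hy, rfl⟩
    exact Submodule.sub_mem _ (hsub hx) (hsub hy)
  · apply Submodule.span_le.2
    rintro v ⟨p, hp, rfl⟩
    have hmem := Set.vsub_mem_vsub (hv p (Finset.mem_coe.1 hp)) h0
    rw [vsub_eq_sub, sub_zero] at hmem
    exact Submodule.subset_span hmem

lemma finrank_span_edges {E : Finset (ℕ × ℕ)} (hinc : ∀ p ∈ E, p.1 < p.2)
    (hdz : ∀ γ : ℕ × ℕ → ℝ, ∑ p ∈ E, γ p • rvec p = 0 → ∀ p ∈ E, γ p = 0) :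
    Module.finrank ℝ (Submodule.span ℝ (rvec '' ↑E)) = E.card := by
  classical
  have hli : LinearIndependent ℝ (fun x : ↥E => rvec ↑x) := by
    rw [linearIndependent_iff']
    intro t g hsum p hpt
    set γ : ℕ × ℕ → ℝ := fun q => if h : q ∈ E then (if ⟨q, h⟩ ∈ t then g ⟨q, h⟩ else 0) else 0
      with hγ
    have key : ∑ q ∈ E, γ q • rvec q = ∑ x ∈ t, g x • rvec ↑x := by
      rw [← Finset.sum_attach E (fun q => γ q • rvec q)]
      have h1 : ∀ x ∈ E.attach, γ ↑x • rvec ↑x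
          = if x ∈ t then g x • rvec ↑x else 0 := by
        intro x _
        simp only [hγ, dif_pos x.2, Subtype.coe_eta]
        split <;> simp
      rw [Finset.sum_congr rfl h1, Finset.sum_ite_mem,
        Finset.inter_eq_right.2 (fun x _ => Finset.mem_attach E x)]
    have h0 := hdz γ (by rw [key, hsum]) p p.2
    rw [hγ] at h0
    simp only [dif_pos p.2, Subtype.coe_eta, if_pos hpt] at h0
    exact h0
  have hrange : Set.range (fun x : ↥E => rvec ↑x) = rvec '' ↑E := by
    ext v
    constructor
    · rintro ⟨x, rfl⟩; exact ⟨↑x, Finset.mem_coe.2 x.2, rfl⟩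
    · rintro ⟨q, hq, rfl⟩; exact ⟨⟨q, Finset.mem_coe.1 hq⟩, rfl⟩
  rw [← hrange, finrank_span_eq_card hli, Fintype.card_coe]


section Dep

variable {n i j k : ℕ} {E₀ : Finset (ℕ × ℕ)}

lemma dep1 (hE : ∀ p ∈ E₀, p.1 < p.2 ∧ p.2 ≤ n) (hacyc : (graphOf E₀).IsAcyclic)
    (hij : i < j) (hjk : j < k) (hijE : (i, j) ∈ E₀) (hjkE : (j, k) ∈ E₀)
    (hik : (i, k) ∉ E₀) (γ : ℕ × ℕ → ℝ)
    (h : ∑ p ∈ insert (i, k) (E₀.erase (j, k)), γ p • rvec p = 0) :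
    ∀ p ∈ insert (i, k) (E₀.erase (j, k)), γ p = 0 := by
  have hne3 : ((i, j) : ℕ × ℕ) ≠ (j, k) := by intro hh; rw [Prod.mk.injEq] at hh; omega
  have hne4 : ((j, k) : ℕ × ℕ) ≠ (i, j) := by intro hh; rw [Prod.mk.injEq] at hh; omega
  rw [conv1 hij hjk hijE hjkE hik γ] at h
  have h0 := dep_zero_of_acyclic hE hacyc _ h
  have hik0 : γ (i, k) = 0 := by
    have := h0 (j, k) hjkE
    rw [t1, if_neg hne4, if_pos rfl] at this
    exact this
  have hij0 : γ (i, j) = 0 := by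
    have := h0 (i, j) hijE
    rw [t1, if_pos rfl] at this
    linarith
  intro p hp
  rcases Finset.mem_insert.1 hp with rfl | hp'
  · exact hik0
  · by_cases h1 : p = (i, j)
    · rw [h1]; exact hij0
    · have := h0 p (Finset.mem_of_mem_erase hp')
      rw [t1, if_neg h1, if_neg (Finset.mem_erase.1 hp').1] at this
      exact this

lemma dep2 (hE : ∀ p ∈ E₀, p.1 < p.2 ∧ p.2 ≤ n) (hacyc : (graphOf E₀).IsAcyclic)
    (hij : i < j) (hjk : j < k) (hijE : (i, j) ∈ E₀) (hjkE : (j, k) ∈ E₀)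
    (hik : (i, k) ∉ E₀) (γ : ℕ × ℕ → ℝ)
    (h : ∑ p ∈ insert (i, k) (E₀.erase (i, j)), γ p • rvec p = 0) :
    ∀ p ∈ insert (i, k) (E₀.erase (i, j)), γ p = 0 := by
  have hne3 : ((i, j) : ℕ × ℕ) ≠ (j, k) := by intro hh; rw [Prod.mk.injEq] at hh; omega
  rw [conv2 hij hjk hijE hjkE hik γ] at h
  have h0 := dep_zero_of_acyclic hE hacyc _ h
  have hik0 : γ (i, k) = 0 := by
    have := h0 (i, j) hijE
    rw [t2, if_neg hne3, if_pos rfl] at this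
    exact this
  have hjk0 : γ (j, k) = 0 := by
    have := h0 (j, k) hjkE
    rw [t2, if_pos rfl] at this
    linarith
  intro p hp
  rcases Finset.mem_insert.1 hp with rfl | hp'
  · exact hik0
  · by_cases h1 : p = (j, k)
    · rw [h1]; exact hjk0
    · have := h0 p (Finset.mem_of_mem_erase hp')
      rw [t2, if_neg h1, if_neg (Finset.mem_erase.1 hp').1] at this
      exact this

lemma dep3 (hE : ∀ p ∈ E₀, p.1 < p.2 ∧ p.2 ≤ n) (hacyc : (graphOf E₀).IsAcyclic)
    (hij : i < j) (hjk : j < k) (hijE : (i, j) ∈ E₀) (hjkE : (j, k) ∈ E₀)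
    (hik : (i, k) ∉ E₀) (γ : ℕ × ℕ → ℝ)
    (h : ∑ p ∈ insert (i, k) ((E₀.erase (i, j)).erase (j, k)), γ p • rvec p = 0) :
    ∀ p ∈ insert (i, k) ((E₀.erase (i, j)).erase (j, k)), γ p = 0 := by
  rw [conv3 hij hjk hijE hjkE hik γ] at h
  have h0 := dep_zero_of_acyclic hE hacyc _ h
  have hik0 : γ (i, k) = 0 := by
    have := h0 (i, j) hijE
    rw [t3, if_pos rfl] at this
    exact this
  intro p hp
  rcases Finset.mem_insert.1 hp with rfl | hp'
  · exact hik0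
  · obtain ⟨h1, h2⟩ := mem_D_ne hp'
    have := h0 p (Finset.mem_of_mem_erase (Finset.mem_of_mem_erase hp'))
    rw [t3, if_neg h1, if_neg h2] at this
    exact this

end Dep

end RedLem


open RedLem

/-- **Reduction Lemma for root polytopes.**  Let `G₀` be an acyclic graph on
`{0,…,n}` with `d` edges containing edges `(i,j)` and `(j,k)`, `i < j < k`, and let
`G₁, G₂, G₃` be the reduced graphs.  Then `P(G₀) = P(G₁) ∪ P(G₂)`, with `P(G₀), P(G₁), P(G₂)`
all `d`-dimensional, and `P(G₃) = P(G₁) ∩ P(G₂)` is `(d-1)`-dimensional. -/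
theorem reduction_lemma_rootPolytopes (n d : ℕ) (E₀ : Finset (ℕ × ℕ))
    (hE : ∀ p ∈ E₀, p.1 < p.2 ∧ p.2 ≤ n)
    (hacyc : (graphOf E₀).IsAcyclic)
    (hd : E₀.card = d)
    (i j k : ℕ) (hij : i < j) (hjk : j < k)
    (hijE : (i, j) ∈ E₀) (hjkE : (j, k) ∈ E₀)
    (E₁ E₂ E₃ : Finset (ℕ × ℕ))
    (hE₁ : E₁ = insert (i, k) (E₀.erase (j, k)))
    (hE₂ : E₂ = insert (i, k) (E₀.erase (i, j)))
    (hE₃ : E₃ = insert (i, k) ((E₀.erase (i, j)).erase (j, k))) :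
    rootPolytope n E₀ = rootPolytope n E₁ ∪ rootPolytope n E₂ ∧
    Module.finrank ℝ (vectorSpan ℝ (rootPolytope n E₀)) = d ∧
    Module.finrank ℝ (vectorSpan ℝ (rootPolytope n E₁)) = d ∧
    Module.finrank ℝ (vectorSpan ℝ (rootPolytope n E₂)) = d ∧
    rootPolytope n E₃ = rootPolytope n E₁ ∩ rootPolytope n E₂ ∧
    Module.finrank ℝ (vectorSpan ℝ (rootPolytope n E₃)) = d - 1 := by
  have hik : (i, k) ∉ E₀ := ik_not_mem hij hjk hacyc hijE hjkE
  have hkn : k ≤ n := (hE _ hjkE).2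
  have hE1' : ∀ p ∈ E₁, p.1 < p.2 ∧ p.2 ≤ n := by
    rw [hE₁]; intro p hp
    rcases Finset.mem_insert.1 hp with rfl | hp'
    · exact ⟨by omega, hkn⟩
    · exact hE p (Finset.mem_of_mem_erase hp')
  have hE2' : ∀ p ∈ E₂, p.1 < p.2 ∧ p.2 ≤ n := by
    rw [hE₂]; intro p hp
    rcases Finset.mem_insert.1 hp with rfl | hp'
    · exact ⟨by omega, hkn⟩
    · exact hE p (Finset.mem_of_mem_erase hp')
  have hE3' : ∀ p ∈ E₃, p.1 < p.2 ∧ p.2 ≤ n := by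
    rw [hE₃]; intro p hp
    rcases Finset.mem_insert.1 hp with rfl | hp'
    · exact ⟨by omega, hkn⟩
    · exact hE p (Finset.mem_of_mem_erase (Finset.mem_of_mem_erase hp'))
  have hP0 := rootPolytope_eq (n := n) hE
  have hP1 := rootPolytope_eq (n := n) hE1'
  have hP2 := rootPolytope_eq (n := n) hE2'
  have hP3 := rootPolytope_eq (n := n) hE3'
  -- cardinalities
  have hd1 : 1 ≤ d := by
    have : 0 < E₀.card := Finset.card_pos.2 ⟨_, hijE⟩
    omega
  have hd2 : 2 ≤ d := by
    have : 1 < E₀.card := Finset.one_lt_card.2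
      ⟨_, hijE, _, hjkE, by intro hh; rw [Prod.mk.injEq] at hh; omega⟩
    omega
  have hcard1 : E₁.card = d := by
    rw [hE₁, Finset.card_insert_of_notMem (fun h => hik (Finset.mem_of_mem_erase h)),
      Finset.card_erase_of_mem hjkE, hd]
    omega
  have hcard2 : E₂.card = d := by
    rw [hE₂, Finset.card_insert_of_notMem (fun h => hik (Finset.mem_of_mem_erase h)),
      Finset.card_erase_of_mem hijE, hd]
    omega
  have hcard3 : E₃.card = d - 1 := by
    rw [hE₃, Finset.card_insert_of_notMem
        (fun h => hik (Finset.mem_of_mem_erase (Finset.mem_of_mem_erase h))),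
      Finset.card_erase_of_mem (jk_mem_erase hij hjk hjkE),
      Finset.card_erase_of_mem hijE, hd]
    omega
  -- dimension statements
  have hdim0 : Module.finrank ℝ (vectorSpan ℝ (rootPolytope n E₀)) = d := by
    rw [vspan_rootPolytope hE,
      finrank_span_edges (fun p hp => (hE p hp).1) (dep_zero_of_acyclic hE hacyc), hd]
  have hdim1 : Module.finrank ℝ (vectorSpan ℝ (rootPolytope n E₁)) = d := by
    rw [vspan_rootPolytope hE1',
      finrank_span_edges (fun p hp => (hE1' p hp).1)
        (by rw [hE₁]; exact dep1 hE hacyc hij hjk hijE hjkE hik), hcard1]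
  have hdim2 : Module.finrank ℝ (vectorSpan ℝ (rootPolytope n E₂)) = d := by
    rw [vspan_rootPolytope hE2',
      finrank_span_edges (fun p hp => (hE2' p hp).1)
        (by rw [hE₂]; exact dep2 hE hacyc hij hjk hijE hjkE hik), hcard2]
  have hdim3 : Module.finrank ℝ (vectorSpan ℝ (rootPolytope n E₃)) = d - 1 := by
    rw [vspan_rootPolytope hE3',
      finrank_span_edges (fun p hp => (hE3' p hp).1)
        (by rw [hE₃]; exact dep3 hE hacyc hij hjk hijE hjkE hik), hcard3]
  refine ⟨?_, hdim0, hdim1, hdim2, ?_, hdim3⟩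
  · rw [hP0, hP1, hP2, hE₁, hE₂, cone_union hij hjk hijE hjkE hik]
    ext x
    simp only [Set.mem_setOf_eq, Set.mem_union]
    tauto
  · rw [hP1, hP2, hP3, hE₁, hE₂, hE₃, cone_inter hE hacyc hij hjk hijE hjkE hik]
    ext x
    simp only [Set.mem_setOf_eq, Set.mem_inter_iff]
    tauto
end

section
/- The number of noncrossing alternating spanning trees of the complete graph K_n on vertex set [n] equals the Catalan number C_{n-1}. -/
/-- `E` is the edge set of a spanning tree of the complete graph on `{0,…,n-1}`:
all edges are increasingly oriented edges on `{0,…,n-1}`, the graph is acyclic, and any two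
vertices of `{0,…,n-1}` are connected. -/
def IsSpanningTree (n : ℕ) (E : Finset (ℕ × ℕ)) : Prop :=
  (∀ p ∈ E, p.1 < p.2 ∧ p.2 < n) ∧ (graphOf E).IsAcyclic ∧
    ∀ a b, a < n → b < n → (graphOf E).Reachable a b

/-- A graph is noncrossing if there are no vertices `i < j < k < l` with both `(i,k)` and
`(j,l)` edges. -/
def Noncrossing (E : Finset (ℕ × ℕ)) : Prop :=
  ¬ ∃ i j k l, i < j ∧ j < k ∧ k < l ∧ (i, k) ∈ E ∧ (j, l) ∈ E

/-- A graph is alternating if there are no vertices `i < j < k` with both `(i,j)` and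
`(j,k)` edges. -/
def Alternating (E : Finset (ℕ × ℕ)) : Prop :=
  ¬ ∃ i j k, i < j ∧ j < k ∧ (i, j) ∈ E ∧ (j, k) ∈ E

/-! ### Auxiliary development -/

open SimpleGraph

namespace NCAT

/-- Noncrossing alternating trees spanning the interval `[a, b)`. -/
def STree (a b : ℕ) (E : Finset (ℕ × ℕ)) : Prop :=
  (∀ p ∈ E, a ≤ p.1 ∧ p.1 < p.2 ∧ p.2 < b) ∧ (graphOf E).IsAcyclic ∧
    ∀ x y, a ≤ x → x < b → a ≤ y → y < b → (graphOf E).Reachable x y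

def Good (a b : ℕ) (E : Finset (ℕ × ℕ)) : Prop :=
  STree a b E ∧ Noncrossing E ∧ Alternating E

variable {E F E₀ E₁ : Finset (ℕ × ℕ)}

lemma graphOf_adj {a b : ℕ} :
    (graphOf E).Adj a b ↔ ((a, b) ∈ E ∨ (b, a) ∈ E) ∧ a ≠ b := by
  rw [graphOf, fromEdgeSet_adj]
  constructor
  · rintro ⟨hm, hne⟩
    refine ⟨?_, hne⟩
    simp only [Finset.coe_image, Set.mem_image, Finset.mem_coe] at hm
    obtain ⟨p, hp, hpe⟩ := hm
    rw [Sym2.eq_iff] at hpe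
    rcases hpe with ⟨h1, h2⟩ | ⟨h1, h2⟩
    · left; rw [← h1, ← h2]; simpa using hp
    · right; rw [← h1, ← h2]; simpa using hp
  · rintro ⟨hm, hne⟩
    refine ⟨?_, hne⟩
    simp only [Finset.coe_image, Set.mem_image, Finset.mem_coe]
    rcases hm with h | h
    · exact ⟨(a, b), h, rfl⟩
    · exact ⟨(b, a), h, Sym2.eq_swap⟩

lemma graphOf_mono (h : E ⊆ F) : graphOf E ≤ graphOf F := by
  intro a b hab
  rw [graphOf_adj] at hab ⊢
  exact ⟨hab.1.imp (fun hm => h hm) (fun hm => h hm), hab.2⟩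

lemma acyclic_mono {G G' : SimpleGraph ℕ} (h : G ≤ G') (ha : G'.IsAcyclic) : G.IsAcyclic := by
  intro v c hc
  exact ha (c.mapLe h) ((SimpleGraph.Walk.mapLe_isCycle h).mpr hc)

lemma graphOf_union : graphOf (E ∪ F) = graphOf E ⊔ graphOf F := by
  ext a b
  rw [sup_adj, graphOf_adj, graphOf_adj, graphOf_adj]
  simp only [Finset.mem_union]
  tauto

lemma graphOf_singleton (p : ℕ × ℕ) : graphOf {p} = fromEdgeSet {s(p.1, p.2)} := by
  rw [graphOf, Finset.image_singleton, Finset.coe_singleton]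

lemma noncrossing_mono (h : E ⊆ F) (hF : Noncrossing F) : Noncrossing E := by
  rintro ⟨i, j, k, l, h1, h2, h3, h4, h5⟩
  exact hF ⟨i, j, k, l, h1, h2, h3, h h4, h h5⟩

lemma alternating_mono (h : E ⊆ F) (hF : Alternating F) : Alternating E := by
  rintro ⟨i, j, k, h1, h2, h3, h4⟩
  exact hF ⟨i, j, k, h1, h2, h h3, h h4⟩

/-- The trap lemma: in a noncrossing graph with an edge `(a, c)`, where all edges lie
weakly to the right of `a`, a walk that starts below `c` and avoids both `a` and `c`
stays below `c`. -/
lemma trap {a c : ℕ} (hNC : Noncrossing E) (hinc : ∀ p ∈ E, a ≤ p.1 ∧ p.1 < p.2)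
    (hedge : (a, c) ∈ E) :
    ∀ {x y : ℕ} (w : (graphOf E).Walk x y), x < c →
      a ∉ w.support → c ∉ w.support → y < c := by
  intro x y w
  induction w with
  | nil => exact fun h _ _ => h
  | @cons x x' y h w ih =>
    intro hx ha hc
    rw [SimpleGraph.Walk.support_cons] at ha hc
    have hax : a ≠ x := fun e => ha (e ▸ List.mem_cons_self)
    have ha' : a ∉ w.support := fun e => ha (List.mem_cons_of_mem _ e)
    have hc' : c ∉ w.support := fun e => hc (List.mem_cons_of_mem _ e)
    have hcx' : c ≠ x' := fun e => hc' (e ▸ w.start_mem_support)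
    rcases graphOf_adj.mp h with ⟨hm | hm, hne⟩
    · obtain ⟨h1, h2⟩ := hinc _ hm
      have hx' : x' < c := by
        by_contra hcon
        push_neg at hcon
        have hcx : c < x' := lt_of_le_of_ne hcon hcx'
        exact hNC ⟨a, x, c, x', lt_of_le_of_ne h1 hax, hx, hcx, hedge, hm⟩
      exact ih hx' ha' hc'
    · obtain ⟨h1, h2⟩ := hinc _ hm
      exact ih (lt_trans h2 hx) ha' hc'

/-- The span lemma: a walk crossing over an avoided vertex `z` must use an edge
spanning `z`. -/
lemma span {z : ℕ} (hinc : ∀ p ∈ E, p.1 < p.2) :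
    ∀ {x y : ℕ} (w : (graphOf E).Walk x y), z ∉ w.support → x < z → z < y →
      ∃ c d, (c, d) ∈ E ∧ c < z ∧ z < d ∧ c ∈ w.support ∧ d ∈ w.support := by
  intro x y w
  induction w with
  | nil =>
    intro hz hx hy
    exact absurd hx (by omega)
  | @cons x x' y h w ih =>
    intro hz hx hy
    have hz' : z ∉ w.support := fun e => hz (by
      rw [SimpleGraph.Walk.support_cons]; exact List.mem_cons_of_mem _ e)
    have hzx' : z ≠ x' := fun e => hz' (e ▸ w.start_mem_support)
    rcases lt_or_gt_of_ne hzx' with hlt | hgt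
    · -- x' > z : the first edge spans z
      rcases graphOf_adj.mp h with ⟨hm | hm, hne⟩
      · refine ⟨x, x', hm, hx, hlt, ?_, ?_⟩
        · rw [SimpleGraph.Walk.support_cons]; exact List.mem_cons_self
        · rw [SimpleGraph.Walk.support_cons]
          exact List.mem_cons_of_mem _ w.start_mem_support
      · exact absurd (hinc _ hm) (by omega)
    · obtain ⟨c, d, hcd, h1, h2, h3, h4⟩ := ih hz' hgt hy
      exact ⟨c, d, hcd, h1, h2,
        by rw [SimpleGraph.Walk.support_cons]; exact List.mem_cons_of_mem _ h3,
        by rw [SimpleGraph.Walk.support_cons]; exact List.mem_cons_of_mem _ h4⟩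

/-- Transfer reachability along a walk into a subgraph containing the component. -/
lemma reach_transfer {P : ℕ → Prop}
    (h : ∀ p ∈ F, (P p.1 ∨ P p.2) → p ∈ F₀ ∧ P p.1 ∧ P p.2) :
    ∀ {x y : ℕ} (w : (graphOf F).Walk x y), P x →
      (graphOf F₀).Reachable x y ∧ P y := by
  intro x y w
  induction w with
  | nil => exact fun hx => ⟨Reachable.refl _, hx⟩
  | @cons x x' y hadj w ih =>
    intro hx
    rcases graphOf_adj.mp hadj with ⟨hm | hm, hne⟩
    · obtain ⟨hF₀, h1, h2⟩ := h _ hm (Or.inl hx)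
      obtain ⟨hr, hy⟩ := ih h2
      exact ⟨((graphOf_adj.mpr ⟨Or.inl hF₀, hne⟩ : (graphOf F₀).Adj x x').reachable).trans hr, hy⟩
    · obtain ⟨hF₀, h1, h2⟩ := h _ hm (Or.inr hx)
      obtain ⟨hr, hy⟩ := ih h1
      exact ⟨((graphOf_adj.mpr ⟨Or.inr hF₀, hne⟩ : (graphOf F₀).Adj x x').reachable).trans hr, hy⟩

/-- After deleting one edge `q` of `E`, endpoints of a walk are connected,
or each is connected to an endpoint of `q`. -/
lemma reach_erase_split {q : ℕ × ℕ} :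
    ∀ {x y : ℕ} (_ : (graphOf E).Walk x y),
      (graphOf (E.erase q)).Reachable x y ∨
      ((graphOf (E.erase q)).Reachable x q.1 ∧ (graphOf (E.erase q)).Reachable q.2 y) ∨
      ((graphOf (E.erase q)).Reachable x q.2 ∧ (graphOf (E.erase q)).Reachable q.1 y) := by
  intro x y w
  induction w with
  | nil => exact Or.inl (Reachable.refl _)
  | @cons x x' y hadj w ih =>
    rcases graphOf_adj.mp hadj with ⟨hm | hm, hne⟩
    · by_cases hq : (x, x') = q
      · have h1 : x = q.1 := congrArg Prod.fst hq
        have h2 : x' = q.2 := congrArg Prod.snd hq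
        subst h1; subst h2
        rcases ih with h | ⟨ha, hb⟩ | ⟨ha, hb⟩
        · exact Or.inr (Or.inl ⟨Reachable.refl _, h⟩)
        · exact Or.inr (Or.inl ⟨Reachable.refl _, hb⟩)
        · exact Or.inl hb
      · have hadj' : (graphOf (E.erase q)).Adj x x' :=
          graphOf_adj.mpr ⟨Or.inl (Finset.mem_erase.mpr ⟨hq, hm⟩), hne⟩
        rcases ih with h | ⟨ha, hb⟩ | ⟨ha, hb⟩
        · exact Or.inl (hadj'.reachable.trans h)
        · exact Or.inr (Or.inl ⟨hadj'.reachable.trans ha, hb⟩)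
        · exact Or.inr (Or.inr ⟨hadj'.reachable.trans ha, hb⟩)
    · by_cases hq : (x', x) = q
      · have h1 : x' = q.1 := congrArg Prod.fst hq
        have h2 : x = q.2 := congrArg Prod.snd hq
        subst h1; subst h2
        rcases ih with h | ⟨ha, hb⟩ | ⟨ha, hb⟩
        · exact Or.inr (Or.inr ⟨Reachable.refl _, h⟩)
        · exact Or.inl hb
        · exact Or.inr (Or.inr ⟨Reachable.refl _, hb⟩)
      · have hadj' : (graphOf (E.erase q)).Adj x x' :=
          graphOf_adj.mpr ⟨Or.inr (Finset.mem_erase.mpr ⟨hq, hm⟩), hne⟩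
        rcases ih with h | ⟨ha, hb⟩ | ⟨ha, hb⟩
        · exact Or.inl (hadj'.reachable.trans h)
        · exact Or.inr (Or.inl ⟨hadj'.reachable.trans ha, hb⟩)
        · exact Or.inr (Or.inr ⟨hadj'.reachable.trans ha, hb⟩)

/-- In an acyclic graph, the endpoints of an edge are not connected after deleting it. -/
lemma not_reach_erase {q : ℕ × ℕ} (hq : q ∈ E) (hinc : ∀ p ∈ E, p.1 < p.2)
    (hac : (graphOf E).IsAcyclic) : ¬ (graphOf (E.erase q)).Reachable q.1 q.2 := by
  intro hr
  have hne : q.1 ≠ q.2 := (hinc _ hq).ne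
  have hadj : (graphOf E).Adj q.1 q.2 :=
    graphOf_adj.mpr ⟨Or.inl (by simpa using hq), hne⟩
  have hle : graphOf (E.erase q) ≤ (graphOf E) \ fromEdgeSet {s(q.1, q.2)} := by
    intro a b hab
    rcases graphOf_adj.mp hab with ⟨hm | hm, hab_ne⟩
    · obtain ⟨hpq, hmem⟩ := Finset.mem_erase.mp hm
      refine ⟨graphOf_adj.mpr ⟨Or.inl hmem, hab_ne⟩, ?_⟩
      rw [fromEdgeSet_adj]
      rintro ⟨hs, -⟩
      rw [Set.mem_singleton_iff, Sym2.eq_iff] at hs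
      rcases hs with ⟨h1, h2⟩ | ⟨h1, h2⟩
      · exact hpq (by rw [h1, h2])
      · have t1 := hinc _ hmem
        have t2 := hinc _ hq
        omega
    · obtain ⟨hpq, hmem⟩ := Finset.mem_erase.mp hm
      refine ⟨graphOf_adj.mpr ⟨Or.inr hmem, hab_ne⟩, ?_⟩
      rw [fromEdgeSet_adj]
      rintro ⟨hs, -⟩
      rw [Set.mem_singleton_iff, Sym2.eq_iff] at hs
      rcases hs with ⟨h1, h2⟩ | ⟨h1, h2⟩
      · have t1 := hinc _ hmem
        have t2 := hinc _ hq
        omega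
      · exact hpq (by rw [h1, h2])
  obtain ⟨u, p, hp, -⟩ :=
    adj_and_reachable_delete_edges_iff_exists_cycle.mp ⟨hadj, hr.mono hle⟩
  exact hac p hp

/-- Walks avoiding the bridge stay on one side. -/
lemma side_walk {K G : SimpleGraph ℕ} {S T : Set ℕ} {u v : ℕ}
    (hK : ∀ a b, K.Adj a b → G.Adj a b ∨ (a ∈ T ∧ b ∈ T) ∨ s(a, b) = s(u, v))
    (hG : ∀ a b, G.Adj a b → a ∈ S ∧ b ∈ S)
    (hST : ∀ x, x ∈ S → x ∈ T → False) :
    ∀ {x y : ℕ} (w : K.Walk x y), x ∈ S → s(u, v) ∉ w.edges →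
      y ∈ S ∧ ∀ e ∈ w.edges, e ∈ G.edgeSet := by
  intro x y w
  induction w with
  | nil => exact fun hx _ => ⟨hx, by simp⟩
  | @cons x x' y hadj w ih =>
    intro hx he
    rw [SimpleGraph.Walk.edges_cons, List.mem_cons] at he
    push_neg at he
    obtain ⟨he1, he2⟩ := he
    rcases hK _ _ hadj with hG' | hT' | hs
    · obtain ⟨hy, hes⟩ := ih (hG _ _ hG').2 he2
      refine ⟨hy, ?_⟩
      intro e hee
      rw [SimpleGraph.Walk.edges_cons, List.mem_cons] at hee
      rcases hee with rfl | hee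
      · exact hG'
      · exact hes e hee
    · exact absurd hT'.1 (fun h => hST _ hx h)
    · exact absurd hs.symm he1

/-- Trails between two vertices on the same side never use the bridge. -/
lemma side_trail {K G H : SimpleGraph ℕ} {S T : Set ℕ} {u v : ℕ}
    (hK : ∀ a b, K.Adj a b → G.Adj a b ∨ (a ∈ T ∧ b ∈ T) ∨ s(a, b) = s(u, v))
    (hKH : ∀ a b, K.Adj a b → H.Adj a b ∨ (a ∈ S ∧ b ∈ S) ∨ s(a, b) = s(v, u))
    (hG : ∀ a b, G.Adj a b → a ∈ S ∧ b ∈ S)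
    (hH : ∀ a b, H.Adj a b → a ∈ T ∧ b ∈ T)
    (hST : ∀ x, x ∈ S → x ∈ T → False)
    (hu : u ∈ S) (hv : v ∈ T) :
    ∀ {x y : ℕ} (w : K.Walk x y), x ∈ S → y ∈ S → w.IsTrail → s(u, v) ∉ w.edges := by
  intro x y w
  induction w with
  | nil => intro _ _ _; simp
  | @cons x x' y hadj w ih =>
    intro hx hy htrail hmem
    rw [SimpleGraph.Walk.edges_cons, List.mem_cons] at hmem
    rw [SimpleGraph.Walk.isTrail_cons] at htrail
    rcases hmem with hfirst | hmem
    · rcases Sym2.eq_iff.mp hfirst with ⟨h1, h2⟩ | ⟨h1, h2⟩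
      · -- x = u, x' = v : rest of walk goes from v back into S, avoiding the bridge
        have hnb : s(u, v) ∉ w.edges := by
          rw [hfirst]; exact htrail.2
        have hx'T : x' ∈ T := by rw [← h2]; exact hv
        have := side_walk (G := H) (S := T) (T := S) (u := v) (v := u)
          hKH hH (fun z hz1 hz2 => hST z hz2 hz1) w hx'T
          (by rwa [show s(v, u) = s(u, v) from Sym2.eq_swap])
        exact hST y hy this.1
      · exact hST x hx (by rw [← h2]; exact hv)
    · rcases hK _ _ hadj with hG' | hT' | hs
      · exact ih (hG _ _ hG').2 hy htrail.1 hmem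
      · exact hST _ hx hT'.1
      · rcases Sym2.eq_iff.mp hs with ⟨h1, h2⟩ | ⟨h1, h2⟩
        · -- first edge is the bridge but the bridge also appears later : not a trail
          rw [hs] at htrail
          exact htrail.2 hmem
        · exact hST x hx (by rw [h1]; exact hv)

/-- Joining two acyclic graphs with disjoint supports by one edge stays acyclic. -/
lemma union_acyclic {G H : SimpleGraph ℕ} {S T : Set ℕ} {u v : ℕ}
    (hST : ∀ x, x ∈ S → x ∈ T → False)
    (hG : ∀ a b, G.Adj a b → a ∈ S ∧ b ∈ S)
    (hH : ∀ a b, H.Adj a b → a ∈ T ∧ b ∈ T)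
    (hGa : G.IsAcyclic) (hHa : H.IsAcyclic)
    (hu : u ∈ S) (hv : v ∈ T) :
    (G ⊔ H ⊔ fromEdgeSet {s(u, v)}).IsAcyclic := by
  have hK0 : ∀ a b, (G ⊔ H ⊔ fromEdgeSet {s(u, v)}).Adj a b →
      G.Adj a b ∨ H.Adj a b ∨ s(a, b) = s(u, v) := by
    intro a b hab
    rcases hab with (h | h) | h
    · exact Or.inl h
    · exact Or.inr (Or.inl h)
    · rw [fromEdgeSet_adj, Set.mem_singleton_iff] at h
      exact Or.inr (Or.inr h.1)
  have hKS : ∀ a b, (G ⊔ H ⊔ fromEdgeSet {s(u, v)}).Adj a b →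
      G.Adj a b ∨ (a ∈ T ∧ b ∈ T) ∨ s(a, b) = s(u, v) :=
    fun a b h => (hK0 a b h).imp id (Or.imp (hH a b) id)
  have hKT : ∀ a b, (G ⊔ H ⊔ fromEdgeSet {s(u, v)}).Adj a b →
      H.Adj a b ∨ (a ∈ S ∧ b ∈ S) ∨ s(a, b) = s(v, u) := by
    intro a b h
    rcases hK0 a b h with h' | h' | h'
    · exact Or.inr (Or.inl (hG a b h'))
    · exact Or.inl h'
    · exact Or.inr (Or.inr (h'.trans Sym2.eq_swap.symm))
  have hSTs : ∀ x, x ∈ T → x ∈ S → False := fun x h1 h2 => hST x h2 h1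
  intro x c hc
  by_cases hsp : s(u, v) ∈ c.edges
  · have husup : u ∈ c.support := c.fst_mem_support_of_mem_edges hsp
    obtain ⟨c', hc', hsp'⟩ : ∃ c' : (G ⊔ H ⊔ fromEdgeSet {s(u, v)}).Walk u u, c'.IsCycle ∧ s(u, v) ∈ c'.edges :=
      ⟨c.rotate u husup, hc.rotate _, ((c.rotate_edges u husup).perm.mem_iff).mpr hsp⟩
    cases c' with
    | nil => simp at hsp'
    | @cons _ w₁ _ hadj p =>
      rw [SimpleGraph.Walk.cons_isCycle_iff] at hc'
      obtain ⟨hpath, hfirstnot⟩ := hc'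
      rcases hK0 _ _ hadj with hGadj | hHadj | hsym
      · have hw₁S := (hG _ _ hGadj).2
        have hne : s(u, w₁) ≠ s(u, v) := by
          intro hh
          rcases Sym2.eq_iff.mp hh with ⟨-, h2⟩ | ⟨h1, -⟩
          · exact hST w₁ hw₁S (by rw [h2]; exact hv)
          · exact hST u hu (by rw [h1]; exact hv)
        have hspp : s(u, v) ∈ p.edges := by
          rcases (by rwa [SimpleGraph.Walk.edges_cons, List.mem_cons] at hsp' :
            s(u, v) = s(u, w₁) ∨ s(u, v) ∈ p.edges) with h | h
          · exact absurd h.symm hne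
          · exact h
        exact side_trail hKS hKT hG hH hST hu hv p hw₁S hu hpath.isTrail hspp
      · exact hST u hu (hH _ _ hHadj).1
      · have hw₁ : w₁ = v := by
          rcases Sym2.eq_iff.mp hsym with ⟨-, h2⟩ | ⟨h1, -⟩
          · exact h2
          · exact absurd (by rw [h1]; exact hv : u ∈ T) (fun hh => hST u hu hh)
        have := side_walk (G := H) (S := T) (T := S) (u := v) (v := u)
          hKT hH hSTs p (by rw [hw₁]; exact hv)
          (fun hmem' => hfirstnot (by
            rw [show s(u, w₁) = s(v, u) from by rw [hw₁]; exact Sym2.eq_swap.symm]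
            exact hmem'))
        exact hST u hu this.1
  · cases c with
    | nil => exact hc.ne_nil rfl
    | @cons _ w₁ _ hadj p =>
      have hfirstmem : s(x, w₁) ∈ (SimpleGraph.Walk.cons hadj p).edges := by
        rw [SimpleGraph.Walk.edges_cons]; exact List.mem_cons_self
      rcases hK0 _ _ hadj with hGadj | hHadj | hsym
      · have hxS := (hG _ _ hGadj).1
        obtain ⟨-, hes⟩ := side_walk hKS hG hST (SimpleGraph.Walk.cons hadj p) hxS hsp
        exact hGa ((SimpleGraph.Walk.cons hadj p).transfer G hes) (hc.transfer hes)
      · have hxT := (hH _ _ hHadj).1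
        obtain ⟨-, hes⟩ := side_walk (G := H) (S := T) (T := S) (u := v) (v := u)
          hKT hH hSTs (SimpleGraph.Walk.cons hadj p) hxT
          (by rwa [show s(v, u) = s(u, v) from Sym2.eq_swap])
        exact hHa ((SimpleGraph.Walk.cons hadj p).transfer H hes) (hc.transfer hes)
      · exact hsp (by
          rw [SimpleGraph.Walk.edges_cons]
          exact List.mem_cons.mpr (Or.inl hsym.symm))

/-- Any noncrossing alternating spanning tree of an interval with at least two points
contains the long edge. -/
lemma long_edge {a b : ℕ} (hG : Good a b E) (hab : a + 2 ≤ b) : (a, b - 1) ∈ E := by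
  obtain ⟨⟨hinc, hac, hconn⟩, hNC, hAlt⟩ := hG
  obtain ⟨w⟩ := hconn a (b - 1) le_rfl (by omega) (by omega) (by omega)
  obtain ⟨p, hp⟩ := w.toPath
  clear w
  cases p with
  | nil => omega
  | @cons _ v₁ _ hadj q =>
    have hav₁ : (a, v₁) ∈ E := by
      rcases graphOf_adj.mp hadj with ⟨hm | hm, hne⟩
      · exact hm
      · exfalso; obtain ⟨t1, t2, t3⟩ := hinc _ hm; omega
    obtain ⟨hv₁a, hv₁b, hv₁c⟩ := hinc _ hav₁
    by_cases hv₁b1 : v₁ = b - 1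
    · exact (by rw [← hv₁b1]; exact hav₁ : (a, b - 1) ∈ E)
    cases q with
    | nil => exact absurd rfl hv₁b1
    | @cons _ v₂ _ hadj₂ q₂ =>
      exfalso
      rw [SimpleGraph.Walk.cons_isPath_iff] at hp
      obtain ⟨hp₂, hanotin⟩ := hp
      rw [SimpleGraph.Walk.cons_isPath_iff] at hp₂
      obtain ⟨hq₂path, hv₁notin⟩ := hp₂
      have hv₂v₁ : (v₂, v₁) ∈ E := by
        rcases graphOf_adj.mp hadj₂ with ⟨hm | hm, hne⟩
        · exact absurd ⟨a, v₁, v₂, hv₁b, (hinc _ hm).2.1, hav₁, hm⟩ hAlt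
        · exact hm
      obtain ⟨hv₂a, hv₂b, hv₂c⟩ := hinc _ hv₂v₁
      have hasup : a ∉ q₂.support := fun h => hanotin (by
        rw [SimpleGraph.Walk.support_cons]; exact List.mem_cons_of_mem _ h)
      have hfin := trap hNC (fun p hp => ⟨(hinc p hp).1, (hinc p hp).2.1⟩) hav₁ q₂
        hv₂b hasup hv₁notin
      omega

lemma good_union {a m b : ℕ} (ham : a ≤ m) (hmb : m + 1 < b)
    (h₀ : Good a (m + 1) E₀) (h₁ : Good (m + 1) b E₁) :
    Good a b (E₀ ∪ E₁ ∪ {(a, b - 1)}) := by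
  obtain ⟨⟨hinc₀, hac₀, hconn₀⟩, hNC₀, hAlt₀⟩ := h₀
  obtain ⟨⟨hinc₁, hac₁, hconn₁⟩, hNC₁, hAlt₁⟩ := h₁
  have hmemU : ∀ p ∈ E₀ ∪ E₁ ∪ {(a, b - 1)}, p ∈ E₀ ∨ p ∈ E₁ ∨ p = (a, b - 1) := by
    intro p hp
    simp only [Finset.mem_union, Finset.mem_singleton] at hp
    tauto
  have hincU : ∀ p ∈ E₀ ∪ E₁ ∪ {(a, b - 1)}, a ≤ p.1 ∧ p.1 < p.2 ∧ p.2 < b := by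
    intro p hp
    rcases hmemU p hp with h | h | h
    · obtain ⟨t1, t2, t3⟩ := hinc₀ p h; omega
    · obtain ⟨t1, t2, t3⟩ := hinc₁ p h; omega
    · subst h; refine ⟨le_rfl, by omega, by omega⟩
  refine ⟨⟨hincU, ?_, ?_⟩, ?_, ?_⟩
  · -- acyclic
    have hgr : graphOf (E₀ ∪ E₁ ∪ {(a, b - 1)}) =
        graphOf E₀ ⊔ graphOf E₁ ⊔ fromEdgeSet {s(a, b - 1)} := by
      rw [graphOf_union, graphOf_union, graphOf_singleton]
    rw [hgr]
    refine union_acyclic (S := Set.Icc a m) (T := Set.Icc (m + 1) (b - 1))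
      (fun x hx hy => ?_) (fun x y hxy => ?_) (fun x y hxy => ?_)
      hac₀ hac₁ ?_ ?_
    · simp only [Set.mem_Icc] at hx hy; omega
    · rcases graphOf_adj.mp hxy with ⟨hm' | hm', hne⟩
      · obtain ⟨t1, t2, t3⟩ := hinc₀ _ hm'
        simp only [Set.mem_Icc]; omega
      · obtain ⟨t1, t2, t3⟩ := hinc₀ _ hm'
        simp only [Set.mem_Icc]; omega
    · rcases graphOf_adj.mp hxy with ⟨hm' | hm', hne⟩
      · obtain ⟨t1, t2, t3⟩ := hinc₁ _ hm'
        simp only [Set.mem_Icc]; omega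
      · obtain ⟨t1, t2, t3⟩ := hinc₁ _ hm'
        simp only [Set.mem_Icc]; omega
    · simp only [Set.mem_Icc]; omega
    · simp only [Set.mem_Icc]; omega
  · -- connectivity, via the hub `a`
    have hsub₀ : E₀ ⊆ E₀ ∪ E₁ ∪ {(a, b - 1)} := by
      intro p hp; simp only [Finset.mem_union]; tauto
    have hsub₁ : E₁ ⊆ E₀ ∪ E₁ ∪ {(a, b - 1)} := by
      intro p hp; simp only [Finset.mem_union]; tauto
    have hhub : ∀ z, a ≤ z → z < b →
        (graphOf (E₀ ∪ E₁ ∪ {(a, b - 1)})).Reachable z a := by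
      intro z hz1 hz2
      by_cases hzm : z ≤ m
      · exact (hconn₀ z a hz1 (by omega) le_rfl (by omega)).mono (graphOf_mono hsub₀)
      · have h1 : (graphOf E₁).Reachable z (b - 1) :=
          hconn₁ z (b - 1) (by omega) (by omega) (by omega) (by omega)
        have h2 : (graphOf (E₀ ∪ E₁ ∪ {(a, b - 1)})).Adj (b - 1) a :=
          graphOf_adj.mpr ⟨Or.inr (by
            simp only [Finset.mem_union, Finset.mem_singleton]; tauto), by omega⟩
        exact (h1.mono (graphOf_mono hsub₁)).trans h2.reachable
    intro x y hx1 hx2 hy1 hy2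
    exact (hhub x hx1 hx2).trans (hhub y hy1 hy2).symm
  · -- noncrossing
    rintro ⟨i, j, k, l, hij, hjk, hkl, h1, h2⟩
    rcases hmemU _ h1 with m1 | m1 | m1 <;> rcases hmemU _ h2 with m2 | m2 | m2
    · exact hNC₀ ⟨i, j, k, l, hij, hjk, hkl, m1, m2⟩
    · obtain ⟨t1, t2, t3⟩ := hinc₀ _ m1
      obtain ⟨s1, s2, s3⟩ := hinc₁ _ m2
      simp only at t1 t2 t3 s1 s2 s3
      omega
    · rw [Prod.mk.injEq] at m2
      obtain ⟨t1, t2, t3⟩ := hinc₀ _ m1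
      simp only at t1 t2 t3
      omega
    · obtain ⟨t1, t2, t3⟩ := hinc₁ _ m1
      obtain ⟨s1, s2, s3⟩ := hinc₀ _ m2
      simp only at t1 t2 t3 s1 s2 s3
      omega
    · exact hNC₁ ⟨i, j, k, l, hij, hjk, hkl, m1, m2⟩
    · rw [Prod.mk.injEq] at m2
      obtain ⟨t1, t2, t3⟩ := hinc₁ _ m1
      simp only at t1 t2 t3
      omega
    · rw [Prod.mk.injEq] at m1
      obtain ⟨t1, t2, t3⟩ := hinc₀ _ m2
      simp only at t1 t2 t3
      omega
    · rw [Prod.mk.injEq] at m1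
      obtain ⟨t1, t2, t3⟩ := hinc₁ _ m2
      simp only at t1 t2 t3
      omega
    · rw [Prod.mk.injEq] at m1 m2
      omega
  · -- alternating
    rintro ⟨i, j, k, hij, hjk, h1, h2⟩
    rcases hmemU _ h1 with m1 | m1 | m1 <;> rcases hmemU _ h2 with m2 | m2 | m2
    · exact hAlt₀ ⟨i, j, k, hij, hjk, m1, m2⟩
    · obtain ⟨t1, t2, t3⟩ := hinc₀ _ m1
      obtain ⟨s1, s2, s3⟩ := hinc₁ _ m2
      simp only at t1 t2 t3 s1 s2 s3
      omega
    · rw [Prod.mk.injEq] at m2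
      obtain ⟨t1, t2, t3⟩ := hinc₀ _ m1
      simp only at t1 t2 t3
      omega
    · obtain ⟨t1, t2, t3⟩ := hinc₁ _ m1
      obtain ⟨s1, s2, s3⟩ := hinc₀ _ m2
      simp only at t1 t2 t3 s1 s2 s3
      omega
    · exact hAlt₁ ⟨i, j, k, hij, hjk, m1, m2⟩
    · rw [Prod.mk.injEq] at m2
      obtain ⟨t1, t2, t3⟩ := hinc₁ _ m1
      simp only at t1 t2 t3
      omega
    · rw [Prod.mk.injEq] at m1
      obtain ⟨t1, t2, t3⟩ := hinc₀ _ m2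
      simp only at t1 t2 t3
      omega
    · rw [Prod.mk.injEq] at m1
      obtain ⟨t1, t2, t3⟩ := hinc₁ _ m2
      simp only at t1 t2 t3
      omega
    · rw [Prod.mk.injEq] at m1 m2
      omega

lemma good_split {a b : ℕ} (hab : a + 2 ≤ b) (hE : Good a b E) :
    ∃ m E₀ E₁, a ≤ m ∧ m + 1 < b ∧ Good a (m + 1) E₀ ∧ Good (m + 1) b E₁ ∧
      E = E₀ ∪ E₁ ∪ {(a, b - 1)} := by
  classical
  obtain ⟨⟨hinc, hac, hconn⟩, hNC, hAlt⟩ := hE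
  have hsp : (a, b - 1) ∈ E := long_edge ⟨⟨hinc, hac, hconn⟩, hNC, hAlt⟩ hab
  have hsubE : E.erase (a, b - 1) ⊆ E := Finset.erase_subset _ _
  have hinc' : ∀ p ∈ E.erase (a, b - 1), a ≤ p.1 ∧ p.1 < p.2 ∧ p.2 < b :=
    fun p hp => hinc p (hsubE hp)
  have hnr : ¬ (graphOf (E.erase (a, b - 1))).Reachable a (b - 1) :=
    not_reach_erase (q := (a, b - 1)) hsp (fun p hp => (hinc p hp).2.1) hac
  have hsplit : ∀ x, a ≤ x → x < b →
      (graphOf (E.erase (a, b - 1))).Reachable a x ∨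
      (graphOf (E.erase (a, b - 1))).Reachable (b - 1) x := by
    intro x hx1 hx2
    obtain ⟨w⟩ := hconn a x le_rfl (by omega) hx1 hx2
    rcases reach_erase_split (q := (a, b - 1)) w with h | ⟨h1, h2⟩ | ⟨h1, h2⟩
    · exact Or.inl h
    · exact Or.inr h2
    · exact absurd h1 hnr
  have hdisj : ∀ x, (graphOf (E.erase (a, b - 1))).Reachable a x →
      (graphOf (E.erase (a, b - 1))).Reachable (b - 1) x → False :=
    fun x h1 h2 => hnr (h1.trans h2.symm)
  have haA : a ∈ (Finset.Ico a b).filter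
      (fun x => (graphOf (E.erase (a, b - 1))).Reachable a x) :=
    Finset.mem_filter.mpr ⟨Finset.mem_Ico.mpr ⟨le_rfl, by omega⟩, Reachable.refl _⟩
  set A : Finset ℕ := (Finset.Ico a b).filter
      (fun x => (graphOf (E.erase (a, b - 1))).Reachable a x) with hA
  set m : ℕ := A.max' ⟨a, haA⟩ with hmdef
  have hmem : ∀ x, x ∈ A ↔
      (a ≤ x ∧ x < b ∧ (graphOf (E.erase (a, b - 1))).Reachable a x) := by
    intro x
    rw [hA]
    simp only [Finset.mem_filter, Finset.mem_Ico]
    tauto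
  have hmA := A.max'_mem ⟨a, haA⟩
  rw [← hmdef] at hmA
  have hmle : ∀ x ∈ A, x ≤ m := fun x hx => A.le_max' x hx
  obtain ⟨hma, hmb', hmreach⟩ := (hmem m).mp hmA
  have hmb1 : m < b - 1 := by
    rcases lt_or_eq_of_le (by omega : m ≤ b - 1) with h | h
    · exact h
    · exact absurd (h ▸ hmreach) hnr
  have hord : ∀ i, a ≤ i → i < b →
      (graphOf (E.erase (a, b - 1))).Reachable (b - 1) i → m < i := by
    intro i hi1 hi2 hri
    by_contra hcon
    push_neg at hcon
    have hia : i ≠ m := fun h => hdisj i (h ▸ hmreach) hri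
    have him : i < m := lt_of_le_of_ne hcon hia
    have hai : a < i :=
      lt_of_le_of_ne hi1 (fun h => hdisj i (h ▸ Reachable.refl a) hri)
    obtain ⟨qw⟩ := hri.symm
    have hmsup : m ∉ qw.support := by
      intro hz
      exact hdisj m hmreach (hri.trans ⟨qw.takeUntil m hz⟩)
    obtain ⟨c, d, hcd, hc1, hc2, hcsup, hdsup⟩ :=
      span (fun p hp => (hinc' p hp).2.1) qw hmsup him hmb1
    have hrc : (graphOf (E.erase (a, b - 1))).Reachable (b - 1) c :=
      hri.trans ⟨qw.takeUntil c hcsup⟩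
    have hca : a < c := by
      rcases lt_or_eq_of_le (hinc' _ hcd).1 with h | h
      · exact h
      · exact (hdisj c (by rw [← show a = c from h]) hrc).elim
    obtain ⟨pw⟩ := hmreach
    have hcsup' : c ∉ pw.support := by
      intro hz
      exact hdisj c ⟨pw.takeUntil c hz⟩ hrc
    obtain ⟨e, f, hef, he1, he2, hesup, hfsup⟩ :=
      span (fun p hp => (hinc' p hp).2.1) pw hcsup' hca hc1
    have hfA : f ≤ m := by
      apply hmle
      rw [hmem]
      obtain ⟨t1, t2, t3⟩ := hinc' _ hef
      exact ⟨by omega, t3, ⟨pw.takeUntil f hfsup⟩⟩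
    exact hNC ⟨e, c, f, d, he1, he2, by omega, hsubE hef, hsubE hcd⟩
  -- the two pieces
  have hreach_or : ∀ p ∈ E.erase (a, b - 1),
      ((graphOf (E.erase (a, b - 1))).Reachable a p.1 ∧
        (graphOf (E.erase (a, b - 1))).Reachable a p.2 ∧
        p ∈ (E.erase (a, b - 1)).filter (fun p => p.2 ≤ m)) ∨
      ((graphOf (E.erase (a, b - 1))).Reachable (b - 1) p.1 ∧
        (graphOf (E.erase (a, b - 1))).Reachable (b - 1) p.2 ∧
        p ∈ (E.erase (a, b - 1)).filter (fun p => m + 1 ≤ p.1)) := by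
    intro p hp
    obtain ⟨t1, t2, t3⟩ := hinc' _ hp
    have hadj : (graphOf (E.erase (a, b - 1))).Adj p.1 p.2 :=
      graphOf_adj.mpr ⟨Or.inl (by simpa using hp), by omega⟩
    rcases hsplit p.1 t1 (by omega) with h | h
    · have h2 : (graphOf (E.erase (a, b - 1))).Reachable a p.2 := h.trans hadj.reachable
      have hle : p.2 ≤ m := hmle _ ((hmem p.2).mpr ⟨by omega, t3, h2⟩)
      exact Or.inl ⟨h, h2, Finset.mem_filter.mpr ⟨hp, hle⟩⟩
    · have h2 : (graphOf (E.erase (a, b - 1))).Reachable (b - 1) p.2 :=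
        h.trans hadj.reachable
      have hge : m + 1 ≤ p.1 := hord p.1 t1 (by omega) h
      exact Or.inr ⟨h, h2, Finset.mem_filter.mpr ⟨hp, hge⟩⟩
  refine ⟨m, (E.erase (a, b - 1)).filter (fun p => p.2 ≤ m),
    (E.erase (a, b - 1)).filter (fun p => m + 1 ≤ p.1), hma, by omega, ?_, ?_, ?_⟩
  · -- Good a (m+1) on the left piece
    have hsub : (E.erase (a, b - 1)).filter (fun p => p.2 ≤ m) ⊆ E :=
      (Finset.filter_subset _ _).trans hsubE
    refine ⟨⟨?_, acyclic_mono (graphOf_mono hsub) hac, ?_⟩,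
      noncrossing_mono hsub hNC, alternating_mono hsub hAlt⟩
    · intro p hp
      obtain ⟨hp', hle⟩ := Finset.mem_filter.mp hp
      obtain ⟨t1, t2, t3⟩ := hinc' _ hp'
      exact ⟨t1, t2, by omega⟩
    · intro x y hx1 hx2 hy1 hy2
      have hxA : (graphOf (E.erase (a, b - 1))).Reachable a x := by
        rcases hsplit x hx1 (by omega) with h | h
        · exact h
        · exact absurd (hord x hx1 (by omega) h) (by omega)
      have hyA : (graphOf (E.erase (a, b - 1))).Reachable a y := by
        rcases hsplit y hy1 (by omega) with h | h
        · exact h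
        · exact absurd (hord y hy1 (by omega) h) (by omega)
      obtain ⟨w⟩ := hxA.symm.trans hyA
      refine (reach_transfer (P := fun z => (graphOf (E.erase (a, b - 1))).Reachable a z)
        ?_ w hxA).1
      intro p hp hor
      rcases hreach_or p hp with ⟨h1, h2, h3⟩ | ⟨h1, h2, h3⟩
      · exact ⟨h3, h1, h2⟩
      · rcases hor with h | h
        · exact (hdisj _ h h1).elim
        · exact (hdisj _ h h2).elim
  · -- Good (m+1) b on the right piece
    have hsub : (E.erase (a, b - 1)).filter (fun p => m + 1 ≤ p.1) ⊆ E :=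
      (Finset.filter_subset _ _).trans hsubE
    refine ⟨⟨?_, acyclic_mono (graphOf_mono hsub) hac, ?_⟩,
      noncrossing_mono hsub hNC, alternating_mono hsub hAlt⟩
    · intro p hp
      obtain ⟨hp', hle⟩ := Finset.mem_filter.mp hp
      obtain ⟨t1, t2, t3⟩ := hinc' _ hp'
      exact ⟨hle, t2, t3⟩
    · intro x y hx1 hx2 hy1 hy2
      have hxB : (graphOf (E.erase (a, b - 1))).Reachable (b - 1) x := by
        rcases hsplit x (by omega) (by omega) with h | h
        · exact absurd (hmle _ ((hmem x).mpr ⟨by omega, by omega, h⟩)) (by omega)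
        · exact h
      have hyB : (graphOf (E.erase (a, b - 1))).Reachable (b - 1) y := by
        rcases hsplit y (by omega) (by omega) with h | h
        · exact absurd (hmle _ ((hmem y).mpr ⟨by omega, by omega, h⟩)) (by omega)
        · exact h
      obtain ⟨w⟩ := hxB.symm.trans hyB
      refine (reach_transfer
        (P := fun z => (graphOf (E.erase (a, b - 1))).Reachable (b - 1) z) ?_ w hxB).1
      intro p hp hor
      rcases hreach_or p hp with ⟨h1, h2, h3⟩ | ⟨h1, h2, h3⟩
      · rcases hor with h | h
        · exact (hdisj _ h1 h).elim
        · exact (hdisj _ h2 h).elim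
      · exact ⟨h3, h1, h2⟩
  · -- reassembling
    ext p
    simp only [Finset.mem_union, Finset.mem_filter, Finset.mem_singleton, Finset.mem_erase]
    constructor
    · intro hp
      by_cases hpq : p = (a, b - 1)
      · tauto
      · rcases hreach_or p (Finset.mem_erase.mpr ⟨hpq, hp⟩) with ⟨-, -, h⟩ | ⟨-, -, h⟩
        · rw [Finset.mem_filter, Finset.mem_erase] at h; tauto
        · rw [Finset.mem_filter, Finset.mem_erase] at h; tauto
    · rintro ((⟨⟨-, hp⟩, -⟩ | ⟨⟨-, hp⟩, -⟩) | rfl)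
      · exact hp
      · exact hp
      · exact hsp

lemma good_inj {a b m m' : ℕ} {F₀ F₁ : Finset (ℕ × ℕ)}
    (ham : a ≤ m) (hmb : m + 1 < b) (ham' : a ≤ m') (hmb' : m' + 1 < b)
    (h₀ : Good a (m + 1) E₀) (h₁ : Good (m + 1) b E₁)
    (g₀ : Good a (m' + 1) F₀) (g₁ : Good (m' + 1) b F₁)
    (hU : E₀ ∪ E₁ ∪ {(a, b - 1)} = F₀ ∪ F₁ ∪ {(a, b - 1)}) :
    m = m' ∧ E₀ = F₀ ∧ E₁ = F₁ := by
  classical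
  have hfilt : ∀ (mm : ℕ) (X₀ X₁ : Finset (ℕ × ℕ)), a ≤ mm → mm + 1 < b →
      (∀ p ∈ X₀, a ≤ p.1 ∧ p.1 < p.2 ∧ p.2 < mm + 1) →
      (∀ p ∈ X₁, mm + 1 ≤ p.1 ∧ p.1 < p.2 ∧ p.2 < b) →
      X₀ = (X₀ ∪ X₁ ∪ {(a, b - 1)}).filter (fun p => p.2 ≤ mm) ∧
      X₁ = (X₀ ∪ X₁ ∪ {(a, b - 1)}).filter (fun p => mm + 1 ≤ p.1) := by
    intro mm X₀ X₁ h1 h2 hi₀ hi₁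
    constructor
    · ext p
      simp only [Finset.mem_filter, Finset.mem_union, Finset.mem_singleton]
      constructor
      · intro hp
        exact ⟨Or.inl (Or.inl hp), by obtain ⟨t1, t2, t3⟩ := hi₀ p hp; omega⟩
      · rintro ⟨(h | h) | rfl, hle⟩
        · exact h
        · exact absurd hle (by obtain ⟨t1, t2, t3⟩ := hi₁ p h; omega)
        · exact absurd hle (by simp only; omega)
    · ext p
      simp only [Finset.mem_filter, Finset.mem_union, Finset.mem_singleton]
      constructor
      · intro hp
        exact ⟨Or.inl (Or.inr hp), (hi₁ p hp).1⟩
      · rintro ⟨(h | h) | rfl, hle⟩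
        · exact absurd hle (by obtain ⟨t1, t2, t3⟩ := hi₀ p h; omega)
        · exact h
        · exact absurd hle (by simp only; omega)
  have key : ∀ (m₁ m₂ : ℕ) (X₀ X₁ Y₀ Y₁ : Finset (ℕ × ℕ)), a ≤ m₁ → m₁ + 1 < b →
      a ≤ m₂ → m₂ + 1 < b →
      Good a (m₁ + 1) X₀ → Good (m₁ + 1) b X₁ → Good a (m₂ + 1) Y₀ → Good (m₂ + 1) b Y₁ →
      X₀ ∪ X₁ ∪ {(a, b - 1)} = Y₀ ∪ Y₁ ∪ {(a, b - 1)} → m₁ < m₂ → False := by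
    intro m₁ m₂ X₀ X₁ Y₀ Y₁ hm1 hm1b hm2 hm2b hX₀ hX₁ hY₀ hY₁ hUU hlt
    have hGood : Good a b (X₀ ∪ X₁ ∪ {(a, b - 1)}) := good_union hm1 hm1b hX₀ hX₁
    have hspU : (a, b - 1) ∈ X₀ ∪ X₁ ∪ {(a, b - 1)} := by
      simp only [Finset.mem_union, Finset.mem_singleton]; tauto
    have hsub₁ : X₁ ⊆ (X₀ ∪ X₁ ∪ {(a, b - 1)}).erase (a, b - 1) := by
      intro p hp
      rw [Finset.mem_erase]
      refine ⟨fun h => ?_, by simp only [Finset.mem_union]; tauto⟩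
      obtain ⟨t1, t2, t3⟩ := hX₁.1.1 p hp
      rw [h] at t1
      simp only at t1
      omega
    have hsub₀ : Y₀ ⊆ (X₀ ∪ X₁ ∪ {(a, b - 1)}).erase (a, b - 1) := by
      intro p hp
      rw [Finset.mem_erase, hUU]
      refine ⟨fun h => ?_, by simp only [Finset.mem_union]; tauto⟩
      obtain ⟨t1, t2, t3⟩ := hY₀.1.1 p hp
      rw [h] at t3
      simp only at t3
      omega
    have r₁ : (graphOf X₁).Reachable m₂ (b - 1) :=
      hX₁.1.2.2 m₂ (b - 1) (by omega) (by omega) (by omega) (by omega)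
    have r₂ : (graphOf Y₀).Reachable m₂ a :=
      hY₀.1.2.2 m₂ a (by omega) (by omega) (by omega) (by omega)
    have hreach : (graphOf ((X₀ ∪ X₁ ∪ {(a, b - 1)}).erase (a, b - 1))).Reachable a (b - 1) :=
      ((r₂.mono (graphOf_mono hsub₀)).symm).trans (r₁.mono (graphOf_mono hsub₁))
    exact not_reach_erase (q := (a, b - 1)) hspU
      (fun p hp => (hGood.1.1 p hp).2.1) hGood.1.2.1 hreach
  rcases lt_trichotomy m m' with h | h | h
  · exact (key m m' E₀ E₁ F₀ F₁ ham hmb ham' hmb' h₀ h₁ g₀ g₁ hU h).elim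
  · subst h
    obtain ⟨f1, f2⟩ := hfilt m E₀ E₁ ham hmb h₀.1.1 h₁.1.1
    obtain ⟨g1, g2⟩ := hfilt m F₀ F₁ ham hmb g₀.1.1 g₁.1.1
    exact ⟨rfl, by rw [f1, g1, hU], by rw [f2, g2, hU]⟩
  · exact (key m' m F₀ F₁ E₀ E₁ ham' hmb' ham hmb g₀ g₁ h₀ h₁ hU.symm h).elim

lemma finite_good (a b : ℕ) : Finite {E : Finset (ℕ × ℕ) // Good a b E} := by
  classical
  let X : Finset (ℕ × ℕ) := Finset.range b ×ˢ Finset.range b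
  have hX : ∀ E : Finset (ℕ × ℕ), Good a b E → E ⊆ X := by
    intro E hE p hp
    obtain ⟨h1, h2, h3⟩ := hE.1.1 p hp
    simp only [X, Finset.mem_product, Finset.mem_range]
    omega
  refine Finite.of_injective
    (fun s => (⟨s.1, Finset.mem_powerset.mpr (hX s.1 s.2)⟩ : {F // F ∈ X.powerset})) ?_
  intro s t h
  apply Subtype.ext
  simpa [Subtype.ext_iff] using h

lemma nat_card_sigma {ι : Type*} [Fintype ι] {β : ι → Type*} [∀ i, Finite (β i)] :
    Nat.card (Σ i, β i) = ∑ i, Nat.card (β i) := by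
  haveI := fun i => Fintype.ofFinite (β i)
  simp [Nat.card_eq_fintype_card]

theorem count : ∀ k a : ℕ,
    Nat.card {E : Finset (ℕ × ℕ) // Good a (a + k + 1) E} = catalan k := by
  intro k
  induction k using Nat.strong_induction_on with
  | _ k ih =>
    rcases k with _ | K
    · intro a
      have hval : ∀ E : Finset (ℕ × ℕ), Good a (a + 0 + 1) E → E = ∅ := by
        intro E hE
        rw [Finset.eq_empty_iff_forall_notMem]
        intro p hp
        obtain ⟨t1, t2, t3⟩ := hE.1.1 p hp
        omega
      have hempty : Good a (a + 0 + 1) (∅ : Finset (ℕ × ℕ)) := by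
        refine ⟨⟨by simp, ?_, ?_⟩, ?_, ?_⟩
        · have hbot : graphOf (∅ : Finset (ℕ × ℕ)) = ⊥ := by
            rw [graphOf, Finset.image_empty, Finset.coe_empty, fromEdgeSet_empty]
          rw [hbot]
          intro v c hc
          cases c with
          | nil => exact hc.ne_nil rfl
          | cons h p => exact h.elim
        · intro x y hx1 hx2 hy1 hy2
          have : x = y := by omega
          subst this
          exact Reachable.refl _
        · rintro ⟨i, j, k, l, -, -, -, h, -⟩
          simp at h
        · rintro ⟨i, j, k, -, -, h, -⟩
          simp at h
      haveI : Unique {E : Finset (ℕ × ℕ) // Good a (a + 0 + 1) E} :=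
        { default := ⟨∅, hempty⟩
          uniq := fun s => Subtype.ext (hval s.1 s.2) }
      rw [Nat.card_unique]
      exact catalan_zero.symm
    · intro a
      classical
      haveI hfin : ∀ i : Fin (K + 1),
          Finite ({E₀ : Finset (ℕ × ℕ) // Good a (a + ↑i + 1) E₀} ×
            {E₁ : Finset (ℕ × ℕ) // Good (a + ↑i + 1) (a + (K + 1) + 1) E₁}) := by
        intro i
        haveI := finite_good a (a + ↑i + 1)
        haveI := finite_good (a + ↑i + 1) (a + (K + 1) + 1)
        infer_instance
      set g : ((m : Fin (K + 1)) × ({E₀ : Finset (ℕ × ℕ) // Good a (a + ↑m + 1) E₀} ×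
          {E₁ : Finset (ℕ × ℕ) // Good (a + ↑m + 1) (a + (K + 1) + 1) E₁})) →
          {E : Finset (ℕ × ℕ) // Good a (a + (K + 1) + 1) E} :=
        fun t => ⟨t.2.1.1 ∪ t.2.2.1 ∪ {(a, a + (K + 1) + 1 - 1)}, by
          have hg := good_union (a := a) (m := a + ↑t.1) (b := a + (K + 1) + 1)
            (by omega) (by omega) t.2.1.2 t.2.2.2
          exact hg⟩ with hgdef
      have hbij : Function.Bijective g := by
        constructor
        · rintro ⟨m₁, ⟨X₀, hX₀⟩, ⟨X₁, hX₁⟩⟩ ⟨m₂, ⟨Y₀, hY₀⟩, ⟨Y₁, hY₁⟩⟩ hgg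
          simp only [hgdef, Subtype.mk.injEq] at hgg
          obtain ⟨h1, h2, h3⟩ := good_inj (a := a) (b := a + (K + 1) + 1)
            (m := a + ↑m₁) (m' := a + ↑m₂)
            (by omega) (by omega) (by omega) (by omega) hX₀ hX₁ hY₀ hY₁ hgg
          have hm : m₁ = m₂ := Fin.ext (by omega)
          subst hm
          subst h2
          subst h3
          rfl
        · rintro ⟨EE, hEE⟩
          obtain ⟨m, E₀, E₁, hma, hmb, h₀, h₁, hEeq⟩ :=
            good_split (by omega : a + 2 ≤ a + (K + 1) + 1) hEE
          refine ⟨⟨⟨m - a, by omega⟩, ⟨E₀, ?_⟩, ⟨E₁, ?_⟩⟩, ?_⟩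
          · rw [show a + ↑(⟨m - a, by omega⟩ : Fin (K + 1)) + 1 = m + 1 by simp; omega]
            exact h₀
          · rw [show a + ↑(⟨m - a, by omega⟩ : Fin (K + 1)) + 1 = m + 1 by simp; omega]
            exact h₁
          · apply Subtype.ext
            simp only [hgdef]
            rw [hEeq]
      calc Nat.card {E : Finset (ℕ × ℕ) // Good a (a + (K + 1) + 1) E}
          = Nat.card ((m : Fin (K + 1)) ×
              ({E₀ : Finset (ℕ × ℕ) // Good a (a + ↑m + 1) E₀} ×
              {E₁ : Finset (ℕ × ℕ) // Good (a + ↑m + 1) (a + (K + 1) + 1) E₁})) :=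
            (Nat.card_eq_of_bijective g hbij).symm
        _ = ∑ m : Fin (K + 1),
              Nat.card ({E₀ : Finset (ℕ × ℕ) // Good a (a + ↑m + 1) E₀} ×
              {E₁ : Finset (ℕ × ℕ) // Good (a + ↑m + 1) (a + (K + 1) + 1) E₁}) :=
            nat_card_sigma
        _ = ∑ m : Fin (K + 1), catalan ↑m * catalan (K - ↑m) := by
            apply Finset.sum_congr rfl
            intro m _
            haveI := finite_good a (a + ↑m + 1)
            haveI := finite_good (a + ↑m + 1) (a + (K + 1) + 1)
            rw [Nat.card_prod]
            congr 1
            · exact ih ↑m m.isLt a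
            · rw [show a + (K + 1) + 1 = (a + ↑m + 1) + (K - ↑m) + 1 by
                have := m.isLt; omega]
              exact ih (K - ↑m) (by have := m.isLt; omega) (a + ↑m + 1)
        _ = catalan (K + 1) := (catalan_succ K).symm

end NCAT

/-- The number of noncrossing alternating spanning trees of `K_n`
is the Catalan number `C_{n-1}`. -/
theorem card_noncrossing_alternating_trees (n : ℕ) (hn : 1 ≤ n) :
    Nat.card {E : Finset (ℕ × ℕ) //
        IsSpanningTree n E ∧ Noncrossing E ∧ Alternating E} = catalan (n - 1) := by
  have h := NCAT.count (n - 1) 0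
  have hn' : 0 + (n - 1) + 1 = n := by omega
  rw [hn'] at h
  rw [← h]
  apply Nat.card_congr
  apply Equiv.subtypeEquivRight
  intro E
  constructor
  · rintro ⟨⟨h1, h2, h3⟩, h4, h5⟩
    exact ⟨⟨fun p hp => ⟨Nat.zero_le _, h1 p hp⟩, h2,
      fun x y _ hx _ hy => h3 x y hx hy⟩, h4, h5⟩
  · rintro ⟨⟨h1, h2, h3⟩, h4, h5⟩
    exact ⟨⟨fun p hp => (h1 p hp).2, h2,
      fun x y hx hy => h3 x y (Nat.zero_le _) hx (Nat.zero_le _) hy⟩, h4, h5⟩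
end

section
/- Let T_1, ..., T_k be all the noncrossing alternating spanning trees of K_n. Then the simplices P(T_1), ..., P(T_k) are the top-dimensional simplices of a triangulation of the root polytope P(P_n) = P(A_{n-1}^+), and for any indices i_1, ..., i_l one has P(T_{i_1}) ∩ ... ∩ P(T_{i_l}) = P(T_{i_1} ∩ ... ∩ T_{i_l}), where T_{i_1} ∩ ... ∩ T_{i_l} denotes the graph on [n] whose edge set is the intersection of the edge sets. -/
/-- The root polytope (simplex) of a forest `G`: the convex hull of `0` and the vectors
`e_i - e_j` for the edges `(i,j)` of `G`, `i < j`. -/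
noncomputable def treeSimplex (T : Finset (ℕ × ℕ)) : Set (ℕ → ℝ) :=
  convexHull ℝ ({0} ∪ rvec '' ↑T)

/-- The full type `A_{n-1}` root polytope `P(P_n) = ConvHull(0, e_i - e_j : 0 ≤ i < j < n)`. -/
noncomputable def fullRootPolytope (n : ℕ) : Set (ℕ → ℝ) :=
  convexHull ℝ ({0} ∪ {v | ∃ i j, i < j ∧ j < n ∧ v = rvec (i, j)})

/-! ### Basic lemmas -/

open Finset

lemma rvec_apply (p : ℕ × ℕ) (v : ℕ) :
    rvec p v = (if p.1 = v then (1:ℝ) else 0) - (if p.2 = v then (1:ℝ) else 0) := by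
  simp [rvec, Pi.single_apply, eq_comm]

lemma rvec_fst (p : ℕ × ℕ) (h : p.1 ≠ p.2) : rvec p p.1 = 1 := by
  rw [rvec_apply]; simp [Ne.symm h]

lemma rvec_snd (p : ℕ × ℕ) (h : p.1 ≠ p.2) : rvec p p.2 = -1 := by
  rw [rvec_apply]; simp [h]

lemma rvec_pair (i j v : ℕ) :
    rvec (i, j) v = (if i = v then (1:ℝ) else 0) - (if j = v then (1:ℝ) else 0) :=
  rvec_apply (i, j) v

lemma rvec_ne_zero {p : ℕ × ℕ} (h : p.1 < p.2) : rvec p ≠ 0 := by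
  intro h0
  have h1 : rvec p p.1 = 1 := rvec_fst p h.ne
  rw [h0] at h1; simpa using h1

lemma rvec_inj {p q : ℕ × ℕ} (hp : p.1 < p.2) (hq : q.1 < q.2) (h : rvec p = rvec q) : p = q := by
  have h1 := congrFun h p.1
  have h2 := congrFun h p.2
  rw [rvec_fst p hp.ne , rvec_apply] at h1
  rw [rvec_snd p hp.ne, rvec_apply] at h2
  have e1 : q.1 = p.1 := by
    by_contra hne
    simp only [if_neg hne] at h1
    split_ifs at h1 <;> norm_num at h1
  have e2 : q.2 = p.2 := by
    by_contra hne
    simp only [if_neg hne] at h2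
    split_ifs at h2 <;> norm_num at h2
  exact Prod.ext e1.symm e2.symm

lemma sum_rep_apply (F : Finset (ℕ × ℕ)) (c : ℕ × ℕ → ℝ) (v : ℕ) :
    (∑ p ∈ F, c p • rvec p) v
      = (∑ p ∈ F.filter (fun p => p.1 = v), c p)
        - ∑ p ∈ F.filter (fun p => p.2 = v), c p := by
  rw [Finset.sum_apply, Finset.sum_filter, Finset.sum_filter, ← Finset.sum_sub_distrib]
  refine Finset.sum_congr rfl fun p _ => ?_
  rw [Pi.smul_apply, rvec_apply, smul_eq_mul]
  split_ifs <;> ring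

lemma sum_rvec_range (p : ℕ × ℕ) (k : ℕ) :
    ∑ v ∈ Finset.range k, rvec p v
      = (if p.1 < k then (1:ℝ) else 0) - (if p.2 < k then (1:ℝ) else 0) := by
  have : ∀ a : ℕ, (∑ v ∈ Finset.range k, if a = v then (1:ℝ) else 0)
      = if a < k then (1:ℝ) else 0 := by
    intro a
    rw [Finset.sum_ite_eq (Finset.range k) a (fun _ => (1:ℝ))]
    simp [Finset.mem_range]
  calc ∑ v ∈ Finset.range k, rvec p v
      = (∑ v ∈ Finset.range k, if p.1 = v then (1:ℝ) else 0)
        - ∑ v ∈ Finset.range k, if p.2 = v then (1:ℝ) else 0 := by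
        rw [← Finset.sum_sub_distrib]; exact Finset.sum_congr rfl fun v _ => rvec_apply p v
    _ = _ := by rw [this, this]

lemma sum_rep_psum (F : Finset (ℕ × ℕ)) (c : ℕ × ℕ → ℝ) (hF : ∀ p ∈ F, p.1 < p.2) (k : ℕ) :
    ∑ v ∈ Finset.range k, (∑ p ∈ F, c p • rvec p) v
      = ∑ p ∈ F.filter (fun p => p.1 < k ∧ k ≤ p.2), c p := by
  calc ∑ v ∈ Finset.range k, (∑ p ∈ F, c p • rvec p) v
      = ∑ p ∈ F, ∑ v ∈ Finset.range k, c p * rvec p v := by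
        rw [Finset.sum_comm]
        exact Finset.sum_congr rfl fun v _ => by rw [Finset.sum_apply]; rfl
    _ = ∑ p ∈ F, (if p.1 < k ∧ k ≤ p.2 then c p else 0) := by
        refine Finset.sum_congr rfl fun p hp => ?_
        rw [← Finset.mul_sum, sum_rvec_range]
        have hlt := hF p hp
        by_cases h1 : p.1 < k <;> by_cases h2 : p.2 < k
        · rw [if_pos h1, if_pos h2, if_neg (by omega)]; ring
        · rw [if_pos h1, if_neg h2, if_pos ⟨h1, not_lt.1 h2⟩]; ring
        · exact ((h1 (lt_trans hlt h2)).elim)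
        · rw [if_neg h1, if_neg h2, if_neg (by omega)]; ring
    _ = _ := by rw [Finset.sum_filter]

lemma noncrossing_mono {E F : Finset (ℕ × ℕ)} (h : E ⊆ F) (hF : Noncrossing F) :
    Noncrossing E := by
  rintro ⟨i, j, k, l, h1, h2, h3, h4, h5⟩
  exact hF ⟨i, j, k, l, h1, h2, h3, h h4, h h5⟩

lemma alternating_mono {E F : Finset (ℕ × ℕ)} (h : E ⊆ F) (hF : Alternating F) :
    Alternating E := by
  rintro ⟨i, j, k, h1, h2, h3, h4⟩
  exact hF ⟨i, j, k, h1, h2, h h3, h h4⟩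

/-! ### Representations -/

structure IsRep (F : Finset (ℕ × ℕ)) (c : ℕ × ℕ → ℝ) (x : ℕ → ℝ) : Prop where
  pos : ∀ p ∈ F, 0 < c p
  inc : ∀ p ∈ F, p.1 < p.2
  nc : Noncrossing F
  alt : Alternating F
  sum : ∑ p ∈ F, c p • rvec p = x

namespace IsRep

variable {F : Finset (ℕ × ℕ)} {c : ℕ × ℕ → ℝ} {x : ℕ → ℝ}

lemma filter_snd_eq_fst_empty (h : IsRep F c x) {p : ℕ × ℕ} (hp : p ∈ F) :
    F.filter (fun q => q.2 = p.1) = ∅ := by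
  rw [Finset.filter_eq_empty_iff]
  intro q hq hq2
  have hq1 : q.1 < q.2 := h.inc q hq
  refine h.alt ⟨q.1, p.1, p.2, hq2 ▸ hq1, h.inc p hp, ?_, ?_⟩
  · have : q = (q.1, p.1) := by rw [← hq2]
    exact this ▸ hq
  · exact (show p = (p.1, p.2) from rfl) ▸ hp

lemma pos_fst (h : IsRep F c x) {p : ℕ × ℕ} (hp : p ∈ F) : 0 < x p.1 := by
  have := sum_rep_apply F c p.1
  rw [h.sum, h.filter_snd_eq_fst_empty hp] at this
  rw [this]
  simp only [Finset.sum_empty, sub_zero]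
  have hmem : p ∈ F.filter (fun q => q.1 = p.1) := Finset.mem_filter.2 ⟨hp, rfl⟩
  calc (0:ℝ) < c p := h.pos p hp
    _ ≤ _ := Finset.single_le_sum (fun q hq => (h.pos q (Finset.mem_filter.1 hq).1).le) hmem

lemma filter_fst_eq_snd_empty (h : IsRep F c x) {p : ℕ × ℕ} (hp : p ∈ F) :
    F.filter (fun q => q.1 = p.2) = ∅ := by
  rw [Finset.filter_eq_empty_iff]
  intro q hq hq1
  have hq2 : q.1 < q.2 := h.inc q hq
  refine h.alt ⟨p.1, p.2, q.2, h.inc p hp, hq1 ▸ hq2, ?_, ?_⟩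
  · exact (show p = (p.1, p.2) from rfl) ▸ hp
  · have : q = (p.2, q.2) := by rw [← hq1]
    exact this ▸ hq

lemma neg_snd (h : IsRep F c x) {p : ℕ × ℕ} (hp : p ∈ F) : x p.2 < 0 := by
  have := sum_rep_apply F c p.2
  rw [h.sum, h.filter_fst_eq_snd_empty hp] at this
  rw [this]
  simp only [Finset.sum_empty, zero_sub, neg_neg, neg_lt, neg_zero]
  have hmem : p ∈ F.filter (fun q => q.2 = p.2) := Finset.mem_filter.2 ⟨hp, rfl⟩
  calc (0:ℝ) < c p := h.pos p hp
    _ ≤ _ := Finset.single_le_sum (fun q hq => (h.pos q (Finset.mem_filter.1 hq).1).le) hmem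

lemma empty_of_zero (h : IsRep F c 0) : F = ∅ := by
  rw [Finset.eq_empty_iff_forall_notMem]
  intro p hp
  exact absurd (h.pos_fst hp) (by simp)

lemma zero_of_empty (h : IsRep F c x) (hF : F = ∅) : x = 0 := by
  rw [← h.sum, hF]; simp

lemma psum_nonneg (h : IsRep F c x) (k : ℕ) : 0 ≤ ∑ v ∈ Finset.range k, x v := by
  rw [← h.sum, sum_rep_psum F c h.inc k]
  exact Finset.sum_nonneg fun p hp => (h.pos p (Finset.mem_filter.1 hp).1).le

end IsRep

lemma IsRep.forced {F : Finset (ℕ × ℕ)} {c : ℕ × ℕ → ℝ} {x : ℕ → ℝ}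
    (h : IsRep F c x) (i j : ℕ)
    (hj : x j < 0) (hjmin : ∀ v, v < j → 0 ≤ x v)
    (hi : 0 < x i) (hij : i < j) (himax : ∀ v, i < v → v < j → x v ≤ 0) :
    (i, j) ∈ F ∧ c (i, j) = min (x i) (-x j) := by
  -- x i is the sum over edges with left endpoint i
  have hxi : x i = ∑ q ∈ F.filter (fun q => q.1 = i), c q := by
    have := sum_rep_apply F c i
    rw [h.sum] at this
    have hemp : F.filter (fun q => q.2 = i) = ∅ := by
      rw [Finset.filter_eq_empty_iff]
      intro q hq hq2
      exact absurd (hq2 ▸ h.neg_snd hq) (not_lt.2 hi.le)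
    rw [hemp] at this; simpa using this
  have hxj : -x j = ∑ q ∈ F.filter (fun q => q.2 = j), c q := by
    have := sum_rep_apply F c j
    rw [h.sum] at this
    have hemp : F.filter (fun q => q.1 = j) = ∅ := by
      rw [Finset.filter_eq_empty_iff]
      intro q hq hq1
      exact absurd (hq1 ▸ h.pos_fst hq) (not_lt.2 hj.le)
    rw [hemp] at this
    simp only [Finset.sum_empty, zero_sub] at this
    linarith
  -- existence of an edge out of i
  have hPne : ∃ p ∈ F, p.1 = i := by
    by_contra hc
    push_neg at hc
    have : F.filter (fun q => q.1 = i) = ∅ := Finset.filter_eq_empty_iff.2 hc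
    rw [this] at hxi; simp at hxi; exact absurd hxi (ne_of_gt hi)
  obtain ⟨p, hpF, hp1⟩ := hPne
  have hp2 : j ≤ p.2 := not_lt.1 fun hlt => absurd (hjmin p.2 hlt) (not_le.2 (h.neg_snd hpF))
  have hQne : ∃ q ∈ F, q.2 = j := by
    by_contra hc
    push_neg at hc
    have : F.filter (fun q => q.2 = j) = ∅ := Finset.filter_eq_empty_iff.2 hc
    rw [this] at hxj; simp at hxj; linarith
  obtain ⟨q, hqF, hq2⟩ := hQne
  have hq1 : q.1 ≤ i := by
    by_contra hc
    push_neg at hc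
    exact absurd (himax q.1 hc (hq2 ▸ h.inc q hqF)) (not_le.2 (h.pos_fst hqF))
  -- (i,j) ∈ F
  have hmem : (i, j) ∈ F := by
    rcases eq_or_lt_of_le hp2 with hpe | hpl
    · have : p = (i, j) := Prod.ext hp1 hpe.symm
      exact this ▸ hpF
    · rcases eq_or_lt_of_le hq1 with hqe | hql
      · have : q = (i, j) := Prod.ext hqe hq2
        exact this ▸ hqF
      · exfalso
        refine h.nc ⟨q.1, i, j, p.2, hql, hij, hpl, ?_, ?_⟩
        · have : q = (q.1, j) := Prod.ext rfl hq2
          exact this ▸ hqF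
        · have : p = (i, p.2) := Prod.ext hp1 rfl
          exact this ▸ hpF
  -- the value of c (i,j)
  by_cases hall : ∀ r ∈ F, r.1 = i → r = (i, j)
  · have hfilt : F.filter (fun q => q.1 = i) = {(i, j)} := by
      apply Finset.eq_singleton_iff_unique_mem.2
      exact ⟨Finset.mem_filter.2 ⟨hmem, rfl⟩,
        fun r hr => hall r (Finset.mem_filter.1 hr).1 (Finset.mem_filter.1 hr).2⟩
    have hxi' : x i = c (i, j) := by rw [hxi, hfilt, Finset.sum_singleton]
    have hle : c (i, j) ≤ -x j := by
      rw [hxj]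
      exact Finset.single_le_sum (fun r hr => (h.pos r (Finset.mem_filter.1 hr).1).le)
        (Finset.mem_filter.2 ⟨hmem, rfl⟩)
    exact ⟨hmem, by rw [min_eq_left (hxi' ▸ hle), hxi']⟩
  · push_neg at hall
    obtain ⟨r, hrF, hr1, hrne⟩ := hall
    have hr2 : j < r.2 := by
      rcases eq_or_lt_of_le (not_lt.1 fun hlt =>
        absurd (hjmin r.2 hlt) (not_le.2 (h.neg_snd hrF))) with he | hl
      · exact absurd (Prod.ext hr1 he.symm) hrne
      · exact hl
    have hfilt : F.filter (fun q => q.2 = j) = {(i, j)} := by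
      apply Finset.eq_singleton_iff_unique_mem.2
      refine ⟨Finset.mem_filter.2 ⟨hmem, rfl⟩, fun q' hq' => ?_⟩
      obtain ⟨hq'F, hq'2⟩ := Finset.mem_filter.1 hq'
      have hq'1 : q'.1 ≤ i := by
        by_contra hc
        push_neg at hc
        exact absurd (himax q'.1 hc (hq'2 ▸ h.inc q' hq'F)) (not_le.2 (h.pos_fst hq'F))
      rcases eq_or_lt_of_le hq'1 with he | hl
      · exact Prod.ext he hq'2
      · exfalso
        refine h.nc ⟨q'.1, i, j, r.2, hl, hij, hr2, ?_, ?_⟩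
        · have : q' = (q'.1, j) := Prod.ext rfl hq'2
          exact this ▸ hq'F
        · have : r = (i, r.2) := Prod.ext hr1 rfl
          exact this ▸ hrF
    have hxj' : -x j = c (i, j) := by rw [hxj, hfilt, Finset.sum_singleton]
    have hle : c (i, j) ≤ x i := by
      rw [hxi]
      exact Finset.single_le_sum (fun r' hr' => (h.pos r' (Finset.mem_filter.1 hr').1).le)
        (Finset.mem_filter.2 ⟨hmem, rfl⟩)
    exact ⟨hmem, by rw [min_eq_right (hxj' ▸ hle), ← hxj']⟩

theorem rep_unique_aux : ∀ (N : ℕ) (F : Finset (ℕ × ℕ)) (c : ℕ × ℕ → ℝ)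
    (F' : Finset (ℕ × ℕ)) (c' : ℕ × ℕ → ℝ) (x : ℕ → ℝ), F.card ≤ N →
    IsRep F c x → IsRep F' c' x → F = F' ∧ ∀ p ∈ F, c p = c' p := by
  intro N
  induction N with
  | zero =>
    intro F c F' c' x hcard h h'
    have hF : F = ∅ := Finset.card_eq_zero.1 (Nat.le_zero.1 hcard)
    have hx : x = 0 := h.zero_of_empty hF
    have hF' : F' = ∅ := (hx ▸ h').empty_of_zero
    exact ⟨hF.trans hF'.symm, fun p hp => by simp [hF] at hp⟩
  | succ N ih =>
    intro F c F' c' x hcard h h'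
    by_cases hF : F = ∅
    · have hx : x = 0 := h.zero_of_empty hF
      have hF' : F' = ∅ := (hx ▸ h').empty_of_zero
      exact ⟨hF.trans hF'.symm, fun p hp => by simp [hF] at hp⟩
    · obtain ⟨p₀, hp₀⟩ := Finset.nonempty_iff_ne_empty.2 hF
      classical
      have hex : ∃ v, x v < 0 := ⟨p₀.2, h.neg_snd hp₀⟩
      set j := Nat.find hex with hjdef
      have hj : x j < 0 := Nat.find_spec hex
      have hjmin : ∀ v, v < j → 0 ≤ x v := fun v hv => not_lt.1 (Nat.find_min hex hv)
      -- find a positive coordinate below j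
      have hpos : ∃ m, m < j ∧ 0 < x m := by
        by_contra hc
        push_neg at hc
        have hsum : ∑ v ∈ Finset.range j, x v ≤ 0 :=
          Finset.sum_nonpos fun v hv => hc v (Finset.mem_range.1 hv)
        have := h.psum_nonneg (j + 1)
        rw [Finset.sum_range_succ] at this
        linarith
      obtain ⟨m, hmj, hm⟩ := hpos
      have hj1 : 1 ≤ j := Nat.one_le_iff_ne_zero.2 fun h0 => by omega
      set i := Nat.findGreatest (fun v => 0 < x v) (j - 1) with hidef
      have hi : 0 < x i := Nat.findGreatest_spec (P := fun v => 0 < x v) (show m ≤ j - 1 by omega) hm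
      have hij : i < j := lt_of_le_of_lt (Nat.findGreatest_le _) (by omega)
      have himax : ∀ v, i < v → v < j → x v ≤ 0 := fun v hv1 hv2 =>
        not_lt.1 (Nat.findGreatest_is_greatest hv1 (by omega))
      obtain ⟨hmem, hval⟩ := h.forced i j hj hjmin hi hij himax
      obtain ⟨hmem', hval'⟩ := h'.forced i j hj hjmin hi hij himax
      set μ := min (x i) (-x j) with hμdef
      have herase : ∀ (G : Finset (ℕ × ℕ)) (d : ℕ × ℕ → ℝ), IsRep G d x → (i,j) ∈ G →
          d (i,j) = μ → IsRep (G.erase (i, j)) d (x - μ • rvec (i, j)) := by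
        intro G d hG hGm hGv
        refine ⟨fun p hp => hG.pos p (Finset.mem_of_mem_erase hp),
          fun p hp => hG.inc p (Finset.mem_of_mem_erase hp),
          noncrossing_mono (Finset.erase_subset _ _) hG.nc,
          alternating_mono (Finset.erase_subset _ _) hG.alt, ?_⟩
        have := Finset.sum_erase_add G (fun p => d p • rvec p) hGm
        rw [← hGv, ← hG.sum]
        rw [← this]
        abel
      have h1 := herase F c h hmem hval
      have h2 := herase F' c' h' hmem' hval'
      have hcard2 : (F.erase (i, j)).card ≤ N := by
        rw [Finset.card_erase_of_mem hmem]
        omega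
      obtain ⟨hFeq, hceq⟩ := ih _ c _ c' _ hcard2 h1 h2
      constructor
      · rw [← Finset.insert_erase hmem, ← Finset.insert_erase hmem', hFeq]
      · intro p hp
        by_cases hpij : p = (i, j)
        · rw [hpij, hval, hval']
        · exact hceq p (Finset.mem_erase.2 ⟨hpij, hp⟩)

theorem rep_unique {F F' : Finset (ℕ × ℕ)} {c c' : ℕ × ℕ → ℝ} {x : ℕ → ℝ}
    (h : IsRep F c x) (h' : IsRep F' c' x) : F = F' ∧ ∀ p ∈ F, c p = c' p :=
  rep_unique_aux F.card F c F' c' x le_rfl h h'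

lemma rvec_other {p : ℕ × ℕ} {v : ℕ} (h1 : p.1 ≠ v) (h2 : p.2 ≠ v) : rvec p v = 0 := by
  rw [rvec_apply, if_neg h1, if_neg h2]; ring

theorem rep_exists : ∀ (N n : ℕ) (x : ℕ → ℝ),
    ((Finset.range n).filter (fun v => x v ≠ 0)).card ≤ N →
    (∀ v, n ≤ v → x v = 0) →
    (∑ v ∈ Finset.range n, x v = 0) →
    (∀ k, 0 ≤ ∑ v ∈ Finset.range k, x v) →
    ∃ F c, IsRep F c x ∧ (∀ p ∈ F, p.2 < n) ∧
      ∑ p ∈ F, c p ≤ ∑ v ∈ Finset.range n, max (x v) 0 := by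
  intro N
  induction N with
  | zero =>
    intro n x hcard h1 h2 h3
    have hx : x = 0 := by
      funext v
      rcases lt_or_ge v n with hv | hv
      · by_contra hne
        have : v ∈ (Finset.range n).filter (fun v => x v ≠ 0) :=
          Finset.mem_filter.2 ⟨Finset.mem_range.2 hv, hne⟩
        have := Finset.card_pos.2 ⟨v, this⟩
        omega
      · exact h1 v hv
    refine ⟨∅, 0, ⟨by simp, by simp, ?_, ?_, by simp [hx]⟩, by simp, ?_⟩
    · rintro ⟨a, b, k, l, _, _, _, hmem, _⟩; simp at hmem
    · rintro ⟨a, b, k, _, _, hmem, _⟩; simp at hmem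
    · rw [Finset.sum_empty]
      exact Finset.sum_nonneg fun v _ => le_max_right _ _
  | succ N ih =>
    intro n x hcard h1 h2 h3
    classical
    by_cases hx : ∀ v, x v = 0
    · exact (ih n x (by simp [Finset.filter_eq_empty_iff.2 fun v _ => not_not.2 (hx v)])
        h1 h2 h3)
    · push_neg at hx
      -- there is a negative coordinate
      have hex : ∃ v, x v < 0 := by
        by_contra hc
        push_neg at hc
        obtain ⟨v₀, hv₀⟩ := hx
        have hvn : v₀ < n := by
          by_contra hge; exact hv₀ (h1 v₀ (not_lt.1 hge))
        have : ∀ v ∈ Finset.range n, x v = 0 := by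
          intro v hv
          have := Finset.sum_eq_zero_iff_of_nonneg (fun w _ => hc w) |>.1 h2 v hv
          exact this
        exact hv₀ (this v₀ (Finset.mem_range.2 hvn))
      set j := Nat.find hex with hjdef
      have hj : x j < 0 := Nat.find_spec hex
      have hjmin : ∀ v, v < j → 0 ≤ x v := fun v hv => not_lt.1 (Nat.find_min hex hv)
      have hjn : j < n := by
        by_contra hge
        exact absurd (h1 j (not_lt.1 hge)) (ne_of_lt hj)
      have hpos : ∃ m, m < j ∧ 0 < x m := by
        by_contra hc
        push_neg at hc
        have hsum : ∑ v ∈ Finset.range j, x v ≤ 0 :=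
          Finset.sum_nonpos fun v hv => hc v (Finset.mem_range.1 hv)
        have := h3 (j + 1)
        rw [Finset.sum_range_succ] at this
        linarith
      obtain ⟨m, hmj, hm⟩ := hpos
      have hj1 : 1 ≤ j := Nat.one_le_iff_ne_zero.2 fun h0 => by omega
      set i := Nat.findGreatest (fun v => 0 < x v) (j - 1) with hidef
      have hi : 0 < x i := Nat.findGreatest_spec (P := fun v => 0 < x v) (show m ≤ j - 1 by omega) hm
      have hij : i < j := lt_of_le_of_lt (Nat.findGreatest_le _) (by omega)
      have himax : ∀ v, i < v → v < j → x v ≤ 0 := fun v hv1 hv2 =>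
        not_lt.1 (Nat.findGreatest_is_greatest hv1 (by omega))
      have hzero : ∀ v, i < v → v < j → x v = 0 := fun v hv1 hv2 =>
        le_antisymm (himax v hv1 hv2) (hjmin v hv2)
      set μ := min (x i) (-x j) with hμdef
      have hμpos : 0 < μ := lt_min hi (by linarith)
      have hμi : μ ≤ x i := min_le_left _ _
      have hμj : μ ≤ -x j := min_le_right _ _
      set x' := x - μ • rvec (i, j) with hx'def
      have hx'i : x' i = x i - μ := by
        simp only [hx'def, Pi.sub_apply, Pi.smul_apply, smul_eq_mul]
        rw [rvec_fst (i, j) (by exact hij.ne)]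
        ring
      have hx'j : x' j = x j + μ := by
        simp only [hx'def, Pi.sub_apply, Pi.smul_apply, smul_eq_mul]
        rw [rvec_snd (i, j) (by exact hij.ne)]
        ring
      have hx'other : ∀ v, v ≠ i → v ≠ j → x' v = x v := by
        intro v hvi hvj
        simp only [hx'def, Pi.sub_apply, Pi.smul_apply, smul_eq_mul]
        rw [rvec_other (p := (i, j)) (Ne.symm hvi) (Ne.symm hvj)]
        ring
      -- hypotheses for x'
      have h1' : ∀ v, n ≤ v → x' v = 0 := by
        intro v hv
        rw [hx'other v (by omega) (by omega), h1 v hv]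
      have hpsum' : ∀ k, ∑ v ∈ Finset.range k, x' v
          = (∑ v ∈ Finset.range k, x v)
            - μ * ((if i < k then (1:ℝ) else 0) - (if j < k then (1:ℝ) else 0)) := by
        intro k
        simp only [hx'def, Pi.sub_apply, Pi.smul_apply, smul_eq_mul, Finset.sum_sub_distrib,
          ← Finset.mul_sum]
        rw [sum_rvec_range]
      have h2' : ∑ v ∈ Finset.range n, x' v = 0 := by
        rw [hpsum' n, h2, if_pos (by omega), if_pos hjn]
        ring
      have h3' : ∀ k, 0 ≤ ∑ v ∈ Finset.range k, x' v := by
        intro k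
        rw [hpsum' k]
        by_cases hik : i < k
        · by_cases hjk : j < k
          · rw [if_pos hik, if_pos hjk]
            have := h3 k; linarith
          · rw [if_pos hik, if_neg hjk]
            have hxk : x i ≤ ∑ v ∈ Finset.range k, x v :=
              Finset.single_le_sum (fun v hv => hjmin v (by
                have := Finset.mem_range.1 hv; omega)) (Finset.mem_range.2 hik)
            linarith
        · rw [if_neg hik, if_neg (by omega)]
          have := h3 k; linarith
      have hcard' : ((Finset.range n).filter (fun v => x' v ≠ 0)).card ≤ N := by
        have hsub : (Finset.range n).filter (fun v => x' v ≠ 0)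
            ⊂ (Finset.range n).filter (fun v => x v ≠ 0) := by
          rw [Finset.ssubset_iff_of_subset]
          · rcases min_cases (x i) (-x j) with ⟨hmin, _⟩ | ⟨hmin, _⟩
            · refine ⟨i, Finset.mem_filter.2 ⟨Finset.mem_range.2 (by omega), ne_of_gt hi⟩, ?_⟩
              simp only [Finset.mem_filter, not_and, not_not]
              intro _
              rw [hx'i, hμdef, hmin]; ring
            · refine ⟨j, Finset.mem_filter.2 ⟨Finset.mem_range.2 hjn, ne_of_lt hj⟩, ?_⟩
              simp only [Finset.mem_filter, not_and, not_not]
              intro _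
              rw [hx'j, hμdef, hmin]; ring
          · intro v hv
            obtain ⟨hvr, hvne⟩ := Finset.mem_filter.1 hv
            refine Finset.mem_filter.2 ⟨hvr, ?_⟩
            by_cases hvi : v = i
            · subst hvi; exact ne_of_gt hi
            · by_cases hvj : v = j
              · subst hvj; exact ne_of_lt hj
              · rwa [hx'other v hvi hvj] at hvne
        have := Finset.card_lt_card hsub
        omega
      obtain ⟨F', c', hrep', hbd', htot'⟩ := ih n x' hcard' h1' h2' h3'
      -- x' signs
      have hx'negmem : ∀ v, x' v < 0 → j ≤ v := by
        intro v hv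
        by_cases hvi : v = i
        · rw [hvi, hx'i] at hv; linarith
        · by_cases hvj : v = j
          · omega
          · rw [hx'other v hvi hvj] at hv
            exact not_lt.1 fun hlt => absurd (hjmin v hlt) (not_le.2 hv)
      have hx'posmem : ∀ v, 0 < x' v → v ≤ i ∨ j < v := by
        intro v hv
        by_cases hvi : v = i
        · omega
        · by_cases hvj : v = j
          · rw [hvj, hx'j] at hv; exfalso; linarith
          · rw [hx'other v hvi hvj] at hv
            by_contra hc
            push_neg at hc
            obtain ⟨hc1, hc2⟩ := hc
            have : i < v := by omega
            exact absurd (hzero v this (lt_of_le_of_ne hc2 hvj)) (ne_of_gt hv)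
      have hijF' : (i, j) ∉ F' := by
        intro hmem
        have hpos := hrep'.pos_fst hmem
        have hneg := hrep'.neg_snd hmem
        simp only at hpos hneg
        rw [hx'i] at hpos
        rw [hx'j] at hneg
        rcases min_cases (x i) (-x j) with ⟨hmin, _⟩ | ⟨hmin, _⟩ <;>
          rw [hμdef, hmin] at hpos hneg <;> linarith
      set F := insert (i, j) F' with hFdef
      set c'' := Function.update c' (i, j) μ with hc''def
      have hcv : ∀ p ∈ F', c'' p = c' p := fun p hp =>
        Function.update_of_ne (fun he => hijF' (by rw [← he]; exact hp)) _ _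
      have hrep : IsRep F c'' x := by
        refine ⟨?_, ?_, ?_, ?_, ?_⟩
        · intro p hp
          rcases Finset.mem_insert.1 hp with he | hp'
          · rw [he, hc''def, Function.update_self]; exact hμpos
          · rw [hcv p hp']; exact hrep'.pos p hp'
        · intro p hp
          rcases Finset.mem_insert.1 hp with he | hp'
          · rw [he]; exact hij
          · exact hrep'.inc p hp'
        · rintro ⟨a, b, k, l, hab, hbk, hkl, hm1, hm2⟩
          rcases Finset.mem_insert.1 hm1 with he1 | hm1' <;>
            rcases Finset.mem_insert.1 hm2 with he2 | hm2'
          · have ha : a = i := by have := congrArg Prod.fst he1; simpa using this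
            have hb : b = i := by have := congrArg Prod.fst he2; simpa using this
            omega
          · -- (a,k) = (i,j), (b,l) ∈ F', i < b < j
            have ha : a = i := by have := congrArg Prod.fst he1; simpa using this
            have hk : k = j := by have := congrArg Prod.snd he1; simpa using this
            have hposb := hrep'.pos_fst hm2'
            simp only at hposb
            rcases hx'posmem b hposb with hle | hgt <;> omega
          · -- (b,l) = (i,j), (a,k) ∈ F', a < i < k < j
            have hb : b = i := by have := congrArg Prod.fst he2; simpa using this
            have hl : l = j := by have := congrArg Prod.snd he2; simpa using this
            have hnegk := hrep'.neg_snd hm1'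
            simp only at hnegk
            have := hx'negmem k hnegk
            omega
          · exact hrep'.nc ⟨a, b, k, l, hab, hbk, hkl, hm1', hm2'⟩
        · rintro ⟨a, b, k, hab, hbk, hm1, hm2⟩
          rcases Finset.mem_insert.1 hm1 with he1 | hm1' <;>
            rcases Finset.mem_insert.1 hm2 with he2 | hm2'
          · have ha : a = i := by have := congrArg Prod.fst he1; simpa using this
            have hb : b = i := by have := congrArg Prod.fst he2; simpa using this
            omega
          · -- (a,b) = (i,j), (b,k) = (j,k) ∈ F'
            have hb : b = j := by have := congrArg Prod.snd he1; simpa using this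
            have hposb := hrep'.pos_fst hm2'
            simp only at hposb
            rw [hb, hx'j] at hposb
            linarith
          · -- (b,k) = (i,j); (a,b) = (a,i) ∈ F'
            have hb : b = i := by have := congrArg Prod.fst he2; simpa using this
            have hnegb := hrep'.neg_snd hm1'
            simp only at hnegb
            rw [hb, hx'i] at hnegb
            linarith
          · exact hrep'.alt ⟨a, b, k, hab, hbk, hm1', hm2'⟩
        · rw [hFdef, Finset.sum_insert hijF']
          rw [Finset.sum_congr rfl (fun p hp => by rw [hcv p hp])]
          rw [hrep'.sum, hc''def, Function.update_self]
          rw [hx'def]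
          abel
      refine ⟨F, c'', hrep, ?_, ?_⟩
      · intro p hp
        rcases Finset.mem_insert.1 hp with he | hp'
        · rw [he]; exact hjn
        · exact hbd' p hp'
      · -- total mass bound
        have hmaxeq : ∑ v ∈ Finset.range n, max (x' v) 0
            = (∑ v ∈ Finset.range n, max (x v) 0) - μ := by
          have hin : i ∈ Finset.range n := Finset.mem_range.2 (by omega)
          rw [← Finset.add_sum_erase _ _ hin, ← Finset.add_sum_erase _ (fun v => max (x v) 0) hin]
          have hrest : ∑ v ∈ (Finset.range n).erase i, max (x' v) 0
              = ∑ v ∈ (Finset.range n).erase i, max (x v) 0 := by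
            refine Finset.sum_congr rfl fun v hv => ?_
            have hvi : v ≠ i := (Finset.mem_erase.1 hv).1
            by_cases hvj : v = j
            · rw [hvj, hx'j, max_eq_right (by linarith), max_eq_right (by linarith)]
            · rw [hx'other v hvi hvj]
          rw [hrest]
          have h1m : max (x' i) 0 = x i - μ := by rw [hx'i]; exact max_eq_left (by linarith)
          have h2m : max (x i) 0 = x i := max_eq_left hi.le
          rw [h1m, h2m]; ring
        rw [hFdef, Finset.sum_insert hijF']
        rw [Finset.sum_congr rfl (fun p hp => by rw [hcv p hp])]
        rw [hc''def, Function.update_self]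
        rw [hmaxeq] at htot'
        linarith

/-! ### Graph lemmas -/

lemma graphOf_adj {E : Finset (ℕ × ℕ)} {u v : ℕ} :
    (graphOf E).Adj u v ↔ ((u, v) ∈ E ∨ (v, u) ∈ E) ∧ u ≠ v := by
  rw [graphOf, SimpleGraph.fromEdgeSet_adj]
  constructor
  · rintro ⟨hmem, hne⟩
    refine ⟨?_, hne⟩
    rw [Finset.coe_image, Set.mem_image] at hmem
    obtain ⟨p, hp, hpe⟩ := hmem
    rw [Sym2.eq_iff] at hpe
    rcases hpe with ⟨h1, h2⟩ | ⟨h1, h2⟩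
    · left; have : p = (u, v) := Prod.ext h1 h2; exact this ▸ hp
    · right; have : p = (v, u) := Prod.ext h1 h2; exact this ▸ hp
  · rintro ⟨hmem, hne⟩
    refine ⟨?_, hne⟩
    rw [Finset.coe_image, Set.mem_image]
    rcases hmem with h | h
    · exact ⟨(u, v), h, rfl⟩
    · exact ⟨(v, u), h, Sym2.eq_swap⟩

lemma cycle_second_edge {G : SimpleGraph ℕ} {u : ℕ} (c : G.Walk u u) (hc : c.IsCycle) :
    ∃ y z, y ≠ z ∧ s(u, y) ∈ c.edges ∧ s(u, z) ∈ c.edges := by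
  cases c with
  | nil => exact absurd rfl hc.ne_nil
  | @cons _ b _ h p =>
    have hnodup := hc.edges_nodup
    rw [SimpleGraph.Walk.edges_cons] at hnodup
    have hb : s(u, b) ∈ (SimpleGraph.Walk.cons h p).edges := by
      rw [SimpleGraph.Walk.edges_cons]; exact List.mem_cons_self
    cases hrev : p.reverse with
    | nil =>
      exfalso
      have : p = SimpleGraph.Walk.nil.reverse := by
        rw [← hrev, SimpleGraph.Walk.reverse_reverse]
      rw [SimpleGraph.Walk.reverse_nil] at this
      subst this
      exact h.ne rfl
    | @cons _ y _ h2 q =>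
      have hy : s(u, y) ∈ p.edges := by
        have : s(u, y) ∈ p.reverse.edges := by
          rw [hrev, SimpleGraph.Walk.edges_cons]; exact List.mem_cons_self
        rwa [SimpleGraph.Walk.edges_reverse, List.mem_reverse] at this
      refine ⟨b, y, ?_, hb, ?_⟩
      · intro hbe
        subst hbe
        exact (List.nodup_cons.1 hnodup).1 hy
      · rw [SimpleGraph.Walk.edges_cons]
        exact List.mem_cons_of_mem _ hy

lemma cycle_two_edges {G : SimpleGraph ℕ} {v : ℕ} (c : G.Walk v v) (hc : c.IsCycle)
    {a b : ℕ} (he : s(a, b) ∈ c.edges) :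
    ∃ z, z ≠ a ∧ s(b, z) ∈ c.edges := by
  have hb : b ∈ c.support := c.snd_mem_support_of_mem_edges he
  have hc' := hc.rotate hb
  obtain ⟨y, z, hyz, hy, hz⟩ := cycle_second_edge (c.rotate b hb) hc'
  have hmem : ∀ w, s(b, w) ∈ (c.rotate b hb).edges → s(b, w) ∈ c.edges := fun w hw =>
    ((c.rotate_edges b hb).mem_iff).1 hw
  by_cases hya : y = a
  · exact ⟨z, fun hze => hyz (by rw [hya, hze]), hmem z hz⟩
  · exact ⟨y, hya, hmem y hy⟩

lemma acyclic_of_nc_alt {E : Finset (ℕ × ℕ)} (hinc : ∀ p ∈ E, p.1 < p.2)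
    (hnc : Noncrossing E) (halt : Alternating E) : (graphOf E).IsAcyclic := by
  intro v c hc
  -- the set of edges of E appearing in the cycle
  set s : Finset (ℕ × ℕ) := E.filter (fun p => s(p.1, p.2) ∈ c.edges) with hsdef
  have hedge_mem : ∀ {y z : ℕ}, s(y, z) ∈ c.edges →
      ((y, z) ∈ E ∧ y < z) ∨ ((z, y) ∈ E ∧ z < y) := by
    intro y z hyz
    have hadj : (graphOf E).Adj y z := c.adj_of_mem_edges hyz
    rcases (graphOf_adj.1 hadj).1 with h | h
    · exact Or.inl ⟨h, hinc _ h⟩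
    · exact Or.inr ⟨h, hinc _ h⟩
  have hsne : s.Nonempty := by
    have hlen := hc.three_le_length
    have : c.edges ≠ [] := by
      intro hnil
      have := c.length_edges
      rw [hnil] at this
      simp at this
      omega
    obtain ⟨e, he⟩ := List.exists_mem_of_ne_nil _ this
    induction e with
    | h y z =>
      rcases hedge_mem he with ⟨h1, _⟩ | ⟨h1, _⟩
      · exact ⟨(y, z), Finset.mem_filter.2 ⟨h1, he⟩⟩
      · exact ⟨(z, y), Finset.mem_filter.2 ⟨h1, by rwa [Sym2.eq_swap]⟩⟩
  obtain ⟨p₀, hp₀s, hp₀min⟩ := Finset.exists_min_image s (fun p => p.2 - p.1) hsne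
  obtain ⟨hp₀E, hp₀c⟩ := Finset.mem_filter.1 hp₀s
  set a := p₀.1
  set b := p₀.2
  have hab : a < b := hinc p₀ hp₀E
  -- second edge at b
  obtain ⟨z, hza, hz⟩ := cycle_two_edges c hc hp₀c
  rcases hedge_mem hz with ⟨h1, hlt⟩ | ⟨h1, hlt⟩
  · exact halt ⟨a, b, z, hab, hlt, (show p₀ = (a, b) from rfl) ▸ hp₀E, h1⟩
  · -- (z, b) ∈ E with z < b, z ≠ a, so by minimality z < a
    have hzs : (z, b) ∈ s := Finset.mem_filter.2 ⟨h1, by rwa [Sym2.eq_swap]⟩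
    have hmin := hp₀min (z, b) hzs
    simp only at hmin
    have hza' : z < a := by omega
    -- second edge at a
    obtain ⟨w, hwb, hw⟩ := cycle_two_edges c hc (by rwa [Sym2.eq_swap] at hp₀c : s(b, a) ∈ c.edges)
    rcases hedge_mem hw with ⟨h2, hlt2⟩ | ⟨h2, hlt2⟩
    · -- (a, w) ∈ E with a < w, w ≠ b
      have hws : (a, w) ∈ s := Finset.mem_filter.2 ⟨h2, hw⟩
      have hmin2 := hp₀min (a, w) hws
      simp only at hmin2
      have hwb' : b < w := by omega
      exact hnc ⟨z, a, b, w, hza', hab, hwb', h1, h2⟩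
    · exact halt ⟨w, a, b, hlt2, hab, h2, (show p₀ = (a, b) from rfl) ▸ hp₀E⟩

lemma desc {E : Finset (ℕ × ℕ)} (hinc : ∀ p ∈ E, p.1 < p.2)
    (hnc : Noncrossing E) (halt : Alternating E) :
    ∀ w : ℕ, ∃ a, a ≤ w ∧ (∀ q, (q, a) ∉ E) ∧
      (∀ p ∈ E, ¬(p.1 < a ∧ a < p.2 ∧ p.2 ≤ w)) ∧
      (∀ p ∈ E, ¬(a < p.1 ∧ p.1 ≤ w ∧ w < p.2)) := by
  intro w
  induction w using Nat.strong_induction_on with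
  | _ w ih =>
  classical
  by_cases hw : ∃ q, (q, w) ∈ E
  · set s := E.filter (fun p => p.2 = w) with hsdef
    have hsne : s.Nonempty := by
      obtain ⟨q, hq⟩ := hw; exact ⟨(q, w), Finset.mem_filter.2 ⟨hq, rfl⟩⟩
    obtain ⟨p₁, hp₁s, hp₁min⟩ := Finset.exists_min_image s (fun p => p.1) hsne
    obtain ⟨hp₁E, hp₁2⟩ := Finset.mem_filter.1 hp₁s
    have hp₁w : p₁ = (p₁.1, w) := Prod.ext rfl hp₁2
    have huw : p₁.1 < w := hp₁2 ▸ hinc p₁ hp₁E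
    obtain ⟨a, hau, hnr, hP1, hP2⟩ := ih p₁.1 huw
    refine ⟨a, by omega, hnr, ?_, ?_⟩
    · rintro p hp ⟨h1, h2, h3⟩
      rcases lt_trichotomy p.2 p₁.1 with hc | hc | hc
      · exact hP1 p hp ⟨h1, h2, hc.le⟩
      · exact hP1 p hp ⟨h1, h2, hc.le⟩
      · rcases eq_or_lt_of_le h3 with he | hl
        · -- p.2 = w, so p ∈ s, contradicting minimality of p₁.1
          have hps : p ∈ s := Finset.mem_filter.2 ⟨hp, he⟩
          have := hp₁min p hps
          omega
        · -- p₁.1 < p.2 < w : crossing between p and (p₁.1, w)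
          refine hnc ⟨p.1, p₁.1, p.2, w, by omega, hc, hl, ?_, hp₁w ▸ hp₁E⟩
          exact (show p = (p.1, p.2) from rfl) ▸ hp
    · rintro p hp ⟨h1, h2, h3⟩
      rcases lt_trichotomy p.1 p₁.1 with hc | hc | hc
      · exact hP2 p hp ⟨h1, hc.le, by omega⟩
      · exact hP2 p hp ⟨h1, hc.le, by omega⟩
      · rcases eq_or_lt_of_le h2 with he | hl
        · -- p.1 = w : alternating violation (p₁.1, w), (w, p.2)
          refine halt ⟨p₁.1, w, p.2, huw, he ▸ hinc p hp, hp₁w ▸ hp₁E, ?_⟩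
          exact (Prod.ext he rfl : p = (w, p.2)) ▸ hp
        · -- p₁.1 < p.1 < w < p.2 : crossing between (p₁.1, w) and p
          exact hnc ⟨p₁.1, p.1, w, p.2, hc, hl, h3, hp₁w ▸ hp₁E,
            (show p = (p.1, p.2) from rfl) ▸ hp⟩
  · push_neg at hw
    refine ⟨w, le_rfl, hw, ?_, ?_⟩
    · rintro p hp ⟨h1, h2, h3⟩; omega
    · rintro p hp ⟨h1, h2, h3⟩; omega

lemma adj_of_mem {E : Finset (ℕ × ℕ)} {p : ℕ × ℕ} (hp : p ∈ E) (hne : p.1 ≠ p.2) :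
    (graphOf E).Adj p.1 p.2 :=
  graphOf_adj.2 ⟨Or.inl (by exact hp), hne⟩

theorem extend_to_tree : ∀ (N n : ℕ) (E : Finset (ℕ × ℕ)),
    ((Finset.range n ×ˢ Finset.range n) \ E).card ≤ N →
    (∀ p ∈ E, p.1 < p.2 ∧ p.2 < n) → Noncrossing E → Alternating E →
    ∃ T, E ⊆ T ∧ (∀ p ∈ T, p.1 < p.2 ∧ p.2 < n) ∧ Noncrossing T ∧ Alternating T ∧
      ∀ v, v < n → (graphOf T).Reachable 0 v := by
  intro N
  induction N using Nat.strong_induction_on with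
  | _ N ih =>
  intro n E hmeas hbd hnc halt
  classical
  by_cases hreach : ∀ v, v < n → (graphOf E).Reachable 0 v
  · exact ⟨E, Finset.Subset.refl E, hbd, hnc, halt, hreach⟩
  · push_neg at hreach
    have hex : ∃ v, v < n ∧ ¬(graphOf E).Reachable 0 v := hreach
    set j := Nat.find hex with hjdef
    obtain ⟨hjn, hjR⟩ : j < n ∧ ¬(graphOf E).Reachable 0 j := Nat.find_spec hex
    have hjmin : ∀ v, v < j → v < n → (graphOf E).Reachable 0 v := by
      intro v hvj hvn
      by_contra hc
      exact Nat.find_min hex hvj ⟨hvn, hc⟩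
    have hj0 : j ≠ 0 := by
      intro h0; rw [h0] at hjR; exact hjR (SimpleGraph.Reachable.refl 0)
    have hj1 : 1 ≤ j := Nat.one_le_iff_ne_zero.2 hj0
    have hinc : ∀ p ∈ E, p.1 < p.2 := fun p hp => (hbd p hp).1
    obtain ⟨a, haw, hnr, hP1, hP2⟩ := desc hinc hnc halt (j - 1)
    have haj : a < j := by omega
    have haR : (graphOf E).Reachable 0 a := hjmin a haj (by omega)
    -- choose the other endpoint b
    have hbex : ∃ b, j ≤ b ∧ b < n ∧ ¬(graphOf E).Reachable 0 b ∧
        (∀ k, (b, k) ∉ E) ∧ (∀ y, (j, y) ∈ E → y ≤ b) ∧ (j < b → (j, b) ∈ E) := by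
      by_cases hjL : ∃ y, (j, y) ∈ E
      · set s := E.filter (fun p => p.1 = j) with hsdef
        have hsne : s.Nonempty := by
          obtain ⟨y, hy⟩ := hjL; exact ⟨(j, y), Finset.mem_filter.2 ⟨hy, rfl⟩⟩
        obtain ⟨p₂, hp₂s, hp₂max⟩ := Finset.exists_max_image s (fun p => p.2) hsne
        obtain ⟨hp₂E, hp₂1⟩ := Finset.mem_filter.1 hp₂s
        have hp₂j : p₂ = (j, p₂.2) := Prod.ext hp₂1 rfl
        have hjb : j < p₂.2 := hp₂1 ▸ hinc p₂ hp₂E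
        have hbR : ¬(graphOf E).Reachable 0 p₂.2 := by
          intro hR
          have hadj := adj_of_mem hp₂E (by omega : p₂.1 ≠ p₂.2)
          rw [hp₂1] at hadj
          exact hjR (hR.trans hadj.symm.reachable)
        refine ⟨p₂.2, hjb.le, (hbd p₂ hp₂E).2, hbR, ?_, ?_, fun _ => hp₂j ▸ hp₂E⟩
        · intro k hk
          exact halt ⟨j, p₂.2, k, hjb, hinc _ hk, hp₂j ▸ hp₂E, hk⟩
        · intro y hy
          exact hp₂max (j, y) (Finset.mem_filter.2 ⟨hy, rfl⟩)
      · push_neg at hjL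
        exact ⟨j, le_rfl, hjn, hjR, hjL, fun y hy => absurd hy (hjL y), fun h => absurd rfl h.ne⟩
    obtain ⟨b, hjb, hbn, hbR, hbL, hbmax, hbE⟩ := hbex
    have hab : a < b := by omega
    -- the two noncrossing claims for the new edge (a, b)
    have hC1 : ∀ p ∈ E, ¬(p.1 < a ∧ a < p.2 ∧ p.2 < b) := by
      rintro p hp ⟨h1, h2, h3⟩
      rcases lt_trichotomy p.2 j with hc | hc | hc
      · exact hP1 p hp ⟨h1, h2, by omega⟩
      · -- p.2 = j : j would be reachable
        have hpR : (graphOf E).Reachable 0 p.1 := hjmin p.1 (by omega) (by omega)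
        exact hjR (hc ▸ hpR.trans (adj_of_mem hp (hinc p hp).ne).reachable)
      · -- j < p.2 < b : crossing with (j, b)
        have hbj : j < b := by omega
        exact hnc ⟨p.1, j, p.2, b, by omega, hc, h3,
          (show p = (p.1, p.2) from rfl) ▸ hp, hbE hbj⟩
    have hC2 : ∀ p ∈ E, ¬(a < p.1 ∧ p.1 < b ∧ b < p.2) := by
      rintro p hp ⟨h1, h2, h3⟩
      rcases lt_trichotomy p.1 j with hc | hc | hc
      · exact hP2 p hp ⟨h1, by omega, by omega⟩
      · -- p.1 = j
        have : p = (j, p.2) := Prod.ext hc rfl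
        have := hbmax p.2 (this ▸ hp)
        omega
      · -- j < p.1 < b : crossing with (j, b)
        have hbj : j < b := by omega
        exact hnc ⟨j, p.1, b, p.2, hc, h2, h3, hbE hbj,
          (show p = (p.1, p.2) from rfl) ▸ hp⟩
    set E' := insert (a, b) E with hE'def
    have habE : (a, b) ∉ E := by
      intro hmem
      exact hbR (haR.trans (adj_of_mem hmem hab.ne).reachable)
    have hbd' : ∀ p ∈ E', p.1 < p.2 ∧ p.2 < n := by
      intro p hp
      rcases Finset.mem_insert.1 hp with he | hp'
      · rw [he]; exact ⟨hab, hbn⟩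
      · exact hbd p hp'
    have hnc' : Noncrossing E' := by
      rintro ⟨i', j', k', l', h1, h2, h3, hm1, hm2⟩
      rcases Finset.mem_insert.1 hm1 with he1 | hm1' <;>
        rcases Finset.mem_insert.1 hm2 with he2 | hm2'
      · have : i' = j' := by
          have e1 := congrArg Prod.fst he1; have e2 := congrArg Prod.fst he2
          simp at e1 e2; omega
        omega
      · have ha' : i' = a := by have := congrArg Prod.fst he1; simpa using this
        have hk' : k' = b := by have := congrArg Prod.snd he1; simpa using this
        exact hC2 (j', l') hm2' ⟨by omega, by omega, by omega⟩
      · have hb' : j' = a := by have := congrArg Prod.fst he2; simpa using this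
        have hl' : l' = b := by have := congrArg Prod.snd he2; simpa using this
        exact hC1 (i', k') hm1' ⟨by omega, by omega, by omega⟩
      · exact hnc ⟨i', j', k', l', h1, h2, h3, hm1', hm2'⟩
    have halt' : Alternating E' := by
      rintro ⟨i', j', k', h1, h2, hm1, hm2⟩
      rcases Finset.mem_insert.1 hm1 with he1 | hm1' <;>
        rcases Finset.mem_insert.1 hm2 with he2 | hm2'
      · have e1 := congrArg Prod.fst he1; have e2 := congrArg Prod.fst he2
        simp at e1 e2; omega
      · have hj' : j' = b := by have := congrArg Prod.snd he1; simpa using this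
        exact hbL k' (hj' ▸ hm2')
      · have hj' : j' = a := by have := congrArg Prod.fst he2; simpa using this
        exact hnr i' (hj' ▸ hm1')
      · exact halt ⟨i', j', k', h1, h2, hm1', hm2'⟩
    -- the measure decreases
    have habsq : (a, b) ∈ Finset.range n ×ˢ Finset.range n :=
      Finset.mem_product.2 ⟨Finset.mem_range.2 (by omega), Finset.mem_range.2 hbn⟩
    have hmeas' : ((Finset.range n ×ˢ Finset.range n) \ E').card < N := by
      have hsub : (Finset.range n ×ˢ Finset.range n) \ E'
          = ((Finset.range n ×ˢ Finset.range n) \ E).erase (a, b) := by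
        rw [hE'def, Finset.sdiff_insert]
      have hmem : (a, b) ∈ (Finset.range n ×ˢ Finset.range n) \ E :=
        Finset.mem_sdiff.2 ⟨habsq, habE⟩
      rw [hsub, Finset.card_erase_of_mem hmem]
      have := Finset.card_pos.2 ⟨(a, b), hmem⟩
      omega
    obtain ⟨T, hsub, hTbd, hTnc, hTalt, hTreach⟩ :=
      ih _ hmeas' n E' le_rfl hbd' hnc' halt'
    exact ⟨T, (Finset.subset_insert _ _).trans hsub, hTbd, hTnc, hTalt, hTreach⟩

/-! ### Convex hull helpers -/

lemma mem_treeSimplex {T F : Finset (ℕ × ℕ)} {c : ℕ × ℕ → ℝ} {x : ℕ → ℝ}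
    (hFT : F ⊆ T) (hFinc : ∀ p ∈ F, p.1 < p.2)
    (hc : ∀ p ∈ F, 0 ≤ c p) (htot : ∑ p ∈ F, c p ≤ 1)
    (hx : x = ∑ p ∈ F, c p • rvec p) : x ∈ treeSimplex T := by
  classical
  have h10 : ((1, 0) : ℕ × ℕ) ∉ F := fun h => by have := hFinc _ h; omega
  set w : ℕ × ℕ → ℝ := fun p => if p = (1, 0) then 1 - ∑ q ∈ F, c q else c p with hwdef
  set z : ℕ × ℕ → (ℕ → ℝ) := fun p => if p = (1, 0) then 0 else rvec p with hzdef
  have hw10 : w (1, 0) = 1 - ∑ q ∈ F, c q := by simp [hwdef]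
  have hz10 : z (1, 0) = 0 := by simp [hzdef]
  have hwF : ∀ p ∈ F, w p = c p := fun p hp => by
    have hne : p ≠ (1, 0) := fun he => h10 (by rw [← he]; exact hp)
    simp [hwdef, hne]
  have hzF : ∀ p ∈ F, z p = rvec p := fun p hp => by
    have hne : p ≠ (1, 0) := fun he => h10 (by rw [← he]; exact hp)
    simp [hzdef, hne]
  have hws : ∑ p ∈ insert (1, 0) F, w p = 1 := by
    rw [Finset.sum_insert h10, Finset.sum_congr rfl hwF, hw10]
    ring
  have hw0 : ∀ p ∈ insert (1, 0) F, 0 ≤ w p := by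
    intro p hp
    rcases Finset.mem_insert.1 hp with he | hp'
    · rw [he, hw10]; linarith
    · rw [hwF p hp']; exact hc p hp'
  have hz : ∀ p ∈ insert (1, 0) F, z p ∈ ({0} ∪ rvec '' ↑T : Set (ℕ → ℝ)) := by
    intro p hp
    rcases Finset.mem_insert.1 hp with he | hp'
    · rw [he, hz10]; exact Or.inl rfl
    · rw [hzF p hp']; exact Or.inr ⟨p, hFT hp', rfl⟩
  have hcm := Finset.centerMass_mem_convexHull (insert (1, 0) F) hw0
    (by rw [hws]; norm_num) hz
  rw [Finset.centerMass_eq_of_sum_1 _ _ hws] at hcm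
  convert hcm using 1
  · rfl
  rw [Finset.sum_insert h10, hx]
  have hz0 : w (1, 0) • z (1, 0) = 0 := by rw [hz10]; simp
  rw [hz0, zero_add]
  exact Finset.sum_congr rfl fun p hp => by rw [hwF p hp, hzF p hp]

lemma exists_rep_of_mem_treeSimplex {T : Finset (ℕ × ℕ)} {x : ℕ → ℝ}
    (hT : ∀ p ∈ T, p.1 < p.2) (hx : x ∈ treeSimplex T) :
    ∃ c : ℕ × ℕ → ℝ, (∀ p, 0 ≤ c p) ∧ ∑ p ∈ T, c p ≤ 1 ∧ x = ∑ p ∈ T, c p • rvec p := by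
  classical
  have h0T : (0 : ℕ → ℝ) ∉ T.image rvec := by
    intro h
    obtain ⟨p, hp, hpe⟩ := Finset.mem_image.1 h
    exact rvec_ne_zero (hT p hp) hpe
  have hset : ({0} ∪ rvec '' ↑T : Set (ℕ → ℝ)) = ↑(insert (0 : ℕ → ℝ) (T.image rvec)) := by
    rw [Finset.coe_insert, Finset.coe_image, Set.singleton_union]
  rw [treeSimplex, hset, Finset.convexHull_eq] at hx
  obtain ⟨w, hw0, hw1, hxc⟩ := hx
  rw [Finset.centerMass_eq_of_sum_1 _ _ hw1] at hxc
  have hinj : Set.InjOn rvec ↑T := fun p hp q hq he => rvec_inj (hT p hp) (hT q hq) he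
  set c : ℕ × ℕ → ℝ := fun p => if p ∈ T then w (rvec p) else 0 with hcdef
  have hcT : ∀ p ∈ T, c p = w (rvec p) := fun p hp => by simp [hcdef, hp]
  refine ⟨c, ?_, ?_, ?_⟩
  · intro p
    by_cases hp : p ∈ T
    · rw [hcT p hp]
      exact hw0 _ (Finset.mem_insert_of_mem (Finset.mem_image_of_mem rvec hp))
    · simp [hcdef, hp]
  · have himg : ∑ p ∈ T, c p = ∑ y ∈ T.image rvec, w y := by
      rw [Finset.sum_congr rfl hcT]
      exact (Finset.sum_image (fun p hp q hq => hinj hp hq)).symm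
    rw [himg]
    have hw00 : 0 ≤ w 0 := hw0 _ (Finset.mem_insert_self _ _)
    rw [Finset.sum_insert h0T] at hw1
    linarith
  · rw [← hxc, Finset.sum_insert h0T]
    simp only [id_eq, smul_zero, zero_add]
    rw [Finset.sum_congr rfl (fun p (hp : p ∈ T) => by rw [hcT p hp]),
      Finset.sum_image (f := fun y : ℕ → ℝ => w y • y) (g := rvec) (fun p hp q hq h => hinj hp hq h)]

lemma fullRootPolytope_props {n : ℕ} {x : ℕ → ℝ} (hx : x ∈ fullRootPolytope n) :
    (∀ v, n ≤ v → x v = 0) ∧ (∑ v ∈ Finset.range n, x v = 0) ∧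
    (∀ k, 0 ≤ ∑ v ∈ Finset.range k, x v) ∧ (∑ v ∈ Finset.range n, max (x v) 0 ≤ 1) := by
  set C : Set (ℕ → ℝ) := {y | (∀ v, n ≤ v → y v = 0) ∧ (∑ v ∈ Finset.range n, y v = 0) ∧
    (∀ k, 0 ≤ ∑ v ∈ Finset.range k, y v) ∧ (∑ v ∈ Finset.range n, max (y v) 0 ≤ 1)}
    with hCdef
  have hconv : Convex ℝ C := by
    rintro y ⟨hy1, hy2, hy3, hy4⟩ z ⟨hz1, hz2, hz3, hz4⟩ a b ha hb hab
    have havc : ∀ v, (a • y + b • z) v = a * y v + b * z v := fun v => rfl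
    refine ⟨?_, ?_, ?_, ?_⟩
    · intro v hv; rw [havc, hy1 v hv, hz1 v hv]; ring
    · rw [Finset.sum_congr rfl fun v _ => havc v, Finset.sum_add_distrib,
        ← Finset.mul_sum, ← Finset.mul_sum, hy2, hz2]; ring
    · intro k
      rw [Finset.sum_congr rfl fun v _ => havc v, Finset.sum_add_distrib,
        ← Finset.mul_sum, ← Finset.mul_sum]
      have := hy3 k; have := hz3 k
      positivity
    · calc ∑ v ∈ Finset.range n, max ((a • y + b • z) v) 0
          ≤ ∑ v ∈ Finset.range n, (a * max (y v) 0 + b * max (z v) 0) := by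
            refine Finset.sum_le_sum fun v _ => ?_
            rw [havc]
            refine max_le ?_ ?_
            · have h1 : y v ≤ max (y v) 0 := le_max_left _ _
              have h2 : z v ≤ max (z v) 0 := le_max_left _ _
              nlinarith
            · have h1 : (0:ℝ) ≤ max (y v) 0 := le_max_right _ _
              have h2 : (0:ℝ) ≤ max (z v) 0 := le_max_right _ _
              positivity
        _ = a * (∑ v ∈ Finset.range n, max (y v) 0) + b * ∑ v ∈ Finset.range n, max (z v) 0 := by
            rw [Finset.sum_add_distrib, ← Finset.mul_sum, ← Finset.mul_sum]
        _ ≤ a * 1 + b * 1 := by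
            have h1 : (0:ℝ) ≤ ∑ v ∈ Finset.range n, max (y v) 0 :=
              Finset.sum_nonneg fun v _ => le_max_right _ _
            have h2 : (0:ℝ) ≤ ∑ v ∈ Finset.range n, max (z v) 0 :=
              Finset.sum_nonneg fun v _ => le_max_right _ _
            have := mul_le_mul_of_nonneg_left hy4 ha
            have := mul_le_mul_of_nonneg_left hz4 hb
            linarith
        _ = 1 := by linarith
  have hgen : ({0} ∪ {v | ∃ i j, i < j ∧ j < n ∧ v = rvec (i, j)} : Set (ℕ → ℝ)) ⊆ C := by
    rintro y (hy | ⟨i, j, hij, hjn, rfl⟩)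
    · rw [Set.mem_singleton_iff.1 hy]
      refine ⟨fun v _ => rfl, by simp, fun k => by simp, by simp⟩
    · refine ⟨?_, ?_, ?_, ?_⟩
      · intro v hv
        exact rvec_other (show (i, j).1 ≠ v by simp; omega) (show (i, j).2 ≠ v by simp; omega)
      · rw [sum_rvec_range, if_pos (by omega : (i,j).1 < n), if_pos (by omega : (i,j).2 < n)]
        ring
      · intro k
        rw [sum_rvec_range]
        show (0:ℝ) ≤ (if i < k then (1:ℝ) else 0) - (if j < k then (1:ℝ) else 0)
        by_cases h1 : i < k
        · by_cases h2 : j < k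
          · rw [if_pos h1, if_pos h2]; norm_num
          · rw [if_pos h1, if_neg h2]; norm_num
        · rw [if_neg h1, if_neg (by omega : ¬ j < k)]; norm_num
      · have : ∀ v, max (rvec (i, j) v) 0 = if i = v then (1:ℝ) else 0 := by
          intro v
          rw [rvec_pair]
          rcases eq_or_ne i v with he | hne
          · rw [if_pos he, if_neg (by omega : ¬ j = v)]
            norm_num
          · rw [if_neg hne]
            by_cases h2 : j = v
            · rw [if_pos h2]; norm_num
            · rw [if_neg h2]; norm_num
        rw [Finset.sum_congr rfl fun v _ => this v,
          Finset.sum_ite_eq (Finset.range n) i fun _ => (1:ℝ), if_pos (Finset.mem_range.2 (by omega))]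
  exact convexHull_min hgen hconv hx

lemma treeSimplex_subset_full {n : ℕ} {T : Finset (ℕ × ℕ)}
    (hbd : ∀ p ∈ T, p.1 < p.2 ∧ p.2 < n) : treeSimplex T ⊆ fullRootPolytope n := by
  apply convexHull_mono
  apply Set.union_subset_union_right
  rintro v ⟨p, hp, rfl⟩
  exact ⟨p.1, p.2, (hbd p hp).1, (hbd p hp).2, rfl⟩

lemma exists_tree_mem {n : ℕ} {x : ℕ → ℝ} (hx : x ∈ fullRootPolytope n) :
    ∃ T, IsSpanningTree n T ∧ Noncrossing T ∧ Alternating T ∧ x ∈ treeSimplex T := by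
  obtain ⟨h1, h2, h3, h4⟩ := fullRootPolytope_props hx
  obtain ⟨F, c, hrep, hbd, htot⟩ := rep_exists _ n x le_rfl h1 h2 h3
  obtain ⟨T, hFT, hTbd, hTnc, hTalt, hTreach⟩ := extend_to_tree _ n F le_rfl
    (fun p hp => ⟨hrep.inc p hp, hbd p hp⟩) hrep.nc hrep.alt
  refine ⟨T, ⟨hTbd, acyclic_of_nc_alt (fun p hp => (hTbd p hp).1) hTnc hTalt,
    fun a b ha hb => ((hTreach a ha).symm.trans (hTreach b hb))⟩, hTnc, hTalt, ?_⟩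
  exact mem_treeSimplex hFT hrep.inc (fun p hp => (hrep.pos p hp).le)
    (le_trans htot h4) hrep.sum.symm

/-! ### Linear algebra -/

open Submodule in
lemma mem_span_of_reachable {E : Finset (ℕ × ℕ)} {a b : ℕ}
    (h : (graphOf E).Reachable a b) :
    (Pi.single a 1 - Pi.single b 1 : ℕ → ℝ) ∈ Submodule.span ℝ (rvec '' ↑E) := by
  obtain ⟨w⟩ := h
  induction w with
  | nil => simp
  | @cons a c b hadj p ih =>
    have h1 : (Pi.single a 1 - Pi.single c 1 : ℕ → ℝ) ∈ Submodule.span ℝ (rvec '' ↑E) := by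
      rcases (graphOf_adj.1 hadj).1 with hm | hm
      · exact subset_span ⟨(a, c), hm, rfl⟩
      · have hmem : rvec (c, a) ∈ Submodule.span ℝ (rvec '' ↑E) := subset_span ⟨(c, a), hm, rfl⟩
        have := neg_mem hmem
        convert this using 1
        rw [rvec]
        abel
    have := add_mem h1 ih
    convert this using 1
    abel

noncomputable def psumMap (n : ℕ) : (ℕ → ℝ) →ₗ[ℝ] (Fin n → ℝ) where
  toFun x := fun k => ∑ v ∈ Finset.range (k + 1), x v
  map_add' x y := by
    funext k
    exact Finset.sum_add_distrib
  map_smul' r x := by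
    funext k
    simp [Finset.mul_sum]

lemma finrank_span_tree {n : ℕ} (hn : 2 ≤ n) {T : Finset (ℕ × ℕ)}
    (hbd : ∀ p ∈ T, p.1 < p.2 ∧ p.2 < n)
    (hreach : ∀ a b, a < n → b < n → (graphOf T).Reachable a b) :
    Module.finrank ℝ (Submodule.span ℝ (rvec '' ↑T)) = n - 1 := by
  classical
  set W := Submodule.span ℝ (rvec '' ↑T) with hWdef
  haveI : FiniteDimensional ℝ W :=
    FiniteDimensional.span_of_finite ℝ (T.finite_toSet.image rvec)
  set Φ := psumMap (n - 1) with hΦdef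
  -- membership facts for W
  have hWcoord : ∀ x : ℕ → ℝ, x ∈ W → ∀ v, n ≤ v → x v = 0 := by
    intro x hx v hv
    have hle : W ≤ LinearMap.ker (LinearMap.proj (R := ℝ) (φ := fun _ : ℕ => ℝ) v) := by
      rw [hWdef, Submodule.span_le]
      rintro y ⟨p, hp, rfl⟩
      have h1 := (hbd p hp).1
      have h2 := (hbd p hp).2
      exact LinearMap.mem_ker.2 (rvec_other (by omega) (by omega))
    exact LinearMap.mem_ker.1 (hle hx)
  have hWsum : ∀ x : ℕ → ℝ, x ∈ W → ∑ v ∈ Finset.range n, x v = 0 := by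
    intro x hx
    have hle : W ≤ LinearMap.ker (∑ v ∈ Finset.range n, LinearMap.proj (R := ℝ)
        (φ := fun _ : ℕ => ℝ) v) := by
      rw [hWdef, Submodule.span_le]
      rintro y ⟨p, hp, rfl⟩
      rw [SetLike.mem_coe, LinearMap.mem_ker, LinearMap.sum_apply]
      have h1 := (hbd p hp).1
      have h2 := (hbd p hp).2
      have : ∑ v ∈ Finset.range n, (LinearMap.proj (R := ℝ) (φ := fun _ : ℕ => ℝ) v) (rvec p)
          = ∑ v ∈ Finset.range n, rvec p v := rfl
      rw [this, sum_rvec_range, if_pos (by omega), if_pos (by omega)]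
      ring
    have := LinearMap.mem_ker.1 (hle hx)
    rw [LinearMap.sum_apply] at this
    exact this
  -- injectivity of Φ on W
  have hinj : Function.Injective (Φ.domRestrict W) := by
    rw [injective_iff_map_eq_zero]
    rintro ⟨x, hxW⟩ hx0
    simp only [LinearMap.domRestrict_apply] at hx0
    have hxk : ∀ k : Fin (n - 1), ∑ v ∈ Finset.range ((k : ℕ) + 1), x v = 0 := by
      intro k
      exact congrFun hx0 k
    have hSk : ∀ k, k ≤ n → ∑ v ∈ Finset.range k, x v = 0 := by
      intro k hk
      rcases Nat.eq_zero_or_pos k with h0 | hpos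
      · simp [h0]
      · rcases eq_or_lt_of_le hk with he | hlt
        · rw [he]; exact hWsum x hxW
        · have hk1 : k - 1 < n - 1 := by omega
          have := hxk ⟨k - 1, hk1⟩
          simpa [Nat.sub_add_cancel hpos] using this
    have hx0' : x = 0 := by
      funext v
      rcases lt_or_ge v n with hv | hv
      · have h1 := hSk (v + 1) (by omega)
        have h2 := hSk v (by omega)
        rw [Finset.sum_range_succ] at h1
        show x v = 0
        linarith
      · exact hWcoord x hxW v hv
    exact Subtype.ext hx0'
  have hup : Module.finrank ℝ W ≤ n - 1 := by
    have := LinearMap.finrank_le_finrank_of_injective hinj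
    simpa [Module.finrank_fintype_fun_eq_card] using this
  -- surjectivity of Φ restricted to W
  have hsingle : ∀ k : Fin (n - 1), ∃ y : W,
      (Φ.domRestrict W) y = (Pi.single k 1 : Fin (n - 1) → ℝ) := by
    intro k
    have hr := hreach (k : ℕ) ((k : ℕ) + 1) (by omega) (by omega)
    have hmem : rvec ((k : ℕ), (k : ℕ) + 1) ∈ W := mem_span_of_reachable hr
    refine ⟨⟨rvec ((k : ℕ), (k : ℕ) + 1), hmem⟩, ?_⟩
    simp only [LinearMap.domRestrict_apply]
    funext m
    show ∑ v ∈ Finset.range ((m : ℕ) + 1), rvec ((k : ℕ), (k : ℕ) + 1) v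
      = (Pi.single k 1 : Fin (n - 1) → ℝ) m
    rw [sum_rvec_range, Pi.single_apply]
    by_cases h1 : ((k : ℕ), (k : ℕ) + 1).1 < (m : ℕ) + 1
    · by_cases h2 : ((k : ℕ), (k : ℕ) + 1).2 < (m : ℕ) + 1
      · rw [if_pos h1, if_pos h2, if_neg (show ¬ m = k from fun he => by
          have : (m : ℕ) = (k : ℕ) := congrArg Fin.val he
          simp only at h1 h2
          omega)]
        ring
      · rw [if_pos h1, if_neg h2, if_pos (show m = k from Fin.ext (by
          simp only at h1 h2
          omega))]
        ring
    · rw [if_neg h1, if_neg (show ¬ ((k : ℕ), (k : ℕ) + 1).2 < (m : ℕ) + 1 from by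
        simp only at h1 ⊢
        omega), if_neg (show ¬ m = k from fun he => by
          have : (m : ℕ) = (k : ℕ) := congrArg Fin.val he
          simp only at h1
          omega)]
      ring
  have hrange : LinearMap.range (Φ.domRestrict W) = ⊤ := by
    rw [Submodule.eq_top_iff']
    intro y
    have hy : y = ∑ k : Fin (n - 1), Pi.single k (y k) := (Finset.univ_sum_single y).symm
    rw [hy]
    refine Submodule.sum_mem _ fun k _ => ?_
    have hsm : (Pi.single k (y k) : Fin (n - 1) → ℝ)
        = y k • (Pi.single k 1 : Fin (n - 1) → ℝ) := by
      funext m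
      rw [Pi.smul_apply, Pi.single_apply, Pi.single_apply, smul_eq_mul]
      split_ifs <;> ring
    rw [hsm]
    obtain ⟨z, hz⟩ := hsingle k
    exact Submodule.smul_mem _ _ ⟨z, hz⟩
  have hdown : n - 1 ≤ Module.finrank ℝ W := by
    have h1 : Module.finrank ℝ (LinearMap.range (Φ.domRestrict W)) ≤ Module.finrank ℝ W :=
      LinearMap.finrank_range_le _
    rw [hrange, finrank_top, Module.finrank_fintype_fun_eq_card] at h1
    simpa using h1
  omega

lemma linIndep_tree {T : Finset (ℕ × ℕ)} (hinc : ∀ p ∈ T, p.1 < p.2)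
    (hnc : Noncrossing T) (halt : Alternating T) :
    LinearIndependent ℝ (fun p : {p // p ∈ T} => rvec (p : ℕ × ℕ)) := by
  classical
  rw [Fintype.linearIndependent_iff]
  intro g hg p
  set c : ℕ × ℕ → ℝ := fun q => if h : q ∈ T then g ⟨q, h⟩ else 0 with hcdef
  have hcT : ∀ (q : ℕ × ℕ) (hq : q ∈ T), c q = g ⟨q, hq⟩ := fun q hq => by simp [hcdef, hq]
  have hsum : ∑ q ∈ T, c q • rvec q = 0 := by
    rw [← hg, ← Finset.sum_attach T (fun q => c q • rvec q), Finset.univ_eq_attach]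
    exact Finset.sum_congr rfl fun q _ => by rw [hcT q q.2]
  set A : Finset (ℕ × ℕ) := T.filter (fun q => 0 < c q) with hAdef
  set B : Finset (ℕ × ℕ) := T.filter (fun q => c q < 0) with hBdef
  have hdisj : Disjoint A B := Finset.disjoint_left.2 fun q hqA hqB => by
    have h1 := (Finset.mem_filter.1 hqA).2
    have h2 := (Finset.mem_filter.1 hqB).2
    linarith
  have hAB : A ∪ B = T.filter (fun q => c q ≠ 0) := by
    ext q
    simp only [Finset.mem_union, Finset.mem_filter, hAdef, hBdef]
    constructor
    · rintro (⟨hq, h⟩ | ⟨hq, h⟩) <;> exact ⟨hq, by intro h0; rw [h0] at h; simp at h⟩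
    · rintro ⟨hq, h⟩
      rcases lt_or_gt_of_ne h with h' | h'
      · exact Or.inr ⟨hq, h'⟩
      · exact Or.inl ⟨hq, h'⟩
  have hsplit : (∑ q ∈ A, c q • rvec q) + ∑ q ∈ B, c q • rvec q = 0 := by
    rw [← Finset.sum_union hdisj, hAB]
    rw [Finset.sum_filter_of_ne (fun q hq hne => by
      intro h0
      rw [h0] at hne
      simp at hne)]
    exact hsum
  have hx2 : ∑ q ∈ B, (fun q => -c q) q • rvec q = ∑ q ∈ A, c q • rvec q := by
    have h1 : ∑ q ∈ B, (fun q => -c q) q • rvec q = - ∑ q ∈ B, c q • rvec q := by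
      rw [← Finset.sum_neg_distrib]
      exact Finset.sum_congr rfl fun q _ => by rw [neg_smul]
    rw [h1, neg_eq_iff_add_eq_zero, add_comm]
    exact hsplit
  have hrepA : IsRep A c (∑ q ∈ A, c q • rvec q) :=
    ⟨fun q hq => (Finset.mem_filter.1 hq).2, fun q hq => hinc q (Finset.mem_filter.1 hq).1,
     noncrossing_mono (Finset.filter_subset _ _) hnc,
     alternating_mono (Finset.filter_subset _ _) halt, rfl⟩
  have hrepB : IsRep B (fun q => -c q) (∑ q ∈ A, c q • rvec q) :=
    ⟨fun q hq => neg_pos.2 (Finset.mem_filter.1 hq).2,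
     fun q hq => hinc q (Finset.mem_filter.1 hq).1,
     noncrossing_mono (Finset.filter_subset _ _) hnc,
     alternating_mono (Finset.filter_subset _ _) halt, hx2⟩
  obtain ⟨hABeq, -⟩ := rep_unique hrepA hrepB
  have hAemp : A = ∅ := by
    rw [Finset.eq_empty_iff_forall_notMem]
    intro q hq
    have hqB : q ∈ B := hABeq ▸ hq
    have h1 := (Finset.mem_filter.1 hq).2
    have h2 := (Finset.mem_filter.1 hqB).2
    linarith
  have hc0 : c ↑p = 0 := by
    by_contra hne
    rcases lt_or_gt_of_ne hne with hlt | hgt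
    · have hmem : ↑p ∈ B := Finset.mem_filter.2 ⟨p.2, hlt⟩
      rw [← hABeq, hAemp] at hmem
      simp at hmem
    · have hmem : ↑p ∈ A := Finset.mem_filter.2 ⟨p.2, hgt⟩
      rw [hAemp] at hmem
      simp at hmem
  rw [← hcT ↑p p.2]
  exact hc0

lemma zero_notmem_rvec_image {T : Finset (ℕ × ℕ)} (hinc : ∀ p ∈ T, p.1 < p.2) :
    (0 : ℕ → ℝ) ∉ rvec '' (↑T : Set (ℕ × ℕ)) := by
  rintro ⟨q, hq, hqe⟩
  exact rvec_ne_zero (hinc q hq) hqe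

lemma affIndep_tree {T : Finset (ℕ × ℕ)} (hinc : ∀ p ∈ T, p.1 < p.2)
    (hnc : Noncrossing T) (halt : Alternating T) :
    AffineIndependent ℝ ((↑) : ({0} ∪ rvec '' ↑T : Set (ℕ → ℝ)) → (ℕ → ℝ)) := by
  have h0 : (0 : ℕ → ℝ) ∈ ({0} ∪ rvec '' ↑T : Set (ℕ → ℝ)) := Or.inl rfl
  have hli := (linIndep_tree hinc hnc halt).linearIndepOn_id
  have hrange : Set.range (fun p : {p // p ∈ T} => rvec (p : ℕ × ℕ)) = rvec '' ↑T := by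
    ext y
    constructor
    · rintro ⟨q, rfl⟩; exact ⟨↑q, q.2, rfl⟩
    · rintro ⟨q, hq, rfl⟩; exact ⟨⟨q, hq⟩, rfl⟩
  rw [hrange] at hli
  have hset : ((fun p => (p -ᵥ (0 : ℕ → ℝ) : ℕ → ℝ)) ''
      ((({0} ∪ rvec '' ↑T) : Set (ℕ → ℝ)) \ {0})) = rvec '' ↑T := by
    have h1 : ((({0} ∪ rvec '' ↑T) : Set (ℕ → ℝ)) \ {0}) = rvec '' ↑T := by
      ext y
      constructor
      · rintro ⟨hy1 | hy1, hy2⟩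
        · exact absurd hy1 hy2
        · exact hy1
      · intro hy
        exact ⟨Or.inr hy, fun h0' => zero_notmem_rvec_image hinc
          (by rw [← Set.mem_singleton_iff.1 h0']; exact hy)⟩
    rw [h1]
    have : ∀ y : ℕ → ℝ, y -ᵥ (0 : ℕ → ℝ) = y := fun y => by
      rw [vsub_eq_sub, sub_zero]
    calc (fun p => (p -ᵥ (0 : ℕ → ℝ) : ℕ → ℝ)) '' (rvec '' ↑T)
        = id '' (rvec '' ↑T) := Set.image_congr fun y _ => this y
      _ = rvec '' ↑T := Set.image_id _
  rw [affineIndependent_set_iff_linearIndependent_vsub ℝ h0]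
  rw [hset]
  exact hli

lemma vectorSpan_treeSimplex (T : Finset (ℕ × ℕ)) :
    vectorSpan ℝ (treeSimplex T) = Submodule.span ℝ (rvec '' ↑T) := by
  have h1 : vectorSpan ℝ (treeSimplex T) = vectorSpan ℝ ({0} ∪ rvec '' ↑T) := by
    rw [treeSimplex, ← direction_affineSpan, affineSpan_convexHull, direction_affineSpan]
  rw [h1]
  apply le_antisymm
  · rw [vectorSpan_def, Submodule.span_le]
    rintro y ⟨u, hu, v, hv, rfl⟩
    have hmem : ∀ w : ℕ → ℝ, w ∈ ({0} ∪ rvec '' ↑T : Set (ℕ → ℝ)) →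
        w ∈ Submodule.span ℝ (rvec '' ↑T) := by
      rintro w (hw | hw)
      · rw [Set.mem_singleton_iff.1 hw]; exact Submodule.zero_mem _
      · exact Submodule.subset_span hw
    simpa [vsub_eq_sub] using sub_mem (hmem u hu) (hmem v hv)
  · rw [Submodule.span_le]
    intro y hy
    have hmy : y ∈ ({0} ∪ rvec '' ↑T : Set (ℕ → ℝ)) := Or.inr hy
    have hm0 : (0 : ℕ → ℝ) ∈ ({0} ∪ rvec '' ↑T : Set (ℕ → ℝ)) := Or.inl rfl
    have hvs := vsub_mem_vectorSpan (k := ℝ) hmy hm0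
    simpa [vsub_eq_sub] using hvs


/-- The simplices `P(T)`, for `T` ranging over the noncrossing alternating
spanning trees of `K_n`, are the top-dimensional simplices of a triangulation of
`P(P_n) = P(A_{n-1}^+)`: each `P(T)` is an `(n-1)`-dimensional simplex contained in `P(P_n)`,
their union is `P(P_n)`, and the intersection of any nonempty collection of them is the
simplex of the graph whose edge set is the intersection of the edge sets. -/
theorem canonical_triangulation_rootPolytope (n : ℕ) (hn : 2 ≤ n) :
    (∀ T : Finset (ℕ × ℕ), IsSpanningTree n T → Noncrossing T → Alternating T →
      (AffineIndependent ℝ ((↑) : ({0} ∪ rvec '' ↑T : Set (ℕ → ℝ)) → (ℕ → ℝ)) ∧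
        Module.finrank ℝ (vectorSpan ℝ (treeSimplex T)) = n - 1 ∧
        treeSimplex T ⊆ fullRootPolytope n)) ∧
    (⋃ T ∈ {T : Finset (ℕ × ℕ) | IsSpanningTree n T ∧ Noncrossing T ∧ Alternating T},
        treeSimplex T) = fullRootPolytope n ∧
    (∀ (S : Finset (Finset (ℕ × ℕ))) (hS : S.Nonempty),
      (∀ T ∈ S, IsSpanningTree n T ∧ Noncrossing T ∧ Alternating T) →
      (⋂ T ∈ S, treeSimplex T) = treeSimplex (S.inf' hS id)) := by
  classical
  refine ⟨?_, ?_, ?_⟩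
  · -- Part 1
    intro T hst hnc halt
    obtain ⟨hbd, hacyc, hreach⟩ := hst
    have hinc : ∀ p ∈ T, p.1 < p.2 := fun p hp => (hbd p hp).1
    refine ⟨affIndep_tree hinc hnc halt, ?_, treeSimplex_subset_full hbd⟩
    rw [vectorSpan_treeSimplex]
    exact finrank_span_tree hn hbd hreach
  · -- Part 2
    apply Set.Subset.antisymm
    · intro x hx
      obtain ⟨T, hT, hxT⟩ := Set.mem_iUnion₂.1 hx
      exact treeSimplex_subset_full hT.1.1 hxT
    · intro x hx
      obtain ⟨T, hst, hnc, halt, hmem⟩ := exists_tree_mem hx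
      exact Set.mem_iUnion₂.2 ⟨T, ⟨hst, hnc, halt⟩, hmem⟩
  · -- Part 3
    intro S hS hall
    obtain ⟨T₀, hT₀⟩ := id hS
    -- canonical representation on each tree
    have hrep : ∀ T ∈ S, ∀ x ∈ treeSimplex T, ∃ c : ℕ × ℕ → ℝ,
        (∀ p, 0 ≤ c p) ∧ (∑ p ∈ T, c p ≤ 1) ∧
        IsRep (T.filter (fun p => c p ≠ 0)) c x := by
      intro T hT x hx
      have hinc : ∀ p ∈ T, p.1 < p.2 := fun p hp => ((hall T hT).1.1 p hp).1
      obtain ⟨c, hc0, hctot, hcx⟩ := exists_rep_of_mem_treeSimplex hinc hx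
      refine ⟨c, hc0, hctot, ?_, ?_, ?_, ?_, ?_⟩
      · intro p hp
        obtain ⟨hpT, hpne⟩ := Finset.mem_filter.1 hp
        exact lt_of_le_of_ne (hc0 p) (Ne.symm hpne)
      · exact fun p hp => hinc p (Finset.mem_filter.1 hp).1
      · exact noncrossing_mono (Finset.filter_subset _ _) (hall T hT).2.1
      · exact alternating_mono (Finset.filter_subset _ _) (hall T hT).2.2
      · rw [Finset.sum_filter_of_ne (fun p hp hne => by
          intro h0
          rw [h0] at hne
          simp at hne)]
        exact hcx.symm
    apply Set.Subset.antisymm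
    · intro x hx
      have hxT : ∀ T ∈ S, x ∈ treeSimplex T := by
        intro T hT
        exact Set.mem_iInter₂.1 hx T hT
      obtain ⟨c₀, hc₀0, hc₀tot, hrep₀⟩ := hrep T₀ hT₀ x (hxT T₀ hT₀)
      set F₀ := T₀.filter (fun p => c₀ p ≠ 0) with hF₀def
      have hsubinf : F₀ ⊆ S.inf' hS id := by
        apply Finset.le_inf' hS id
        intro T hT
        obtain ⟨c, hc0, hctot, hrepT⟩ := hrep T hT x (hxT T hT)
        obtain ⟨heq, -⟩ := rep_unique hrep₀ hrepT
        rw [heq]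
        exact Finset.filter_subset _ _
      refine mem_treeSimplex hsubinf (fun p hp => hrep₀.inc p hp)
        (fun p hp => (hrep₀.pos p hp).le) ?_ hrep₀.sum.symm
      calc ∑ p ∈ F₀, c₀ p ≤ ∑ p ∈ T₀, c₀ p :=
            Finset.sum_le_sum_of_subset_of_nonneg (Finset.filter_subset _ _)
              (fun p _ _ => hc₀0 p)
        _ ≤ 1 := hc₀tot
    · apply Set.subset_iInter₂
      intro T hT
      apply convexHull_mono
      apply Set.union_subset_union_right
      apply Set.image_mono
      have hle : S.inf' hS id ≤ id T := Finset.inf'_le id hT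
      exact fun p hp => hle hp
end
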